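/- arXiv:2502.21192 — 6 statements merged into one kernel-verified Lean document; each statement's English description precedes it below -/
import Mathlib

section
/- Let (B, ‖·‖) be a Banach space, let f : [0,1] → B be continuous, let Ψ : [0,∞) → [0,∞) be continuous, strictly increasing with Ψ(0) = 0 and Ψ(u) → ∞ as u → ∞, and let p : [0,1] → [0,1] be continuous, strictly increasing with p(0) = 0. If B₀ := ∫₀¹∫₀¹ Ψ(‖f(x) − f(y)‖ / p(|x − y|)) dx dy < ∞, then for all s, t ∈ [0,1] one has ‖f(t) − f(s)‖ ≤ 8 ∫₀^{|t−s|} Ψ⁻¹(4B₀/u²) dp(u), where the last integral is the Lebesgue–Stieltjes integral with respect to the monotone function p. -/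
open MeasureTheory Set

open ENNReal Filter

/-- Selection lemma: a point where two Chebyshev-type bounds hold simultaneously. -/
lemma grr_cheb {α : Type*} [MeasurableSpace α] (μ : Measure α)
    {g h : α → ℝ≥0∞} (hg : Measurable g) (hh : Measurable h)
    {S : Set α} (hS : MeasurableSet S) (hS0 : μ S ≠ 0) (hSfin : μ S ≠ ∞)
    {Mg Mh : ℝ≥0∞} (hMg : Mg ≠ ∞) (hMh : Mh ≠ ∞)
    (hgle : ∫⁻ x in S, g x ∂μ ≤ Mg) (hhle : ∫⁻ x in S, h x ∂μ ≤ Mh) :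
    ∃ x ∈ S, g x * μ S ≤ 2 * Mg ∧ h x * μ S ≤ 2 * Mh := by
  have key : ∀ (g : α → ℝ≥0∞), Measurable g → ∀ (M : ℝ≥0∞), M ≠ ∞ →
      (∫⁻ x in S, g x ∂μ ≤ M) →
      μ (S ∩ {x | 2 * M / μ S < g x}) ≤ μ S / 2 ∧
      ¬ (μ (S ∩ {x | 2 * M / μ S < g x}) = μ S / 2) := by
    intro g hg M hM hle
    set lam := 2 * M / μ S with hlam
    set A := S ∩ {x | lam < g x} with hA
    have hAmeas : MeasurableSet A := hS.inter (measurableSet_lt measurable_const hg)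
    have hAsub : A ⊆ S := inter_subset_left
    by_cases hM0 : M = 0
    · have hg0 : ∫⁻ x in S, g x ∂μ = 0 := le_antisymm (hM0 ▸ hle) zero_le
      have hgz : ∀ᵐ x ∂(μ.restrict S), g x = 0 := (lintegral_eq_zero_iff hg).1 hg0
      have hA0 : μ A = 0 := by
        have h1 : μ.restrict S {x | lam < g x} = 0 := by
          refine measure_mono_null ?_ hgz
          intro x hx
          simp only [mem_setOf_eq] at hx ⊢
          intro hgx
          rw [hgx] at hx
          exact (not_lt_of_ge zero_le) hx
        rw [Measure.restrict_apply (measurableSet_lt measurable_const hg)] at h1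
        rwa [hA, inter_comm]
      constructor
      · exact hA0 ▸ zero_le
      · intro heq
        rw [hA0] at heq
        refine hS0 ?_
        have := ENNReal.div_eq_zero_iff.1 heq.symm
        simpa using this
    · have hlam0 : lam ≠ 0 := by
        simp only [hlam, ne_eq, ENNReal.div_eq_zero_iff, mul_eq_zero]
        push_neg
        exact ⟨⟨two_ne_zero, hM0⟩, hSfin⟩
      have hlamtop : lam ≠ ∞ := by
        simp only [hlam]
        intro hcon
        rw [ENNReal.div_eq_top] at hcon
        rcases hcon with ⟨_, h2⟩ | ⟨h2, _⟩
        · exact hS0 h2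
        · rw [ENNReal.mul_eq_top] at h2
          rcases h2 with ⟨_, h3⟩ | ⟨h3, _⟩
          · exact hM h3
          · exact (by norm_num : (2:ℝ≥0∞) ≠ ∞) h3
      have hmarkov : lam * μ A ≤ M := by
        calc lam * μ A = ∫⁻ _ in A, lam ∂μ := by rw [setLIntegral_const, mul_comm]
        _ ≤ ∫⁻ x in A, g x ∂μ := by
            refine lintegral_mono_ae ?_
            filter_upwards [ae_restrict_mem hAmeas] with x hx
            exact (hx.2).le
        _ ≤ ∫⁻ x in S, g x ∂μ := lintegral_mono_set hAsub
        _ ≤ M := hle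
      have hcancel : lam * μ S = 2 * M := by
        rw [hlam]; exact ENNReal.div_mul_cancel hS0 hSfin
      have h2 : M * (2 * μ A) ≤ M * μ S := by
        have hh2 := mul_le_mul_left hmarkov (μ S)
        calc M * (2 * μ A) = 2 * M * μ A := by ring
        _ = lam * μ S * μ A := by rw [hcancel]
        _ = lam * μ A * μ S := by ring
        _ ≤ M * μ S := hh2
      have h3 : 2 * μ A ≤ μ S := (ENNReal.mul_le_mul_iff_right hM0 hM).1 h2
      have hhalf : μ A ≤ μ S / 2 :=
        (ENNReal.le_div_iff_mul_le (Or.inl two_ne_zero) (Or.inl (by norm_num))).2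
          (by rw [mul_comm]; exact h3)
      refine ⟨hhalf, fun heq => ?_⟩
      have hμA0 : μ A ≠ 0 := by
        rw [heq]
        simp only [ne_eq, ENNReal.div_eq_zero_iff, not_or]
        exact ⟨hS0, by norm_num⟩
      have hconst : ∫⁻ _ in A, lam ∂μ = M := by
        rw [setLIntegral_const, heq, ← mul_div_assoc, hcancel, mul_comm,
          mul_div_assoc]
        rw [ENNReal.div_self two_ne_zero (by norm_num), mul_one]
      have hstrict : (∫⁻ _ in A, lam ∂μ) < ∫⁻ x in A, g x ∂μ :=
        setLIntegral_strict_mono hAmeas hμA0 hg (by rw [hconst]; exact hM)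
          (Filter.Eventually.of_forall fun x hx => hx.2)
      rw [hconst] at hstrict
      exact absurd (le_trans (lintegral_mono_set hAsub) hle) (not_le.2 hstrict)
  obtain ⟨hgA, hgA'⟩ := key g hg Mg hMg hgle
  obtain ⟨hhC, hhC'⟩ := key h hh Mh hMh hhle
  by_contra hcon
  push_neg at hcon
  set A := S ∩ {x | 2 * Mg / μ S < g x} with hAdef
  set C := S ∩ {x | 2 * Mh / μ S < h x} with hCdef
  have hsub : S ⊆ A ∪ C := by
    intro x hx
    by_cases hgx : g x * μ S ≤ 2 * Mg
    · right
      refine ⟨hx, ?_⟩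
      have hhx := hcon x hx hgx
      rw [mem_setOf_eq, ENNReal.div_lt_iff (Or.inl hS0) (Or.inl hSfin)]
      exact hhx
    · left
      refine ⟨hx, ?_⟩
      rw [mem_setOf_eq, ENNReal.div_lt_iff (Or.inl hS0) (Or.inl hSfin)]
      exact lt_of_not_ge hgx
  have hle1 : μ S ≤ μ A + μ C := le_trans (measure_mono hsub) (measure_union_le _ _)
  have hge : μ S / 2 ≤ μ A := by
    rw [← ENNReal.sub_half hSfin]
    rw [tsub_le_iff_right]
    calc μ S ≤ μ A + μ C := hle1
    _ ≤ μ A + μ S / 2 := add_le_add le_rfl hhC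
  exact hgA' (le_antisymm hgA hge)

/-- Reflection invariance of a set lintegral on `Ioc` w.r.t. Lebesgue measure. -/
lemma grr_refl (h : ℝ → ℝ≥0∞) (a b : ℝ) (hab : a ≤ b) :
    ∫⁻ u in Ioc a b, h (a + b - u) = ∫⁻ u in Ioc a b, h u := by
  have hT : MeasurePreserving (fun u : ℝ => a + b - u) volume volume := by
    have h1 : (fun u : ℝ => a + b - u) = (fun u : ℝ => (a + b) + u) ∘ (fun u : ℝ => -u) := by
      funext u; simp [sub_eq_add_neg]
    rw [h1]
    exact (measurePreserving_add_left volume (a + b)).comp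
      (Measure.measurePreserving_neg volume)
  have hemb : MeasurableEmbedding (fun u : ℝ => a + b - u) :=
    (Homeomorph.subLeft (a + b)).measurableEmbedding
  have hpre : (fun u : ℝ => a + b - u) ⁻¹' (Ioc a b) = Ico a b := by
    ext u
    simp only [mem_preimage, mem_Ioc, mem_Ico]
    constructor <;> intro hu <;> constructor <;> linarith [hu.1, hu.2]
  have := hT.setLIntegral_comp_preimage_emb hemb h (Ioc a b)
  rw [hpre] at this
  rw [← this]
  refine setLIntegral_congr ?_
  exact (Ioc_ae_eq_Icc (α := ℝ) (μ := volume)).trans (Ico_ae_eq_Icc (α := ℝ) (μ := volume)).symm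


lemma grr_down {B : Type*} [NormedAddCommGroup B]
    (F : ℝ → B) (hF : Continuous F)
    (Ψinv : ℝ → ℝ)
    (hinvmono : ∀ y z : ℝ, 0 ≤ y → y ≤ z → Ψinv y ≤ Ψinv z)
    (hinvnonneg : ∀ y : ℝ, 0 ≤ y → 0 ≤ Ψinv y)
    (p : StieltjesFunction ℝ) (hp0 : p 0 = 0)
    (hpcont : ContinuousOn p (Icc 0 1))
    (hppos : ∀ v : ℝ, 0 < v → v ≤ 1 → 0 < p v)
    (G : ℝ × ℝ → ℝ) (hGmeas : Measurable G) (hGnonneg : ∀ q, 0 ≤ G q)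
    (a b : ℝ) (ha : 0 ≤ a) (hab : a < b) (hb : b ≤ 1)
    (hrec : ∀ x y : ℝ, x ∈ Icc a b → y ∈ Icc a b → x ≠ y →
      ‖F x - F y‖ = p |x - y| * Ψinv (G (x, y)))
    (K : ℝ≥0∞) (hKfin : K ≠ ∞)
    (hKI : ∫⁻ x in Ioc a b, ∫⁻ u in Ioc a b, ENNReal.ofReal (G (x, u)) = K)
    (c : ℝ) (hc : c ∈ Ioc a b)
    (hIc : (∫⁻ u in Ioc a b, ENNReal.ofReal (G (c, u))) * ENNReal.ofReal (b - a) ≤ K) :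
    ENNReal.ofReal ‖F c - F a‖ ≤
      4 * ∫⁻ u in Ioc 0 (b - a),
        ENNReal.ofReal (Ψinv (4 * K.toReal / u ^ 2)) ∂p.measure := by
  -- basic facts
  have hpnonneg : ∀ v : ℝ, 0 ≤ v → 0 ≤ p v := fun v hv => hp0 ▸ p.mono hv
  have hKr : (0:ℝ) ≤ K.toReal := ENNReal.toReal_nonneg
  set Kr := K.toReal with hKrdef
  -- the slice integral
  set I : ℝ → ℝ≥0∞ := fun x => ∫⁻ u in Ioc a b, ENNReal.ofReal (G (x, u)) with hIdef
  have hImeas : Measurable I := by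
    apply Measurable.lintegral_prod_right (f := fun x u => ENNReal.ofReal (G (x, u)))
    exact ENNReal.measurable_ofReal.comp hGmeas
  -- the midpoint function D
  have hDex : ∀ x ∈ Ioc a b, ∃ y, y ∈ Ioo a x ∧ p (y - a) = p (x - a) / 2 := by
    intro x hx
    have hxa : 0 < x - a := by linarith [hx.1]
    have hxa1 : x - a ≤ 1 := by linarith [hx.2]
    have hcont : ContinuousOn (fun y => p (y - a)) (Icc a x) := by
      apply hpcont.comp (continuous_sub_right a).continuousOn
      intro y hy
      constructor <;> simp at hy ⊢ <;> linarith [hy.1, hy.2]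
    have hlt : p (x - a) / 2 ∈ Ioo (p (a - a)) (p (x - a)) := by
      rw [sub_self, hp0]
      constructor
      · linarith [hppos _ hxa hxa1]
      · linarith [hppos _ hxa hxa1]
    have := intermediate_value_Ioo (le_of_lt hx.1) hcont hlt
    obtain ⟨y, hy1, hy2⟩ := this
    exact ⟨y, hy1, hy2⟩
  classical
  set D : ℝ → ℝ := fun x => if h : x ∈ Ioc a b then Classical.choose (hDex x h) else a
    with hDdef
  have hDspec : ∀ x (h : x ∈ Ioc a b), D x ∈ Ioo a x ∧ p (D x - a) = p (x - a) / 2 := by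
    intro x h
    rw [hDdef]
    simp only [dif_pos h]
    exact Classical.choose_spec (hDex x h)
  -- the step: choose the next point
  have hstep : ∀ x, x ∈ Ioc a b → I x ≠ ∞ →
      ∃ y, y ∈ Ioc a (D x) ∧ I y ≠ ∞ ∧
        I y * ENNReal.ofReal (D x - a) ≤ 2 * K ∧
        ENNReal.ofReal (G (x, y)) * ENNReal.ofReal (D x - a) ≤ 2 * I x := by
    intro x hx hIx
    obtain ⟨hDm, _⟩ := hDspec x hx
    have hvol : volume (Ioc a (D x)) = ENNReal.ofReal (D x - a) := Real.volume_Ioc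
    have hsub : Ioc a (D x) ⊆ Ioc a b :=
      Ioc_subset_Ioc le_rfl (le_trans hDm.2.le hx.2)
    have hInt1 : ∫⁻ u in Ioc a (D x), I u ≤ K := by
      rw [← hKI]
      exact lintegral_mono_set hsub
    have hInt2 : ∫⁻ u in Ioc a (D x), ENNReal.ofReal (G (x, u)) ≤ I x :=
      lintegral_mono_set hsub
    obtain ⟨y, hy, h1, h2⟩ := grr_cheb volume hImeas
      (ENNReal.measurable_ofReal.comp (hGmeas.comp (measurable_const.prodMk measurable_id)))
      measurableSet_Ioc
      (by rw [hvol]; simp only [ne_eq, ENNReal.ofReal_eq_zero, not_le]; linarith [hDm.1])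
      (by rw [hvol]; exact ENNReal.ofReal_ne_top)
      hKfin hIx hInt1 hInt2
    rw [hvol] at h1 h2
    refine ⟨y, hy, ?_, h1, h2⟩
    intro hcon
    rw [hcon] at h1
    have hpos : ENNReal.ofReal (D x - a) ≠ 0 := by
      simp only [ne_eq, ENNReal.ofReal_eq_zero, not_le]; linarith [hDm.1]
    rw [ENNReal.top_mul hpos] at h1
    exact (by finiteness : 2 * K ≠ ∞) (top_le_iff.1 h1)
  -- finiteness of I c
  have hbane0 : ENNReal.ofReal (b - a) ≠ 0 := by
    simp only [ne_eq, ENNReal.ofReal_eq_zero, not_le]; linarith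
  have hIc2 : I c * ENNReal.ofReal (b - a) ≤ K := hIc
  have hIcfin : I c ≠ ∞ := by
    intro hcon
    rw [hcon, ENNReal.top_mul hbane0] at hIc2
    exact hKfin (top_le_iff.1 hIc2)
  -- the sequence
  obtain ⟨nxt, hnxt⟩ : ∃ nxt : {x : ℝ // x ∈ Ioc a b ∧ I x ≠ ∞} → {x : ℝ // x ∈ Ioc a b ∧ I x ≠ ∞},
      ∀ z, (nxt z).1 ∈ Ioc a (D z.1) ∧
        I (nxt z).1 * ENNReal.ofReal (D z.1 - a) ≤ 2 * K ∧
        ENNReal.ofReal (G (z.1, (nxt z).1)) * ENNReal.ofReal (D z.1 - a) ≤ 2 * I z.1 := by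
    choose f h1 h2 h3 h4 using fun (z : {x : ℝ // x ∈ Ioc a b ∧ I x ≠ ∞}) =>
      hstep z.1 z.2.1 z.2.2
    refine ⟨fun z => ⟨f z, ?_, h2 z⟩, fun z => ⟨h1 z, h3 z, h4 z⟩⟩
    exact Ioc_subset_Ioc le_rfl (le_trans (hDspec z.1 z.2.1).1.2.le z.2.1.2) (h1 z)
  set τ : ℕ → ℝ := fun n => (nxt^[n] ⟨c, ⟨hc, hIcfin⟩⟩).1 with hτdef
  have hτ0 : τ 0 = c := rfl
  have hmem : ∀ n, τ n ∈ Ioc a b := fun n => (nxt^[n] ⟨c, ⟨hc, hIcfin⟩⟩).2.1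
  have hτfin : ∀ n, I (τ n) ≠ ∞ := fun n => (nxt^[n] ⟨c, ⟨hc, hIcfin⟩⟩).2.2
  have husucc : ∀ n, nxt^[n+1] (⟨c, ⟨hc, hIcfin⟩⟩ : {x : ℝ // x ∈ Ioc a b ∧ I x ≠ ∞})
      = nxt (nxt^[n] ⟨c, ⟨hc, hIcfin⟩⟩) := fun n => Function.iterate_succ_apply' nxt n _
  set e : ℕ → ℝ := fun n => D (τ n) - a with hedef
  have h1 : ∀ n, τ (n+1) ∈ Ioc a (D (τ n)) := by
    intro n; rw [hτdef]; simp only [husucc n]; exact (hnxt _).1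
  have h2 : ∀ n, I (τ (n+1)) * ENNReal.ofReal (e n) ≤ 2 * K := by
    intro n
    have := (hnxt (nxt^[n] ⟨c, ⟨hc, hIcfin⟩⟩)).2.1
    rw [hτdef, hedef]; simp only [husucc n]; exact this
  have h3 : ∀ n, ENNReal.ofReal (G (τ n, τ (n+1))) * ENNReal.ofReal (e n) ≤ 2 * I (τ n) := by
    intro n
    have := (hnxt (nxt^[n] ⟨c, ⟨hc, hIcfin⟩⟩)).2.2
    rw [hτdef, hedef]; simp only [husucc n]; exact this
  have hDn : ∀ n, D (τ n) ∈ Ioo a (τ n) ∧ p (D (τ n) - a) = p (τ n - a) / 2 :=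
    fun n => hDspec (τ n) (hmem n)
  have hepos : ∀ n, 0 < e n := fun n => by have := (hDn n).1.1; rw [hedef]; simp; linarith
  have he_lt : ∀ n, e n < τ n - a := fun n => by
    have := (hDn n).1.2; rw [hedef]; simp; linarith
  have hτgt : ∀ n, a < τ n := fun n => (hmem n).1
  have hτle : ∀ n, τ n ≤ b := fun n => (hmem n).2
  have hsucc_lt : ∀ n, τ (n+1) < τ n := fun n => lt_of_le_of_lt (h1 n).2 (hDn n).1.2
  have hsucc_le_e : ∀ n, τ (n+1) - a ≤ e n := fun n => by
    have := (h1 n).2; rw [hedef]; simp; linarith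
  have he_mono : ∀ n, e (n+1) ≤ e n := fun n =>
    le_trans (he_lt (n+1)).le (hsucc_le_e n)
  have he_le : ∀ n, e n ≤ b - a := fun n => by
    have := he_lt n; have := hτle n; linarith
  have he0_le : e 0 ≤ b - a := he_le 0
  have he1 : ∀ n, e n ≤ 1 := fun n => le_trans (he_le n) (by linarith)
  -- real-valued bounds
  set In : ℕ → ℝ := fun n => (I (τ n)).toReal with hIndef
  set gn : ℕ → ℝ := fun n => G (τ n, τ (n+1)) with hgndef
  have hInnonneg : ∀ n, 0 ≤ In n := fun n => ENNReal.toReal_nonneg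
  have hgnnonneg : ∀ n, 0 ≤ gn n := fun n => hGnonneg _
  have hg3 : ∀ n, gn n * e n ≤ 2 * In n := by
    intro n
    have := h3 n
    rw [← ENNReal.ofReal_mul (hgnnonneg n)] at this
    have h2fin : (2 : ℝ≥0∞) * I (τ n) ≠ ∞ := by
      refine ENNReal.mul_ne_top (by norm_num) (hτfin n)
    have := (ENNReal.ofReal_le_iff_le_toReal h2fin).1 this
    rwa [ENNReal.toReal_mul, ENNReal.toReal_ofNat] at this
  have hg2 : ∀ n, In (n+1) * e n ≤ 2 * Kr := by
    intro n
    have := ENNReal.toReal_mono (by finiteness) (h2 n)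
    rwa [ENNReal.toReal_mul, ENNReal.toReal_mul, ENNReal.toReal_ofNat,
      ENNReal.toReal_ofReal (hepos n).le] at this
  have hg0 : In 0 * (b - a) ≤ Kr := by
    have hIc3 : I (τ 0) * ENNReal.ofReal (b - a) ≤ K := hIc2
    have h := ENNReal.toReal_mono hKfin hIc3
    rwa [ENNReal.toReal_mul, ENNReal.toReal_ofReal (by linarith : (0:ℝ) ≤ b - a)] at h
  -- the key bound
  have hgK : ∀ n, gn n * e n ^ 2 ≤ 4 * Kr := by
    intro n
    match n with
    | 0 =>
      have hIe : In 0 * e 0 ≤ Kr := by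
        calc In 0 * e 0 ≤ In 0 * (b - a) :=
          mul_le_mul_of_nonneg_left (by linarith [he_lt 0, hτle 0]) (hInnonneg 0)
        _ ≤ Kr := hg0
      calc gn 0 * e 0 ^ 2 = (gn 0 * e 0) * e 0 := by ring
      _ ≤ (2 * In 0) * e 0 := mul_le_mul_of_nonneg_right (hg3 0) (hepos 0).le
      _ = 2 * (In 0 * e 0) := by ring
      _ ≤ 2 * Kr := by linarith [hIe]
      _ ≤ 4 * Kr := by linarith [hKr]
    | Nat.succ m =>
      have hIe : In (m+1) * e (m+1) ≤ 2 * Kr := by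
        calc In (m+1) * e (m+1) ≤ In (m+1) * e m :=
          mul_le_mul_of_nonneg_left (he_mono m) (hInnonneg (m+1))
        _ ≤ 2 * Kr := hg2 m
      calc gn (m+1) * e (m+1) ^ 2 = (gn (m+1) * e (m+1)) * e (m+1) := by ring
      _ ≤ (2 * In (m+1)) * e (m+1) := mul_le_mul_of_nonneg_right (hg3 (m+1)) (hepos (m+1)).le
      _ = 2 * (In (m+1) * e (m+1)) := by ring
      _ ≤ 2 * (2 * Kr) := by linarith [hIe]
      _ = 4 * Kr := by ring
  -- per-step norm bound
  have hporder : ∀ n, p (τ n - a) ≤ 4 * (p (e n) - p (e (n+1))) := by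
    intro n
    have hpe : p (e n) = p (τ n - a) / 2 := by rw [hedef]; exact (hDn n).2
    have hpe' : p (e (n+1)) ≤ p (e n) / 2 := by
      have h' : p (e (n+1)) = p (τ (n+1) - a) / 2 := by rw [hedef]; exact (hDn (n+1)).2
      have : p (τ (n+1) - a) ≤ p (e n) := p.mono (hsucc_le_e n)
      linarith
    linarith
  have hnorm : ∀ n, ‖F (τ n) - F (τ (n+1))‖ ≤
      4 * (p (e n) - p (e (n+1))) * Ψinv (4 * Kr / e n ^ 2) := by
    intro n
    have hne : τ n ≠ τ (n+1) := (hsucc_lt n).ne'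
    have hmemIcc : ∀ m, τ m ∈ Icc a b := fun m => Ioc_subset_Icc_self (hmem m)
    have habs : |τ n - τ (n+1)| = τ n - τ (n+1) := abs_of_pos (by linarith [hsucc_lt n])
    have hrw := hrec (τ n) (τ (n+1)) (hmemIcc n) (hmemIcc (n+1)) hne
    have hinv1 : Ψinv (gn n) ≤ Ψinv (4 * Kr / e n ^ 2) := by
      refine hinvmono _ _ (hgnnonneg n) ?_
      rw [le_div_iff₀ (pow_pos (hepos n) 2)]
      exact hgK n
    have hp1 : p |τ n - τ (n+1)| ≤ p (τ n - a) := by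
      rw [habs]
      exact p.mono (by linarith [hτgt (n+1)])
    calc ‖F (τ n) - F (τ (n+1))‖ = p |τ n - τ (n+1)| * Ψinv (gn n) := hrw
    _ ≤ p (τ n - a) * Ψinv (4 * Kr / e n ^ 2) := by
        refine mul_le_mul hp1 hinv1 (hinvnonneg _ (hgnnonneg n)) ?_
        exact hpnonneg _ (by linarith [hτgt n])
    _ ≤ 4 * (p (e n) - p (e (n+1))) * Ψinv (4 * Kr / e n ^ 2) :=
        mul_le_mul_of_nonneg_right (hporder n) (hinvnonneg _ (div_nonneg (by linarith) (sq_nonneg _)))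
  -- per-step integral bound
  have hint : ∀ n, ENNReal.ofReal (4 * (p (e n) - p (e (n+1))) * Ψinv (4 * Kr / e n ^ 2)) ≤
      4 * ∫⁻ u in Ioc (e (n+1)) (e n), ENNReal.ofReal (Ψinv (4 * Kr / u ^ 2)) ∂p.measure := by
    intro n
    have hdn : 0 ≤ p (e n) - p (e (n+1)) := by linarith [p.mono (he_mono n)]
    have hCn : 0 ≤ Ψinv (4 * Kr / e n ^ 2) := hinvnonneg _ (div_nonneg (by linarith) (sq_nonneg _))
    have hconst : ENNReal.ofReal (Ψinv (4 * Kr / e n ^ 2)) * p.measure (Ioc (e (n+1)) (e n)) ≤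
        ∫⁻ u in Ioc (e (n+1)) (e n), ENNReal.ofReal (Ψinv (4 * Kr / u ^ 2)) ∂p.measure := by
      rw [← setLIntegral_const]
      refine lintegral_mono_ae ?_
      filter_upwards [ae_restrict_mem measurableSet_Ioc] with u hu
      refine ENNReal.ofReal_le_ofReal (hinvmono _ _ (div_nonneg (by linarith) (sq_nonneg _)) ?_)
      have hu1 : 0 < u := lt_trans (hepos (n+1)) hu.1
      have hu2 : u ≤ e n := hu.2
      gcongr
      all_goals first
        | exact hKr
        | exact pow_pos hu1 2
        | exact pow_le_pow_left₀ hu1.le hu2 2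
        | positivity
    calc ENNReal.ofReal (4 * (p (e n) - p (e (n+1))) * Ψinv (4 * Kr / e n ^ 2))
        = 4 * (ENNReal.ofReal (Ψinv (4 * Kr / e n ^ 2)) *
            ENNReal.ofReal (p (e n) - p (e (n+1)))) := by
          rw [show (4:ℝ) * (p (e n) - p (e (n+1))) * Ψinv (4 * Kr / e n ^ 2)
              = (4:ℝ) * (Ψinv (4 * Kr / e n ^ 2) * (p (e n) - p (e (n+1)))) by ring,
            ENNReal.ofReal_mul (by norm_num : (0:ℝ) ≤ 4),
            ENNReal.ofReal_mul hCn, ENNReal.ofReal_ofNat]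
    _ = 4 * (ENNReal.ofReal (Ψinv (4 * Kr / e n ^ 2)) * p.measure (Ioc (e (n+1)) (e n))) := by
          rw [p.measure_Ioc]
    _ ≤ 4 * ∫⁻ u in Ioc (e (n+1)) (e n), ENNReal.ofReal (Ψinv (4 * Kr / u ^ 2)) ∂p.measure :=
          mul_le_mul_right hconst 4
  have he_le0 : ∀ m, e m ≤ e 0 := by
    intro m
    induction m with
    | zero => exact le_rfl
    | succ k ihk => exact le_trans (he_mono k) ihk
  -- telescoping sum
  have hsum : ∀ N, ∑ n ∈ Finset.range N,
      (∫⁻ u in Ioc (e (n+1)) (e n), ENNReal.ofReal (Ψinv (4 * Kr / u ^ 2)) ∂p.measure) =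
      ∫⁻ u in Ioc (e N) (e 0), ENNReal.ofReal (Ψinv (4 * Kr / u ^ 2)) ∂p.measure := by
    intro N
    induction N with
    | zero => simp
    | succ m ih =>
      rw [Finset.sum_range_succ, ih]
      rw [add_comm, ← lintegral_union measurableSet_Ioc (Ioc_disjoint_Ioc_of_le le_rfl),
        Set.Ioc_union_Ioc_eq_Ioc (he_mono m) (he_le0 m)]
  -- telescoped estimate
  have htel : ∀ N, ENNReal.ofReal ‖F c - F (τ N)‖ ≤
      4 * ∫⁻ u in Ioc 0 (b - a), ENNReal.ofReal (Ψinv (4 * Kr / u ^ 2)) ∂p.measure := by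
    intro N
    have hdist : dist (F (τ 0)) (F (τ N)) ≤
        ∑ n ∈ Finset.range N, dist (F (τ n)) (F (τ (n+1))) :=
      dist_le_range_sum_dist (fun n => F (τ n)) N
    calc ENNReal.ofReal ‖F c - F (τ N)‖
        ≤ ENNReal.ofReal (∑ n ∈ Finset.range N, dist (F (τ n)) (F (τ (n+1)))) := by
          refine ENNReal.ofReal_le_ofReal ?_
          rw [← dist_eq_norm]
          exact hdist
    _ = ∑ n ∈ Finset.range N, ENNReal.ofReal (dist (F (τ n)) (F (τ (n+1)))) :=
          ENNReal.ofReal_sum_of_nonneg (fun n _ => dist_nonneg)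
    _ ≤ ∑ n ∈ Finset.range N,
          4 * ∫⁻ u in Ioc (e (n+1)) (e n), ENNReal.ofReal (Ψinv (4 * Kr / u ^ 2)) ∂p.measure := by
          refine Finset.sum_le_sum (fun n _ => ?_)
          refine le_trans (ENNReal.ofReal_le_ofReal ?_) (hint n)
          rw [dist_eq_norm]
          exact hnorm n
    _ = 4 * ∑ n ∈ Finset.range N,
          ∫⁻ u in Ioc (e (n+1)) (e n), ENNReal.ofReal (Ψinv (4 * Kr / u ^ 2)) ∂p.measure := by
          rw [← Finset.mul_sum]
    _ = 4 * ∫⁻ u in Ioc (e N) (e 0), ENNReal.ofReal (Ψinv (4 * Kr / u ^ 2)) ∂p.measure := by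
          rw [hsum N]
    _ ≤ 4 * ∫⁻ u in Ioc 0 (b - a), ENNReal.ofReal (Ψinv (4 * Kr / u ^ 2)) ∂p.measure := by
          refine mul_le_mul_right (lintegral_mono_set ?_) 4
          refine Ioc_subset_Ioc (hepos N).le ?_
          have h5 := he_lt 0
          have h6 : τ 0 = c := hτ0
          have h7 : c ≤ b := hc.2
          linarith [h6 ▸ h5]
  -- convergence to a
  have hτanti : Antitone τ := antitone_nat_of_succ_le (fun n => (hsucc_lt n).le)
  have hple : ∀ n, p (e n) ≤ p (e 0) / 2 ^ n := by
    intro n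
    induction n with
    | zero => simp
    | succ k ihk =>
      have hh : p (τ (k+1) - a) ≤ p (e k) := p.mono (hsucc_le_e k)
      have h2' : p (e (k+1)) = p (τ (k+1) - a) / 2 := (hDn (k+1)).2
      have hpow : (0:ℝ) < 2 ^ k := by positivity
      calc p (e (k+1)) = p (τ (k+1) - a) / 2 := h2'
      _ ≤ p (e k) / 2 := by linarith
      _ ≤ (p (e 0) / 2 ^ k) / 2 := by linarith
      _ = p (e 0) / 2 ^ (k+1) := by ring
  have htend : Filter.Tendsto τ atTop (nhds a) := by
    rw [Metric.tendsto_atTop]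
    intro ε hε
    set δ := min ε (b - a) with hδdef
    have hδpos : 0 < δ := lt_min hε (by linarith)
    have hδ1 : δ ≤ 1 := le_trans (min_le_right _ _) (by linarith)
    have hpδ : 0 < p δ := hppos δ hδpos hδ1
    obtain ⟨N, hN⟩ := pow_unbounded_of_one_lt (2 * p (e 0) / p δ) (by norm_num : (1:ℝ) < 2)
    refine ⟨N, fun n hn => ?_⟩
    have hpow : (0:ℝ) < 2 ^ N := by positivity
    have hτN : τ N - a < δ := by
      by_contra hcon
      push_neg at hcon
      have hmono := p.mono hcon
      have heq : p (e N) = p (τ N - a) / 2 := (hDn N).2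
      have h5 : p δ ≤ 2 * p (e 0) / 2 ^ N := by
        have := hple N
        calc p δ ≤ p (τ N - a) := hmono
        _ = 2 * p (e N) := by linarith
        _ ≤ 2 * (p (e 0) / 2 ^ N) := by linarith
        _ = 2 * p (e 0) / 2 ^ N := by ring
      rw [div_lt_iff₀ hpδ] at hN
      rw [le_div_iff₀ hpow] at h5
      linarith
    rw [Real.dist_eq, abs_of_pos (by linarith [hτgt n] : (0:ℝ) < τ n - a)]
    have hττ : τ n ≤ τ N := hτanti hn
    have : τ n - a < δ := by linarith
    exact lt_of_lt_of_le this (min_le_left _ _)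
  have hlim : Filter.Tendsto (fun N => ENNReal.ofReal ‖F c - F (τ N)‖) atTop
      (nhds (ENNReal.ofReal ‖F c - F a‖)) := by
    have h1' : Filter.Tendsto (fun N => F (τ N)) atTop (nhds (F a)) := (hF.tendsto a).comp htend
    have h2' : Filter.Tendsto (fun N => ‖F c - F (τ N)‖) atTop (nhds ‖F c - F a‖) :=
      ((continuous_const.sub continuous_id).norm.tendsto (F a)).comp h1'
    exact (ENNReal.continuous_ofReal.tendsto _).comp h2'
  exact le_of_tendsto' hlim htel

/-- Garsia–Rodemich–Rumsey inequality. -/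
theorem garsia_rodemich_rumsey
    {B : Type*} [NormedAddCommGroup B] [NormedSpace ℝ B] [CompleteSpace B]
    (f : ℝ → B) (hf : ContinuousOn f (Icc 0 1))
    (Ψ Ψinv : ℝ → ℝ)
    (hΨcont : ContinuousOn Ψ (Ici 0))
    (hΨmono : StrictMonoOn Ψ (Ici 0))
    (hΨ0 : Ψ 0 = 0)
    (hΨtop : Filter.Tendsto Ψ Filter.atTop Filter.atTop)
    (hΨnonneg : ∀ x, 0 ≤ x → 0 ≤ Ψ x)
    (hinv_left : ∀ x, 0 ≤ x → Ψinv (Ψ x) = x)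
    (hinv_right : ∀ y, 0 ≤ y → Ψ (Ψinv y) = y)
    (p : StieltjesFunction ℝ)
    (hpcont : ContinuousOn p (Icc 0 1))
    (hpmono : StrictMonoOn p (Icc 0 1))
    (hp0 : p 0 = 0)
    (hpmaps : ∀ x ∈ Icc (0:ℝ) 1, p x ∈ Icc (0:ℝ) 1)
    (hB : IntegrableOn (fun q : ℝ × ℝ => Ψ (‖f q.1 - f q.2‖ / p (|q.1 - q.2|)))
      (Icc 0 1 ×ˢ Icc 0 1))
    (s t : ℝ) (hs : s ∈ Icc (0:ℝ) 1) (ht : t ∈ Icc (0:ℝ) 1) :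
    ENNReal.ofReal ‖f t - f s‖ ≤
      8 * ∫⁻ u in Ioc 0 |t - s|,
        ENNReal.ofReal (Ψinv (4 * (∫ q in Icc (0:ℝ) 1 ×ˢ Icc (0:ℝ) 1,
          Ψ (‖f q.1 - f q.2‖ / p (|q.1 - q.2|))) / u ^ 2)) ∂p.measure := by
  classical
  rcases eq_or_ne s t with heq | hne
  · subst heq
    simp
  -- the clamped extension of f
  set F : ℝ → B := fun x => f (max 0 (min x 1)) with hFdef
  have hclamp : ∀ x : ℝ, max 0 (min x 1) ∈ Icc (0:ℝ) 1 :=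
    fun x => ⟨le_max_left _ _, max_le zero_le_one (min_le_right _ _)⟩
  have hFf : ∀ x ∈ Icc (0:ℝ) 1, F x = f x := by
    intro x hx
    rw [hFdef]
    simp only
    rw [min_eq_left hx.2, max_eq_right hx.1]
  have hFcont : Continuous F :=
    hf.comp_continuous (continuous_const.max (continuous_id.min continuous_const)) hclamp
  -- the nonnegative integrand
  set G : ℝ × ℝ → ℝ := fun q => Ψ (max 0 (‖F q.1 - F q.2‖ / p |q.1 - q.2|)) with hGdef
  have hpnn : ∀ v : ℝ, 0 ≤ v → 0 ≤ p v := fun v hv => hp0 ▸ p.mono hv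
  have hargnn : ∀ q : ℝ × ℝ, 0 ≤ ‖F q.1 - F q.2‖ / p |q.1 - q.2| :=
    fun q => div_nonneg (norm_nonneg _) (hpnn _ (abs_nonneg _))
  have hGsimp : ∀ q, G q = Ψ (‖F q.1 - F q.2‖ / p |q.1 - q.2|) := by
    intro q; rw [hGdef]; simp only [max_eq_right (hargnn q)]
  have hGnonneg : ∀ q, 0 ≤ G q := fun q => hΨnonneg _ (le_max_left _ _)
  have hGmeas : Measurable G := by
    have hΨ' : Continuous (fun v : ℝ => Ψ (max 0 v)) :=
      hΨcont.comp_continuous (continuous_const.max continuous_id) (fun v => mem_Ici.2 (le_max_left _ _))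
    have hmeas1 : Measurable fun q : ℝ × ℝ => ‖F q.1 - F q.2‖ :=
      ((hFcont.comp continuous_fst).sub (hFcont.comp continuous_snd)).norm.measurable
    have hmeas2 : Measurable fun q : ℝ × ℝ => p |q.1 - q.2| :=
      p.mono.measurable.comp (continuous_abs.comp (continuous_fst.sub continuous_snd)).measurable
    exact hΨ'.measurable.comp (hmeas1.div hmeas2)
  -- Ψinv facts
  have hsurj : ∀ y : ℝ, 0 ≤ y → ∃ x, 0 ≤ x ∧ Ψ x = y := by
    intro y hy
    obtain ⟨z, hz1, hz2⟩ : ∃ z : ℝ, y ≤ Ψ z ∧ 0 ≤ z := by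
      obtain ⟨z, hz⟩ := ((hΨtop.eventually_ge_atTop y).and (Filter.eventually_ge_atTop 0)).exists
      exact ⟨z, hz.1, hz.2⟩
    have hsub : Icc (Ψ 0) (Ψ z) ⊆ Ψ '' Icc 0 z :=
      intermediate_value_Icc hz2 (hΨcont.mono (fun w hw => hw.1))
    obtain ⟨x, hx1, hx2⟩ := hsub ⟨by rw [hΨ0]; exact hy, hz1⟩
    exact ⟨x, hx1.1, hx2⟩
  have hinvnonneg : ∀ y : ℝ, 0 ≤ y → 0 ≤ Ψinv y := by
    intro y hy
    obtain ⟨x, hx0, hx⟩ := hsurj y hy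
    rw [← hx, hinv_left x hx0]; exact hx0
  have hinvmono : ∀ y z : ℝ, 0 ≤ y → y ≤ z → Ψinv y ≤ Ψinv z := by
    intro y z hy hyz
    obtain ⟨x1, hx10, hx1⟩ := hsurj y hy
    obtain ⟨x2, hx20, hx2⟩ := hsurj z (le_trans hy hyz)
    rw [← hx1, ← hx2, hinv_left x1 hx10, hinv_left x2 hx20]
    by_contra hcon
    push_neg at hcon
    have := hΨmono hx20 hx10 hcon
    rw [hx1, hx2] at this
    linarith
  -- p positivity
  have hppos : ∀ v : ℝ, 0 < v → v ≤ 1 → 0 < p v := by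
    intro v h1 h2
    have := hpmono (⟨le_refl 0, zero_le_one⟩ : (0:ℝ) ∈ Icc (0:ℝ) 1) ⟨h1.le, h2⟩ h1
    rwa [hp0] at this
  -- the interval
  set a : ℝ := min s t with hadef
  set b : ℝ := max s t with hbdef
  have ha : 0 ≤ a := le_min hs.1 ht.1
  have hb : b ≤ 1 := max_le hs.2 ht.2
  have hab : a < b := min_lt_max.2 hne
  have habs : |t - s| = b - a := by
    rcases le_total s t with h | h
    · rw [abs_of_nonneg (by linarith), hbdef, hadef, max_eq_right h, min_eq_left h]
    · rw [abs_of_nonpos (by linarith), hbdef, hadef, max_eq_left h, min_eq_right h]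
      ring
  have hmemab : Icc a b ⊆ Icc (0:ℝ) 1 := fun x hx => ⟨le_trans ha hx.1, le_trans hx.2 hb⟩
  -- recovery identity
  have hrec : ∀ x y : ℝ, x ∈ Icc a b → y ∈ Icc a b → x ≠ y →
      ‖F x - F y‖ = p |x - y| * Ψinv (G (x, y)) := by
    intro x y hx hy hne'
    have habs0 : 0 < |x - y| := abs_pos.2 (sub_ne_zero.2 hne')
    have habs1 : |x - y| ≤ 1 := by
      have : |x - y| ≤ b - a :=
        abs_le.2 ⟨by linarith [hx.1, hy.2], by linarith [hx.2, hy.1]⟩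
      linarith
    have hp' : 0 < p |x - y| := hppos _ habs0 habs1
    rw [hGsimp (x, y), hinv_left _ (hargnn (x, y))]
    rw [mul_comm, div_mul_cancel₀ _ hp'.ne']
  -- the kernel integrals
  set I : ℝ → ℝ≥0∞ := fun x => ∫⁻ u in Ioc a b, ENNReal.ofReal (G (x, u)) with hIdef
  set K : ℝ≥0∞ := ∫⁻ x in Ioc a b, I x with hKdef
  have hImeas : Measurable I := by
    apply Measurable.lintegral_prod_right (f := fun x u => ENNReal.ofReal (G (x, u)))
    exact ENNReal.measurable_ofReal.comp hGmeas
  have hKprod : K = ∫⁻ q in Ioc a b ×ˢ Ioc a b, ENNReal.ofReal (G q) := by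
    rw [hKdef]
    have h1 : ∫⁻ q in Ioc a b ×ˢ Ioc a b, ENNReal.ofReal (G q) =
        ∫⁻ q, ENNReal.ofReal (G q)
          ∂((volume.restrict (Ioc a b)).prod (volume.restrict (Ioc a b))) := by
      rw [Measure.prod_restrict, ← Measure.volume_eq_prod]
    rw [h1, lintegral_prod (fun q => ENNReal.ofReal (G q))
      ((ENNReal.measurable_ofReal.comp hGmeas).aemeasurable)]
  -- B₀ and the bound K ≤ ofReal B₀
  set B₀ : ℝ := ∫ q in Icc (0:ℝ) 1 ×ˢ Icc (0:ℝ) 1,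
    Ψ (‖f q.1 - f q.2‖ / p (|q.1 - q.2|)) with hB₀def
  have hsq : MeasurableSet (Icc (0:ℝ) 1 ×ˢ Icc (0:ℝ) 1) :=
    measurableSet_Icc.prod measurableSet_Icc
  have hEqOn : ∀ q ∈ Icc (0:ℝ) 1 ×ˢ Icc (0:ℝ) 1,
      Ψ (‖f q.1 - f q.2‖ / p (|q.1 - q.2|)) = G q := by
    intro q hq
    rw [hGsimp q, hFf q.1 hq.1, hFf q.2 hq.2]
  have hGint : IntegrableOn G (Icc (0:ℝ) 1 ×ˢ Icc (0:ℝ) 1) :=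
    hB.congr_fun hEqOn hsq
  have hB₀G : B₀ = ∫ q in Icc (0:ℝ) 1 ×ˢ Icc (0:ℝ) 1, G q := by
    rw [hB₀def]
    exact setIntegral_congr_fun hsq hEqOn
  have hKB : K ≤ ENNReal.ofReal B₀ := by
    have heq2 : ENNReal.ofReal B₀ = ∫⁻ q in Icc (0:ℝ) 1 ×ˢ Icc (0:ℝ) 1,
        ENNReal.ofReal (G q) := by
      rw [hB₀G]
      exact ofReal_integral_eq_lintegral_ofReal hGint
        (Filter.Eventually.of_forall (fun q => hGnonneg q))
    rw [heq2, hKprod]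
    refine lintegral_mono_set (Set.prod_mono ?_ ?_) <;>
      exact fun x hx => hmemab (Ioc_subset_Icc_self hx)
  have hKfin : K ≠ ∞ := ne_top_of_le_ne_top ENNReal.ofReal_ne_top hKB
  have hbane0 : ENNReal.ofReal (b - a) ≠ 0 := by
    simp only [ne_eq, ENNReal.ofReal_eq_zero, not_le]; linarith
  -- choose the midpoint c
  obtain ⟨c, hc, hIc⟩ : ∃ c ∈ Ioo a b, I c * ENNReal.ofReal (b - a) ≤ K := by
    by_contra hcon
    push_neg at hcon
    have hb0 : ∀ᵐ (x : ℝ) ∂volume, x ≠ b := by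
      rw [ae_iff]
      simpa [not_not, setOf_eq_eq_singleton] using measure_singleton b
    have hae' : ∀ᵐ x ∂(volume.restrict (Ioc a b)),
        K / ENNReal.ofReal (b - a) < I x := by
      filter_upwards [ae_restrict_mem measurableSet_Ioc, ae_restrict_of_ae hb0] with x hx hxb
      have hxoo : x ∈ Ioo a b := ⟨hx.1, lt_of_le_of_ne hx.2 hxb⟩
      have := hcon x hxoo
      rwa [ENNReal.div_lt_iff (Or.inl hbane0) (Or.inl ENNReal.ofReal_ne_top)]
    have hIconst : ∫⁻ _ in Ioc a b, (K / ENNReal.ofReal (b - a)) ∂volume = K := by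
      rw [setLIntegral_const, Real.volume_Ioc]
      exact ENNReal.div_mul_cancel hbane0 ENNReal.ofReal_ne_top
    have hne0 : volume.restrict (Ioc a b) ≠ 0 := by
      rw [ne_eq, Measure.restrict_eq_zero, Real.volume_Ioc]
      simp only [ENNReal.ofReal_eq_zero, not_le]; linarith
    have hlt := lintegral_strict_mono hne0 hImeas.aemeasurable
      (by rw [hIconst]; exact hKfin) hae'
    rw [hIconst] at hlt
    exact lt_irrefl K (lt_of_lt_of_le hlt (le_of_eq hKdef.symm))
  -- first application: from a to c
  have hdown1 := grr_down F hFcont Ψinv hinvmono hinvnonneg p hp0 hpcont hppos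
    G hGmeas hGnonneg a b ha hab hb hrec K hKfin hKdef.symm c ⟨hc.1, hc.2.le⟩ hIc
  -- second application: reflected, from b to c
  set F2 : ℝ → B := fun x => F (a + b - x) with hF2def
  set G2 : ℝ × ℝ → ℝ := fun q => G (a + b - q.1, a + b - q.2) with hG2def
  have hF2cont : Continuous F2 := hFcont.comp (continuous_const.sub continuous_id)
  have hG2meas : Measurable G2 := by
    apply hGmeas.comp
    exact ((continuous_const.sub continuous_fst).prodMk
      (continuous_const.sub continuous_snd)).measurable
  have hG2nonneg : ∀ q, 0 ≤ G2 q := fun q => hGnonneg _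
  have hrec2 : ∀ x y : ℝ, x ∈ Icc a b → y ∈ Icc a b → x ≠ y →
      ‖F2 x - F2 y‖ = p |x - y| * Ψinv (G2 (x, y)) := by
    intro x y hx hy hne'
    have hx' : a + b - x ∈ Icc a b := ⟨by linarith [hx.2], by linarith [hx.1]⟩
    have hy' : a + b - y ∈ Icc a b := ⟨by linarith [hy.2], by linarith [hy.1]⟩
    have hne'' : a + b - x ≠ a + b - y := fun hcon => hne' (by linarith)
    have := hrec _ _ hx' hy' hne''
    have habs2 : |a + b - x - (a + b - y)| = |x - y| := by
      rw [show a + b - x - (a + b - y) = -(x - y) by ring, abs_neg]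
    rw [hF2def, hG2def]
    simp only
    rw [this, habs2]
  have hinner : ∀ x : ℝ, (∫⁻ u in Ioc a b, ENNReal.ofReal (G2 (x, u))) = I (a + b - x) := by
    intro x
    have := grr_refl (fun v => ENNReal.ofReal (G (a + b - x, v))) a b hab.le
    exact this
  have hKI2 : ∫⁻ x in Ioc a b, ∫⁻ u in Ioc a b, ENNReal.ofReal (G2 (x, u)) = K := by
    have h1 : ∫⁻ x in Ioc a b, ∫⁻ u in Ioc a b, ENNReal.ofReal (G2 (x, u)) =
        ∫⁻ x in Ioc a b, I (a + b - x) := by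
      refine setLIntegral_congr_fun measurableSet_Ioc ?_
      exact fun x _ => hinner x
    rw [h1, grr_refl I a b hab.le]
  have hc2 : a + b - c ∈ Ioc a b := ⟨by linarith [hc.2], by linarith [hc.1]⟩
  have hIc2 : (∫⁻ u in Ioc a b, ENNReal.ofReal (G2 (a + b - c, u))) *
      ENNReal.ofReal (b - a) ≤ K := by
    rw [hinner (a + b - c), show a + b - (a + b - c) = c by ring]
    exact hIc
  have hdown2 := grr_down F2 hF2cont Ψinv hinvmono hinvnonneg p hp0 hpcont hppos
    G2 hG2meas hG2nonneg a b ha hab hb hrec2 K hKfin hKI2 (a + b - c) hc2 hIc2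
  have hF2c : F2 (a + b - c) = F c := by rw [hF2def]; simp only; ring_nf
  have hF2a : F2 a = F b := by rw [hF2def]; simp only; ring_nf
  rw [hF2c, hF2a] at hdown2
  -- combine
  have htri : ENNReal.ofReal ‖f t - f s‖ ≤
      ENNReal.ofReal ‖F c - F b‖ + ENNReal.ofReal ‖F c - F a‖ := by
    have hnorm_eq : ‖f t - f s‖ = ‖F b - F a‖ := by
      rcases le_total s t with h | h
      · rw [hFf b (hmemab ⟨hab.le, le_refl b⟩), hFf a (hmemab ⟨le_refl a, hab.le⟩),
          hbdef, hadef, max_eq_right h, min_eq_left h]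
      · rw [hFf b (hmemab ⟨hab.le, le_refl b⟩), hFf a (hmemab ⟨le_refl a, hab.le⟩),
          hbdef, hadef, max_eq_left h, min_eq_right h, norm_sub_rev]
    rw [hnorm_eq]
    refine le_trans (ENNReal.ofReal_le_ofReal ?_) ENNReal.ofReal_add_le
    calc ‖F b - F a‖ ≤ ‖F b - F c‖ + ‖F c - F a‖ := norm_sub_le_norm_sub_add_norm_sub _ _ _
    _ = ‖F c - F b‖ + ‖F c - F a‖ := by rw [norm_sub_rev (F b) (F c)]
  have hKint : ENNReal.ofReal ‖f t - f s‖ ≤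
      8 * ∫⁻ u in Ioc 0 (b - a),
        ENNReal.ofReal (Ψinv (4 * K.toReal / u ^ 2)) ∂p.measure := by
    calc ENNReal.ofReal ‖f t - f s‖
        ≤ ENNReal.ofReal ‖F c - F b‖ + ENNReal.ofReal ‖F c - F a‖ := htri
    _ ≤ 4 * (∫⁻ u in Ioc 0 (b - a), ENNReal.ofReal (Ψinv (4 * K.toReal / u ^ 2)) ∂p.measure)
        + 4 * (∫⁻ u in Ioc 0 (b - a),
            ENNReal.ofReal (Ψinv (4 * K.toReal / u ^ 2)) ∂p.measure) :=
          add_le_add hdown2 hdown1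
    _ = 8 * ∫⁻ u in Ioc 0 (b - a),
          ENNReal.ofReal (Ψinv (4 * K.toReal / u ^ 2)) ∂p.measure := by
          rw [← add_mul]
          norm_num
  -- compare the integrands
  have hB₀nn : 0 ≤ B₀ := by
    rw [hB₀def]
    refine setIntegral_nonneg hsq (fun q _ => ?_)
    exact hΨnonneg _ (div_nonneg (norm_nonneg _) (hpnn _ (abs_nonneg _)))
  have hKrB : K.toReal ≤ B₀ := by
    have := ENNReal.toReal_mono ENNReal.ofReal_ne_top hKB
    rwa [ENNReal.toReal_ofReal hB₀nn] at this
  have hfinal : (∫⁻ u in Ioc 0 (b - a),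
      ENNReal.ofReal (Ψinv (4 * K.toReal / u ^ 2)) ∂p.measure) ≤
      ∫⁻ u in Ioc 0 |t - s|, ENNReal.ofReal (Ψinv (4 * B₀ / u ^ 2)) ∂p.measure := by
    rw [habs]
    refine lintegral_mono_ae ?_
    filter_upwards [ae_restrict_mem measurableSet_Ioc] with u hu
    refine ENNReal.ofReal_le_ofReal (hinvmono _ _ ?_ ?_)
    · exact div_nonneg (by linarith [ENNReal.toReal_nonneg (a := K)]) (sq_nonneg _)
    · have hu2 : (0:ℝ) < u ^ 2 := pow_pos hu.1 2
      gcongr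
      all_goals linarith
  exact le_trans hKint (mul_le_mul_right hfinal 8)
end

section
/- Let (B, ‖·‖) be a normed vector space, let T > 0, let f : [0,T] → B be continuous, let p ≥ 1 be real and let γ' > 1/p. Then sup_{0 ≤ s < t ≤ T} ‖f(t) − f(s)‖^p / (t − s)^{γ'p − 1} ≤ (8 · 4^{1/p} · (γ' + 1/p)/(γ' − 1/p))^p · ∫₀^T∫₀^T ‖f(x) − f(y)‖^p / |x − y|^{γ'p + 1} dx dy. In particular, the constant on the right-hand side does not depend on T. -/
open MeasureTheory Set Filter Topology
open scoped ENNReal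

section GRRAux

lemma grr_tele_bound {E : Type*} [PseudoMetricSpace E] (a : ℕ → E) (L : E) (b : ℝ)
    (ha : Tendsto a atTop (𝓝 L))
    (hb : ∀ K, ∑ k ∈ Finset.range K, dist (a k) (a (k+1)) ≤ b) :
    dist (a 0) L ≤ b := by
  have h1 : Tendsto (fun K => dist (a 0) (a K)) atTop (𝓝 (dist (a 0) L)) :=
    (tendsto_const_nhds.dist ha)
  exact le_of_tendsto h1 (Eventually.of_forall fun K =>
    (dist_le_range_sum_dist a K).trans (hb K))

lemma grr_const_ineq {β : ℝ} (hβ : 0 < β) : 4 / (1 - 2 ^ (-β) : ℝ) ≤ 8 * (β + 2) / β := by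
  have hx : (2:ℝ) ^ (-β) = ((2:ℝ) ^ β)⁻¹ := by
    rw [Real.rpow_neg (by norm_num)]
  have h2 : (1:ℝ) + β / 2 ≤ (2:ℝ) ^ β := by
    have hlog : (1:ℝ)/2 ≤ Real.log 2 := by
      have := Real.log_two_gt_d9
      linarith
    have := Real.add_one_le_exp (Real.log 2 * β)
    rw [Real.rpow_def_of_pos (by norm_num : (0:ℝ) < 2)]
    nlinarith [mul_le_mul_of_nonneg_right hlog hβ.le]
  have h2pos : (0:ℝ) < (2:ℝ) ^ β := Real.rpow_pos_of_pos (by norm_num) _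
  have hxlt : (2:ℝ) ^ (-β) < 1 := by
    rw [hx, inv_lt_one_iff₀]
    right; linarith
  have hden : (0:ℝ) < 1 - 2 ^ (-β) := by linarith
  rw [div_le_div_iff₀ hden hβ]
  have key : 2 * (β + 2) ≤ (β + 4) * (2:ℝ) ^ β := by nlinarith
  rw [hx]
  have : 8 * (β + 2) * ((2:ℝ)^β)⁻¹ ≤ 4 * (β + 4) := by
    rw [mul_inv_le_iff₀ h2pos]
    nlinarith
  nlinarith [mul_pos (by linarith : (0:ℝ) < 8 * (β+2)) (inv_pos.2 h2pos)]

lemma grr_geom_sum_le_inv {ρ : ℝ} (h0 : 0 ≤ ρ) (h1 : ρ < 1) (K : ℕ) :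
    ∑ k ∈ Finset.range K, ρ ^ k ≤ 1 / (1 - ρ) := by
  rw [geom_sum_eq h1.ne]
  have h2 : (ρ ^ K - 1) / (ρ - 1) = (1 - ρ ^ K) / (1 - ρ) := by
    rw [← neg_div_neg_eq]; ring_nf
  rw [h2, div_le_div_iff₀ (by linarith) (by linarith)]
  nlinarith [pow_nonneg h0 K]

lemma grr_step_algebra {F d θ p γ' : ℝ} (hF : 0 ≤ F) (hd : 0 < d) (hp0 : 0 < p)
    (hθ2 : θ = 2 ^ (-p)) (k : ℕ) :
    ((θ ^ k * d) ^ (γ' * p + 1) * F / (θ ^ (k + 1) * d * (θ ^ k * d))) ^ (1 / p)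
      = 2 * F ^ (1 / p) * (θ ^ k * d) ^ (γ' - 1 / p) := by
  have hθpos : 0 < θ := by rw [hθ2]; exact Real.rpow_pos_of_pos two_pos _
  set ℓ : ℝ := θ ^ k * d with hℓ
  have hℓpos : 0 < ℓ := by positivity
  have h1 : θ ^ (k + 1) * d * (θ ^ k * d) = θ * (ℓ * ℓ) := by rw [pow_succ]; ring
  have h2 : ℓ ^ (γ' * p + 1) = ℓ ^ (γ' * p - 1) * (ℓ * ℓ) := by
    rw [show γ' * p + 1 = (γ' * p - 1) + 2 by ring, Real.rpow_add hℓpos,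
      show (2:ℝ) = ((2:ℕ):ℝ) by norm_num, Real.rpow_natCast]
    ring
  have h3 : ℓ ^ (γ' * p + 1) * F / (θ ^ (k + 1) * d * (θ ^ k * d))
      = F / θ * ℓ ^ (γ' * p - 1) := by
    rw [h1, h2]; field_simp
  rw [h3, Real.mul_rpow (by positivity) (Real.rpow_nonneg hℓpos.le _),
    Real.div_rpow hF hθpos.le]
  rw [← Real.rpow_mul hℓpos.le]
  have h4 : (γ' * p - 1) * (1 / p) = γ' - 1 / p := by field_simp
  have h5 : θ ^ (1 / p) = 1 / 2 := by
    rw [hθ2, ← Real.rpow_mul (by norm_num : (0:ℝ) ≤ 2)]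
    rw [show -p * (1 / p) = -1 by field_simp]
    rw [Real.rpow_neg_one]; norm_num
  rw [h4, h5]
  ring

lemma grr_avg_diff_bound {B : Type*} [NormedAddCommGroup B] [NormedSpace ℝ B] [CompleteSpace B]
    {f : ℝ → B} {T : ℝ} (hf : ContinuousOn f (Icc 0 T))
    {p : ℝ} (hp : 1 ≤ p)
    {a c a' c' M : ℝ} (hac : a < c) (ha'c' : a' < c')
    (hs : Icc a c ⊆ Icc 0 T) (hs' : Icc a' c' ⊆ Icc 0 T)
    (hM : ∫ q in Icc a' c' ×ˢ Icc a c, ‖f q.1 - f q.2‖ ^ p ≤ M) :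
    ‖(c' - a')⁻¹ • (∫ x in Icc a' c', f x) - (c - a)⁻¹ • ∫ x in Icc a c, f x‖
      ≤ (M / ((c' - a') * (c - a))) ^ (1 / p) := by
  have hp0 : 0 < p := lt_of_lt_of_le one_pos hp
  set v : ℝ := c - a with hv
  set v' : ℝ := c' - a' with hv'
  have hvpos : 0 < v := by simp only [hv]; linarith
  have hv'pos : 0 < v' := by simp only [hv']; linarith
  set A : Set (ℝ × ℝ) := Icc a' c' ×ˢ Icc a c with hA
  set h : ℝ × ℝ → B := fun q => f q.1 - f q.2 with hh
  have hAc : IsCompact A := isCompact_Icc.prod isCompact_Icc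
  have hAm : MeasurableSet A := (measurableSet_Icc.prod measurableSet_Icc)
  have hcont : ContinuousOn h A := by
    apply ContinuousOn.sub
    · exact hf.comp continuous_fst.continuousOn (fun q hq => hs' hq.1)
    · exact hf.comp continuous_snd.continuousOn (fun q hq => hs hq.2)
  have hInt : IntegrableOn h A := hcont.integrableOn_compact hAc
  have hvolA : volume A = ENNReal.ofReal v' * ENNReal.ofReal v := by
    rw [hA, Measure.volume_eq_prod, Measure.prod_prod, Real.volume_Icc, Real.volume_Icc]
  have hvolA_lt : volume A < ⊤ := by
    rw [hvolA]; exact ENNReal.mul_lt_top ENNReal.ofReal_lt_top ENNReal.ofReal_lt_top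
  have hvolA_ne : volume A ≠ 0 := by
    rw [hvolA, mul_ne_zero_iff]
    simp [ENNReal.ofReal_eq_zero, not_le, hvpos, hv'pos]
  have hvolAtoReal : (volume A).toReal = v' * v := by
    rw [hvolA, ENNReal.toReal_mul, ENNReal.toReal_ofReal hv'pos.le,
      ENNReal.toReal_ofReal hvpos.le]
  have hfI : IntegrableOn f (Icc a c) := (hf.mono hs).integrableOn_compact isCompact_Icc
  have hfI' : IntegrableOn f (Icc a' c') := (hf.mono hs').integrableOn_compact isCompact_Icc
  have hIntProd : Integrable h ((volume.restrict (Icc a' c')).prod (volume.restrict (Icc a c))) := by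
    rw [Measure.prod_restrict, ← Measure.volume_eq_prod]; exact hInt
  have hfub : ∫ q in A, h q = v • (∫ x in Icc a' c', f x) - v' • ∫ y in Icc a c, f y := by
    rw [hA, Measure.volume_eq_prod, ← Measure.prod_restrict]
    rw [integral_prod _ hIntProd]
    have inner : ∀ x, (∫ y in Icc a c, (f x - f y)) = v • f x - ∫ y in Icc a c, f y := by
      intro x
      rw [integral_sub (integrable_const _) hfI, setIntegral_const, measureReal_def, Real.volume_Icc,
        ENNReal.toReal_ofReal hvpos.le]
    simp only [hh]
    rw [integral_congr_ae (Eventually.of_forall fun x => inner x)]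
    have hsmulInt : IntegrableOn (fun x => v • f x) (Icc a' c') := hfI'.smul v
    rw [integral_sub hsmulInt (integrable_const _), integral_smul,
      setIntegral_const, measureReal_def, Real.volume_Icc, ENNReal.toReal_ofReal hv'pos.le]
  have e1 : (v' * v)⁻¹ * v = v'⁻¹ := by field_simp
  have e2 : (v' * v)⁻¹ * v' = v⁻¹ := by field_simp
  have hdiff : (c' - a')⁻¹ • (∫ x in Icc a' c', f x) - (c - a)⁻¹ • (∫ x in Icc a c, f x)
      = (v' * v)⁻¹ • ∫ q in A, h q := by
    rw [hfub, smul_sub, smul_smul, smul_smul, e1, e2, ← hv, ← hv']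
  set μ : Measure (ℝ × ℝ) := volume.restrict A with hμ
  haveI : IsFiniteMeasure μ := ⟨by rw [hμ, Measure.restrict_apply_univ]; exact hvolA_lt⟩
  haveI : NeZero μ := ⟨by rw [hμ, Ne, Measure.restrict_eq_zero]; exact hvolA_ne⟩
  have hμuniv : (μ univ).toReal = v' * v := by rw [hμ, Measure.restrict_apply_univ, hvolAtoReal]
  have hnorm_le : ‖(v' * v)⁻¹ • ∫ q in A, h q‖ ≤ ⨍ q, ‖h q‖ ∂μ := by
    rw [average_eq, measureReal_def, hμuniv, norm_smul, norm_inv, Real.norm_of_nonneg (by positivity : (0:ℝ) ≤ v' * v),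
      smul_eq_mul]
    exact mul_le_mul_of_nonneg_left (norm_integral_le_integral_norm _)
      (by positivity)
  have hIntNorm : Integrable (fun q => ‖h q‖) μ := hInt.norm
  have hIntNormP : Integrable (fun q => ‖h q‖ ^ p) μ := by
    have hc : ContinuousOn (fun q => ‖h q‖ ^ p) A :=
      (Real.continuous_rpow_const hp0.le).comp_continuousOn hcont.norm
    exact hc.integrableOn_compact hAc
  have hjensen : (⨍ q, ‖h q‖ ∂μ) ^ p ≤ ⨍ q, ‖h q‖ ^ p ∂μ := by
    have := (convexOn_rpow hp).map_average_le
      (g := fun x : ℝ => x ^ p) (f := fun q => ‖h q‖) (μ := μ)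
      ((Real.continuous_rpow_const hp0.le).continuousOn) isClosed_Ici
      (Eventually.of_forall fun q => norm_nonneg _) hIntNorm hIntNormP
    simpa using this
  have havgP : (⨍ q, ‖h q‖ ^ p ∂μ) ≤ M / (v' * v) := by
    rw [average_eq, measureReal_def, hμuniv, smul_eq_mul, div_eq_inv_mul]
    apply mul_le_mul_of_nonneg_left _ (by positivity)
    exact hM
  have havg_nonneg : 0 ≤ ⨍ q, ‖h q‖ ∂μ := by
    rw [average_eq]
    exact smul_nonneg (by positivity) (integral_nonneg fun q => norm_nonneg _)
  calc ‖v'⁻¹ • (∫ x in Icc a' c', f x) - v⁻¹ • (∫ x in Icc a c, f x)‖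
      = ‖(v' * v)⁻¹ • ∫ q in A, h q‖ := by rw [hdiff]
    _ ≤ ⨍ q, ‖h q‖ ∂μ := hnorm_le
    _ = ((⨍ q, ‖h q‖ ∂μ) ^ p) ^ (1 / p) := by
        rw [← Real.rpow_mul havg_nonneg, mul_one_div, div_self hp0.ne', Real.rpow_one]
    _ ≤ (M / (v' * v)) ^ (1 / p) := by
        apply Real.rpow_le_rpow (Real.rpow_nonneg havg_nonneg p)
          (hjensen.trans havgP) (by positivity)

lemma grr_avg_tendsto {B : Type*} [NormedAddCommGroup B] [NormedSpace ℝ B] [CompleteSpace B]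
    {f : ℝ → B} {T : ℝ} (hf : ContinuousOn f (Icc 0 T))
    {e : ℝ} (he : e ∈ Icc 0 T)
    {w ℓ : ℕ → ℝ} (hℓpos : ∀ k, 0 < ℓ k) (hℓ0 : Tendsto ℓ atTop (𝓝 0))
    (hmem : ∀ k, e ∈ Icc (w k) (w k + ℓ k)) (hsub : ∀ k, Icc (w k) (w k + ℓ k) ⊆ Icc 0 T) :
    Tendsto (fun k => (ℓ k)⁻¹ • ∫ x in Icc (w k) (w k + ℓ k), f x) atTop (𝓝 (f e)) := by
  rw [Metric.tendsto_atTop]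
  intro ε hε
  have hc : ContinuousWithinAt f (Icc 0 T) e := hf e he
  rw [Metric.continuousWithinAt_iff] at hc
  obtain ⟨δ, hδ, hδ'⟩ := hc (ε/2) (by linarith)
  obtain ⟨N, hN⟩ := (Metric.tendsto_atTop.1 hℓ0) δ hδ
  refine ⟨N, fun k hk => ?_⟩
  have hℓk : |ℓ k| < δ := by
    have := hN k hk; simpa [Real.dist_eq] using this
  have hbound : ∀ x ∈ Icc (w k) (w k + ℓ k), ‖f x - f e‖ ≤ ε / 2 := by
    intro x hx
    have hxT : x ∈ Icc 0 T := hsub k hx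
    have hde : dist x e < δ := by
      rw [Real.dist_eq]
      have h1 := (hmem k).1; have h2 := (hmem k).2
      have := hx.1; have := hx.2
      rw [abs_lt]; rw [abs_lt] at hℓk
      constructor <;> linarith
    exact (le_of_lt (by simpa [dist_eq_norm] using hδ' hxT hde))
  have hfI : IntegrableOn f (Icc (w k) (w k + ℓ k)) :=
    (hf.mono (hsub k)).integrableOn_compact isCompact_Icc
  have hvol : (volume (Icc (w k) (w k + ℓ k))).toReal = ℓ k := by
    rw [Real.volume_Icc]; simp [ENNReal.toReal_ofReal (hℓpos k).le]
  have hkey : (ℓ k)⁻¹ • (∫ x in Icc (w k) (w k + ℓ k), f x) - f e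
      = (ℓ k)⁻¹ • ∫ x in Icc (w k) (w k + ℓ k), (f x - f e) := by
    rw [integral_sub hfI (integrable_const _), setIntegral_const, measureReal_def, hvol, smul_sub, smul_smul,
      inv_mul_cancel₀ (hℓpos k).ne', one_smul]
  rw [dist_eq_norm, hkey]
  have hnormint : ‖∫ x in Icc (w k) (w k + ℓ k), (f x - f e)‖ ≤ ε / 2 * (ℓ k) := by
    have := norm_setIntegral_le_of_norm_le_const (μ := volume)
      (s := Icc (w k) (w k + ℓ k)) (C := ε/2) (f := fun x => f x - f e)
      (by rw [Real.volume_Icc]; exact ENNReal.ofReal_lt_top) hbound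
    calc ‖∫ x in Icc (w k) (w k + ℓ k), (f x - f e)‖
        ≤ ε / 2 * (volume (Icc (w k) (w k + ℓ k))).toReal := this
      _ = ε / 2 * ℓ k := by rw [hvol]
  rw [norm_smul, norm_inv, Real.norm_of_nonneg (hℓpos k).le]
  calc (ℓ k)⁻¹ * ‖∫ x in Icc (w k) (w k + ℓ k), (f x - f e)‖
      ≤ (ℓ k)⁻¹ * (ε / 2 * ℓ k) := by
        exact mul_le_mul_of_nonneg_left hnormint (inv_nonneg.2 (hℓpos k).le)
    _ = ε / 2 := by
        rw [mul_comm (ε/2) (ℓ k), ← mul_assoc, inv_mul_cancel₀ (hℓpos k).ne', one_mul]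
    _ < ε := by linarith

lemma grr_interval_integral_bound {B : Type*} [NormedAddCommGroup B]
    {f : ℝ → B} {T p γ' : ℝ} (hf : ContinuousOn f (Icc 0 T)) (hp : 1 ≤ p)
    (he : 0 < γ' * p + 1) {G : ℝ≥0∞}
    (hG : (∫⁻ q in Icc (0:ℝ) T ×ˢ Icc (0:ℝ) T,
        ENNReal.ofReal (‖f q.1 - f q.2‖ ^ p / |q.1 - q.2| ^ (γ' * p + 1))) = G)
    (hGtop : G ≠ ⊤)
    {a c a' c' : ℝ} (hac : a ≤ c) (hsub' : Icc a' c' ⊆ Icc a c) (hsub : Icc a c ⊆ Icc 0 T) :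
    ∫ q in Icc a' c' ×ˢ Icc a c, ‖f q.1 - f q.2‖ ^ p
      ≤ (c - a) ^ (γ' * p + 1) * G.toReal := by
  have hp0 : 0 < p := lt_of_lt_of_le one_pos hp
  set K : Set (ℝ × ℝ) := Icc (0:ℝ) T ×ˢ Icc (0:ℝ) T with hK
  set Φ : ℝ × ℝ → ℝ := fun q => ‖f q.1 - f q.2‖ ^ p / |q.1 - q.2| ^ (γ' * p + 1) with hΦ
  set A : Set (ℝ × ℝ) := Icc a' c' ×ˢ Icc a c with hA
  have hKm : MeasurableSet K := measurableSet_Icc.prod measurableSet_Icc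
  have hAm : MeasurableSet A := measurableSet_Icc.prod measurableSet_Icc
  have hAK : A ⊆ K := prod_mono (hsub'.trans hsub) hsub
  have hnormc : ContinuousOn (fun q : ℝ × ℝ => ‖f q.1 - f q.2‖ ^ p) K := by
    apply (Real.continuous_rpow_const hp0.le).comp_continuousOn
    exact ((hf.comp continuous_fst.continuousOn (fun q hq => hq.1)).sub
      (hf.comp continuous_snd.continuousOn (fun q hq => hq.2))).norm
  have hdenc : Continuous (fun q : ℝ × ℝ => |q.1 - q.2| ^ (γ' * p + 1)) :=
    (Real.continuous_rpow_const he.le).comp (continuous_fst.sub continuous_snd).abs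
  have hΦaem : AEMeasurable Φ (volume.restrict K) :=
    (hnormc.aemeasurable hKm).div hdenc.measurable.aemeasurable
  have hΦnn : ∀ q, 0 ≤ Φ q := fun q =>
    div_nonneg (Real.rpow_nonneg (norm_nonneg _) _) (Real.rpow_nonneg (abs_nonneg _) _)
  have hΦint : IntegrableOn Φ K := by
    refine ⟨hΦaem.aestronglyMeasurable, ?_⟩
    rw [hasFiniteIntegral_iff_ofReal (ae_of_all _ hΦnn)]
    rw [hG]
    exact hGtop.lt_top
  have hΦeq : ∫ q in K, Φ q = G.toReal := by
    rw [integral_eq_lintegral_of_nonneg_ae (ae_of_all _ hΦnn) hΦaem.aestronglyMeasurable, hG]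
  have hpoint : ∀ q ∈ A, ‖f q.1 - f q.2‖ ^ p ≤ (c - a) ^ (γ' * p + 1) * Φ q := by
    intro q hq
    have h1 : q.1 ∈ Icc a c := hsub' hq.1
    have h2 : q.2 ∈ Icc a c := hq.2
    have habs : |q.1 - q.2| ≤ c - a := by
      rw [abs_sub_le_iff]; constructor <;>
        · have := h1.1; have := h1.2; have := h2.1; have := h2.2; linarith
    by_cases hq12 : q.1 = q.2
    · have hz : ‖f q.1 - f q.2‖ ^ p = 0 := by
        rw [hq12, sub_self, norm_zero, Real.zero_rpow hp0.ne']
      rw [hz]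
      exact mul_nonneg (Real.rpow_nonneg (by linarith [abs_nonneg (q.1-q.2), habs]) _) (hΦnn q)
    · have hd : 0 < |q.1 - q.2| := abs_pos.2 (sub_ne_zero.2 hq12)
      have hdp : 0 < |q.1 - q.2| ^ (γ' * p + 1) := Real.rpow_pos_of_pos hd _
      have hid : ‖f q.1 - f q.2‖ ^ p = Φ q * |q.1 - q.2| ^ (γ' * p + 1) := by
        rw [hΦ]; field_simp
      rw [hid, mul_comm ((c-a) ^ (γ' * p + 1)) (Φ q)]
      exact mul_le_mul_of_nonneg_left
        (Real.rpow_le_rpow (abs_nonneg _) habs he.le) (hΦnn q)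
  have hca : (0:ℝ) ≤ c - a := by linarith
  have hleftint : IntegrableOn (fun q : ℝ × ℝ => ‖f q.1 - f q.2‖ ^ p) A :=
    (hnormc.mono hAK).integrableOn_compact (isCompact_Icc.prod isCompact_Icc)
  have hrightint : IntegrableOn (fun q => (c - a) ^ (γ' * p + 1) * Φ q) A :=
    ((hΦint.mono_set hAK).const_mul _)
  calc ∫ q in A, ‖f q.1 - f q.2‖ ^ p
      ≤ ∫ q in A, (c - a) ^ (γ' * p + 1) * Φ q :=
        setIntegral_mono_on hleftint hrightint hAm hpoint
    _ = (c - a) ^ (γ' * p + 1) * ∫ q in A, Φ q := by rw [MeasureTheory.integral_const_mul]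
    _ ≤ (c - a) ^ (γ' * p + 1) * ∫ q in K, Φ q := by
        apply mul_le_mul_of_nonneg_left _ (Real.rpow_nonneg hca _)
        exact setIntegral_mono_set hΦint (ae_of_all _ hΦnn) (HasSubset.Subset.eventuallyLE hAK)
    _ = (c - a) ^ (γ' * p + 1) * G.toReal := by rw [hΦeq]

end GRRAux
theorem grr_sup_bound_T_complete
    {B : Type*} [NormedAddCommGroup B] [NormedSpace ℝ B] [CompleteSpace B]
    (T : ℝ) (hT : 0 < T)
    (f : ℝ → B) (hf : ContinuousOn f (Icc 0 T))
    (p γ' : ℝ) (hp : 1 ≤ p) (hγ' : 1 / p < γ') :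
    (⨆ (s : ℝ) (t : ℝ) (_ : 0 ≤ s) (_ : s < t) (_ : t ≤ T),
        ENNReal.ofReal (‖f t - f s‖ ^ p / (t - s) ^ (γ' * p - 1))) ≤
      ENNReal.ofReal ((8 * 4 ^ (1 / p) * ((γ' + 1 / p) / (γ' - 1 / p))) ^ p) *
        ∫⁻ q in Icc (0:ℝ) T ×ˢ Icc (0:ℝ) T,
          ENNReal.ofReal (‖f q.1 - f q.2‖ ^ p / |q.1 - q.2| ^ (γ' * p + 1)) := by
  have hp0 : 0 < p := lt_of_lt_of_le one_pos hp
  have h1p : 0 < 1 / p := by positivity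
  have hα : 0 < γ' - 1 / p := by linarith
  have hγ'pos : 0 < γ' := lt_trans h1p hγ'
  have hβpos : 0 < γ' * p - 1 := by
    have h1 : (1:ℝ) / p * p = 1 := by field_simp
    nlinarith [mul_lt_mul_of_pos_right hγ' hp0]
  have hγp1 : 0 < γ' * p + 1 := by linarith
  set C : ℝ := 8 * 4 ^ (1 / p) * ((γ' + 1 / p) / (γ' - 1 / p)) with hCdef
  have hCpos : 0 < C := by
    apply mul_pos (mul_pos (by norm_num) (Real.rpow_pos_of_pos (by norm_num) _))
    exact div_pos (by linarith) hα
  set G : ℝ≥0∞ := ∫⁻ q in Icc (0:ℝ) T ×ˢ Icc (0:ℝ) T,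
      ENNReal.ofReal (‖f q.1 - f q.2‖ ^ p / |q.1 - q.2| ^ (γ' * p + 1)) with hGdef
  by_cases hGtop : G = ⊤
  · rw [hGtop, ENNReal.mul_top
      (ENNReal.ofReal_pos.2 (Real.rpow_pos_of_pos hCpos p)).ne']
    exact le_top
  refine iSup_le fun s => iSup_le fun t => iSup_le fun hs => iSup_le fun hst =>
    iSup_le fun htT => ?_
  -- setup
  set d : ℝ := t - s with hddef
  have hd : 0 < d := by simp only [hddef]; linarith
  set θ : ℝ := (2:ℝ) ^ (-p) with hθdef
  have hθpos : 0 < θ := Real.rpow_pos_of_pos (by norm_num) _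
  have hθlt1 : θ < 1 :=
    Real.rpow_lt_one_of_one_lt_of_neg (by norm_num) (by linarith)
  set ℓ : ℕ → ℝ := fun k => θ ^ k * d with hℓdef
  have hℓpos : ∀ k, 0 < ℓ k := fun k => mul_pos (pow_pos hθpos k) hd
  have hℓled : ∀ k, ℓ k ≤ d := fun k =>
    mul_le_of_le_one_left hd.le (pow_le_one₀ hθpos.le hθlt1.le)
  have hℓanti : ∀ k, ℓ (k+1) ≤ ℓ k := fun k =>
    mul_le_mul_of_nonneg_right (pow_le_pow_of_le_one hθpos.le hθlt1.le (Nat.le_succ k)) hd.le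
  have hℓ0 : Tendsto ℓ atTop (𝓝 0) := by
    have h := (tendsto_pow_atTop_nhds_zero_of_lt_one hθpos.le hθlt1).mul_const d
    simpa [hℓdef] using h
  set F : ℝ := G.toReal with hFdef
  have hF0 : 0 ≤ F := ENNReal.toReal_nonneg
  set ρ : ℝ := θ ^ (γ' - 1 / p) with hρdef
  have hρpos : 0 < ρ := Real.rpow_pos_of_pos hθpos _
  have hρlt1 : ρ < 1 := Real.rpow_lt_one hθpos.le hθlt1 hα
  set S : ℝ := 2 * F ^ (1 / p) * d ^ (γ' - 1 / p) * (1 / (1 - ρ)) with hSdef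
  have hℓpow : ∀ k, (ℓ k) ^ (γ' - 1 / p) = d ^ (γ' - 1 / p) * ρ ^ k := by
    intro k
    rw [hℓdef]
    simp only
    rw [Real.mul_rpow (pow_nonneg hθpos.le k) hd.le, mul_comm]
    congr 1
    rw [← Real.rpow_natCast θ k, ← Real.rpow_mul hθpos.le, mul_comm (k:ℝ) _,
      Real.rpow_mul hθpos.le, Real.rpow_natCast, hρdef]
  -- the one-sided estimate
  have side : ∀ w : ℕ → ℝ, ∀ e : ℝ,
      (∀ k, 0 ≤ w k) → (∀ k, w k + ℓ k ≤ T) →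
      (∀ k, w k ≤ w (k+1)) → (∀ k, w (k+1) + ℓ (k+1) ≤ w k + ℓ k) →
      (∀ k, e ∈ Icc (w k) (w k + ℓ k)) →
      dist ((ℓ 0)⁻¹ • ∫ x in Icc (w 0) (w 0 + ℓ 0), f x) (f e) ≤ S := by
    intro w e hw_lb hw_ub hnest1 hnest2 he_mem
    set A : ℕ → B := fun k => (ℓ k)⁻¹ • ∫ x in Icc (w k) (w k + ℓ k), f x with hAdef
    have hsubT : ∀ k, Icc (w k) (w k + ℓ k) ⊆ Icc 0 T := fun k =>
      Icc_subset_Icc (hw_lb k) (hw_ub k)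
    have htend : Tendsto A atTop (𝓝 (f e)) :=
      grr_avg_tendsto hf (hsubT 0 (he_mem 0)) hℓpos hℓ0 he_mem hsubT
    have hstep : ∀ k, dist (A k) (A (k+1)) ≤ 2 * F ^ (1 / p) * (ℓ k) ^ (γ' - 1 / p) := by
      intro k
      have hsub' : Icc (w (k+1)) (w (k+1) + ℓ (k+1)) ⊆ Icc (w k) (w k + ℓ k) :=
        Icc_subset_Icc (hnest1 k) (hnest2 k)
      have hac : w k < w k + ℓ k := by linarith [hℓpos k]
      have hac' : w (k+1) < w (k+1) + ℓ (k+1) := by linarith [hℓpos (k+1)]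
      have hM := grr_interval_integral_bound hf hp hγp1 hGdef.symm hGtop hac.le hsub' (hsubT k)
      have hMeq : w k + ℓ k - w k = ℓ k := by ring
      rw [hMeq] at hM
      have hb := grr_avg_diff_bound hf hp hac hac' (hsubT k) (hsub'.trans (hsubT k)) hM
      rw [dist_comm, dist_eq_norm]
      have hd1 : w (k+1) + ℓ (k+1) - w (k+1) = ℓ (k+1) := by ring
      rw [hd1, hMeq] at hb
      refine hb.trans_eq ?_
      have := grr_step_algebra (F := F) (d := d) (θ := θ) (γ' := γ') hF0 hd hp0 hθdef k
      simpa [hℓdef] using this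
    have hsum : ∀ K, ∑ k ∈ Finset.range K, dist (A k) (A (k+1)) ≤ S := by
      intro K
      calc ∑ k ∈ Finset.range K, dist (A k) (A (k+1))
          ≤ ∑ k ∈ Finset.range K, 2 * F ^ (1 / p) * (ℓ k) ^ (γ' - 1 / p) :=
            Finset.sum_le_sum fun k _ => hstep k
        _ = 2 * F ^ (1 / p) * d ^ (γ' - 1 / p) * ∑ k ∈ Finset.range K, ρ ^ k := by
            rw [Finset.mul_sum]
            apply Finset.sum_congr rfl
            intro k _
            rw [hℓpow k]; ring
        _ ≤ 2 * F ^ (1 / p) * d ^ (γ' - 1 / p) * (1 / (1 - ρ)) := by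
            apply mul_le_mul_of_nonneg_left (grr_geom_sum_le_inv hρpos.le hρlt1 K)
            positivity
        _ = S := hSdef.symm
    exact grr_tele_bound A (f e) S htend hsum
  -- instantiate both sides
  have hdd : d = t - s := hddef
  have hside_t : dist ((ℓ 0)⁻¹ • ∫ x in Icc (t - ℓ 0) (t - ℓ 0 + ℓ 0), f x) (f t) ≤ S := by
    apply side (fun k => t - ℓ k) t
    · intro k; show (0:ℝ) ≤ t - ℓ k; have := hℓled k; linarith
    · intro k; show t - ℓ k + ℓ k ≤ T; linarith
    · intro k; show t - ℓ k ≤ t - ℓ (k+1); linarith [hℓanti k]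
    · intro k; show t - ℓ (k+1) + ℓ (k+1) ≤ t - ℓ k + ℓ k; linarith
    · intro k
      refine ⟨?_, ?_⟩
      · show t - ℓ k ≤ t; linarith [hℓpos k]
      · show t ≤ t - ℓ k + ℓ k; linarith
  have hside_s : dist ((ℓ 0)⁻¹ • ∫ x in Icc s (s + ℓ 0), f x) (f s) ≤ S := by
    apply side (fun _ => s) s
    · intro k; exact hs
    · intro k; show s + ℓ k ≤ T; have := hℓled k; linarith
    · intro k; exact le_refl s
    · intro k; show s + ℓ (k+1) ≤ s + ℓ k; linarith [hℓanti k]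
    · intro k
      refine ⟨le_refl s, ?_⟩
      show s ≤ s + ℓ k; linarith [hℓpos k]
  have hA0eq : t - ℓ 0 = s := by
    simp only [hℓdef, pow_zero, one_mul, hddef]; ring
  have hnormts : ‖f t - f s‖ ≤ 2 * S := by
    rw [hA0eq] at hside_t
    have htri := dist_triangle (f t) ((ℓ 0)⁻¹ • ∫ x in Icc s (s + ℓ 0), f x) (f s)
    have h1 : dist (f t) ((ℓ 0)⁻¹ • ∫ x in Icc s (s + ℓ 0), f x) ≤ S := by
      rw [dist_comm]; exact hside_t
    rw [← dist_eq_norm]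
    calc dist (f t) (f s)
        ≤ dist (f t) ((ℓ 0)⁻¹ • ∫ x in Icc s (s + ℓ 0), f x)
          + dist ((ℓ 0)⁻¹ • ∫ x in Icc s (s + ℓ 0), f x) (f s) := htri
      _ ≤ S + S := add_le_add h1 hside_s
      _ = 2 * S := by ring
  -- final real computation
  have h1ρ : 0 < 1 - ρ := by linarith
  have hnorm2 : ‖f t - f s‖ ≤ 4 / (1 - ρ) * (F ^ (1 / p) * d ^ (γ' - 1 / p)) := by
    refine hnormts.trans_eq ?_
    rw [hSdef]; field_simp; ring
  have hρ2β : ρ = 2 ^ (-(γ' * p - 1)) := by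
    rw [hρdef, hθdef, ← Real.rpow_mul (by norm_num : (0:ℝ) ≤ 2)]
    congr 1; field_simp
  have hconst : 4 / (1 - ρ) ≤ C := by
    rw [hρ2β]
    refine (grr_const_ineq hβpos).trans ?_
    have hratio : (γ' + 1 / p) / (γ' - 1 / p) = (γ' * p - 1 + 2) / (γ' * p - 1) := by
      rw [div_eq_div_iff (by linarith) (by linarith)]
      field_simp
      ring
    rw [hCdef, hratio]
    have h41 : (1:ℝ) ≤ 4 ^ (1 / p) := Real.one_le_rpow (by norm_num) h1p.le
    have hfrac : 0 ≤ (γ' * p - 1 + 2) / (γ' * p - 1) :=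
      div_nonneg (by linarith) hβpos.le
    calc 8 * (γ' * p - 1 + 2) / (γ' * p - 1)
        = 8 * 1 * ((γ' * p - 1 + 2) / (γ' * p - 1)) := by ring
      _ ≤ 8 * 4 ^ (1 / p) * ((γ' * p - 1 + 2) / (γ' * p - 1)) := by
          apply mul_le_mul_of_nonneg_right _ hfrac
          nlinarith
  have hCnn : 0 ≤ 4 / (1 - ρ) := by positivity
  have hrpow_norm : ‖f t - f s‖ ^ p ≤ C ^ p * (F * d ^ (γ' * p - 1)) := by
    calc ‖f t - f s‖ ^ p
        ≤ (4 / (1 - ρ) * (F ^ (1 / p) * d ^ (γ' - 1 / p))) ^ p :=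
          Real.rpow_le_rpow (norm_nonneg _) hnorm2 hp0.le
      _ = (4 / (1 - ρ)) ^ p * (F * d ^ (γ' * p - 1)) := by
          rw [Real.mul_rpow hCnn (by positivity),
            Real.mul_rpow (Real.rpow_nonneg hF0 _) (Real.rpow_nonneg hd.le _),
            ← Real.rpow_mul hF0, ← Real.rpow_mul hd.le]
          rw [show 1 / p * p = 1 by field_simp, Real.rpow_one,
            show (γ' - 1 / p) * p = γ' * p - 1 by field_simp]
      _ ≤ C ^ p * (F * d ^ (γ' * p - 1)) := by
          apply mul_le_mul_of_nonneg_right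
            (Real.rpow_le_rpow hCnn hconst hp0.le)
          positivity
  have hfinalreal : ‖f t - f s‖ ^ p / d ^ (γ' * p - 1) ≤ C ^ p * F := by
    rw [div_le_iff₀ (Real.rpow_pos_of_pos hd _)]
    calc ‖f t - f s‖ ^ p ≤ C ^ p * (F * d ^ (γ' * p - 1)) := hrpow_norm
      _ = C ^ p * F * d ^ (γ' * p - 1) := by ring
  calc ENNReal.ofReal (‖f t - f s‖ ^ p / d ^ (γ' * p - 1))
      ≤ ENNReal.ofReal (C ^ p * F) := ENNReal.ofReal_le_ofReal hfinalreal
    _ = ENNReal.ofReal (C ^ p) * ENNReal.ofReal F :=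
        ENNReal.ofReal_mul (Real.rpow_nonneg hCpos.le _)
    _ = ENNReal.ofReal (C ^ p) * G := by rw [hFdef, ENNReal.ofReal_toReal hGtop]

/-- GRR-type supremum bound on `[0,T]`, with constant independent of `T`. -/
theorem grr_sup_bound_T
    {B : Type*} [NormedAddCommGroup B] [NormedSpace ℝ B]
    (T : ℝ) (hT : 0 < T)
    (f : ℝ → B) (hf : ContinuousOn f (Icc 0 T))
    (p γ' : ℝ) (hp : 1 ≤ p) (hγ' : 1 / p < γ') :
    (⨆ (s : ℝ) (t : ℝ) (_ : 0 ≤ s) (_ : s < t) (_ : t ≤ T),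
        ENNReal.ofReal (‖f t - f s‖ ^ p / (t - s) ^ (γ' * p - 1))) ≤
      ENNReal.ofReal ((8 * 4 ^ (1 / p) * ((γ' + 1 / p) / (γ' - 1 / p))) ^ p) *
        ∫⁻ q in Icc (0:ℝ) T ×ˢ Icc (0:ℝ) T,
          ENNReal.ofReal (‖f q.1 - f q.2‖ ^ p / |q.1 - q.2| ^ (γ' * p + 1)) := by
  set g : ℝ → UniformSpace.Completion B := fun x => (f x : UniformSpace.Completion B) with hgdef
  have hg : ContinuousOn g (Icc 0 T) :=
    (UniformSpace.Completion.continuous_coe B).comp_continuousOn hf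
  have hnorm : ∀ x y : ℝ, ‖g x - g y‖ = ‖f x - f y‖ := by
    intro x y
    rw [hgdef]
    simp only
    rw [← UniformSpace.Completion.coe_sub, UniformSpace.Completion.norm_coe]
  have key := grr_sup_bound_T_complete T hT g hg p γ' hp hγ'
  have e1 : (⨆ (s : ℝ) (t : ℝ) (_ : 0 ≤ s) (_ : s < t) (_ : t ≤ T),
        ENNReal.ofReal (‖f t - f s‖ ^ p / (t - s) ^ (γ' * p - 1)))
      = (⨆ (s : ℝ) (t : ℝ) (_ : 0 ≤ s) (_ : s < t) (_ : t ≤ T),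
        ENNReal.ofReal (‖g t - g s‖ ^ p / (t - s) ^ (γ' * p - 1))) := by
    apply iSup_congr; intro s
    apply iSup_congr; intro t
    apply iSup_congr; intro _
    apply iSup_congr; intro _
    apply iSup_congr; intro _
    rw [hnorm t s]
  have e2 : (∫⁻ q in Icc (0:ℝ) T ×ˢ Icc (0:ℝ) T,
          ENNReal.ofReal (‖f q.1 - f q.2‖ ^ p / |q.1 - q.2| ^ (γ' * p + 1)))
      = ∫⁻ q in Icc (0:ℝ) T ×ˢ Icc (0:ℝ) T,
          ENNReal.ofReal (‖g q.1 - g q.2‖ ^ p / |q.1 - q.2| ^ (γ' * p + 1)) := by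
    apply lintegral_congr
    intro q
    rw [hnorm q.1 q.2]
  rw [e1, e2]
  exact key
end

section
/- Let (Ω, 𝔽, P) be a probability space, (B, ‖·‖) a separable Banach space, T > 0, and let X : Ω × [0,T] → B be a stochastic process with continuous sample paths such that each X_t is measurable. Let λ ∈ (0,1), γ ∈ (0, λ/2), set γ' := (γ + λ/2)/2, and let p be a real number with p > max(1/γ', 2/(λ/2 − γ)). Assume there is A > 0 such that E[‖X_t − X_s‖^p] ≤ A^p |t − s|^{λp/2} for all 0 ≤ s < t ≤ T. Then E[ sup_{0 ≤ s < t ≤ T} ‖X_t − X_s‖^p / (t − s)^{γp} ] ≤ T^{(λ/2 − γ)p} · (8 · 4^{1/p} · (γ' + 1/p)/(γ' − 1/p))^p · A^p. -/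
open MeasureTheory Set
open scoped ENNReal

set_option maxHeartbeats 2000000

namespace GRRProofAux

lemma markov_strict {h : ℝ → ℝ≥0∞} (S : Set ℝ) (hh : Measurable h) {L : ℝ≥0∞}
    {a M : ℝ} (ha : 0 < a) (hM : 0 < M)
    (hint : ∫⁻ s in S, h s ≤ L) (hL : L < ENNReal.ofReal (a * M)) :
    volume {s | s ∈ S ∧ ENNReal.ofReal a ≤ h s} < ENNReal.ofReal M := by
  have hmeas : MeasurableSet {x | ENNReal.ofReal a ≤ h x} :=
    measurableSet_le measurable_const hh
  have hset : {s | s ∈ S ∧ ENNReal.ofReal a ≤ h s} = {x | ENNReal.ofReal a ≤ h x} ∩ S := by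
    ext x; simp [and_comm]
  have key : ENNReal.ofReal a * volume {s | s ∈ S ∧ ENNReal.ofReal a ≤ h s}
      ≤ ∫⁻ s in S, h s := by
    rw [hset, ← Measure.restrict_apply hmeas]
    exact mul_meas_ge_le_lintegral₀ hh.aemeasurable _
  have h2 : ENNReal.ofReal a * volume {s | s ∈ S ∧ ENNReal.ofReal a ≤ h s}
      < ENNReal.ofReal a * ENNReal.ofReal M := by
    calc ENNReal.ofReal a * volume {s | s ∈ S ∧ ENNReal.ofReal a ≤ h s} ≤ L := key.trans hint
    _ < _ := by rwa [← ENNReal.ofReal_mul ha.le]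
  exact lt_of_mul_lt_mul_left' h2

lemma two_rpow_bound {x : ℝ} (hx0 : 0 ≤ x) (hx1 : x ≤ 1) : (2:ℝ) ^ (-x) ≤ 1 - x / 2 := by
  have h := convexOn_exp.2 (mem_univ (0:ℝ)) (mem_univ (-Real.log 2))
    (by linarith : (0:ℝ) ≤ 1 - x) hx0 (by ring)
  simp only [smul_eq_mul, mul_zero, zero_add, Real.exp_zero, mul_one] at h
  rw [Real.exp_neg, Real.exp_log (by norm_num : (0:ℝ) < 2)] at h
  rw [Real.rpow_def_of_pos (by norm_num : (0:ℝ) < 2)]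
  calc Real.exp (Real.log 2 * (-x)) = Real.exp (x * (-Real.log 2)) := by ring_nf
  _ ≤ (1-x) + x * 2⁻¹ := h
  _ = 1 - x/2 := by ring

lemma lint_Ioo_shift (g : ℝ → ℝ≥0∞) (a u v : ℝ) :
    ∫⁻ s in Ioo u v, g (s + a) = ∫⁻ s in Ioo (u+a) (v+a), g s := by
  have h : MeasurePreserving (fun x : ℝ => x + a) volume volume :=
    measurePreserving_add_right volume a
  have he : MeasurableEmbedding (fun x : ℝ => x + a) :=
    (Homeomorph.addRight a).measurableEmbedding
  have hpre : (fun x : ℝ => x + a) ⁻¹' Ioo (u+a) (v+a) = Ioo u v := by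
    ext x; simp only [mem_preimage, mem_Ioo]
    constructor <;> (intro hx; constructor <;> linarith [hx.1, hx.2])
  rw [← hpre]
  exact h.setLIntegral_comp_preimage_emb he _ _

lemma lint_Ioo_reflect (g : ℝ → ℝ≥0∞) (a u v : ℝ) :
    ∫⁻ s in Ioo u v, g (a - s) = ∫⁻ s in Ioo (a - v) (a - u), g s := by
  have h : MeasurePreserving (fun x : ℝ => a - x) volume volume :=
    Measure.measurePreserving_sub_left volume a
  have he : MeasurableEmbedding (fun x : ℝ => a - x) := by
    have : (fun x : ℝ => a - x) = fun x : ℝ => a + (-x) := by ext x; ring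
    rw [this]
    exact ((Homeomorph.neg ℝ).trans (Homeomorph.addLeft a)).measurableEmbedding
  have hpre : (fun x : ℝ => a - x) ⁻¹' Ioo (a-v) (a-u) = Ioo u v := by
    ext x; simp only [mem_preimage, mem_Ioo]
    constructor <;> (intro hx; constructor <;> linarith [hx.1, hx.2])
  rw [← hpre]
  exact h.setLIntegral_comp_preimage_emb he _ _


section GRRDet

variable {E : Type*} [NormedAddCommGroup E]

lemma grr_meas (f : ℝ → E) (hf : Continuous f) (p κ : ℝ) (hp : 0 < p) (hκ : 0 < κ) :
    Measurable (fun z : ℝ × ℝ =>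
      ENNReal.ofReal (‖f z.1 - f z.2‖ ^ p / |z.1 - z.2| ^ (κ * p))) := by
  apply Measurable.ennreal_ofReal
  apply Measurable.div
  · exact (((hf.comp continuous_fst).sub (hf.comp continuous_snd)).norm.rpow_const
      (fun x => Or.inr hp.le)).measurable
  · exact (((continuous_fst.sub continuous_snd).abs).rpow_const
      (fun x => Or.inr (by positivity))).measurable

lemma grr_half (f : ℝ → E) (hf : Continuous f)
    (l p κ Bv Bv' : ℝ) (hl : 0 < l) (hp : 0 < p) (hκ : 2 / p < κ)
    (hBv : 0 ≤ Bv) (hBB : Bv < Bv')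
    (hB : ∫⁻ t in Ioo 0 l, ∫⁻ s in Ioo 0 l,
        ENNReal.ofReal (‖f t - f s‖ ^ p / |t - s| ^ (κ * p)) ∂volume ∂volume
        ≤ ENNReal.ofReal Bv)
    (x0 : ℝ) (hx01 : 0 < x0) (hx02 : x0 < l)
    (hJ0 : ∫⁻ s in Ioo 0 l, ENNReal.ofReal (‖f x0 - f s‖ ^ p / |x0 - s| ^ (κ * p))
        < ENNReal.ofReal (2 * Bv' / ((2:ℝ) ^ (-(1/κ)) * x0))) :
    ‖f x0 - f 0‖ ≤ 4 * (4 * Bv') ^ (1/p) * (κ / (κ - 2/p)) * l ^ (κ - 2/p) := by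
  have hp2 : (0:ℝ) < 2/p := by positivity
  have hκ0 : 0 < κ := hp2.trans hκ
  set c : ℝ := (2:ℝ) ^ (-(1/κ)) with hc
  have hc0 : 0 < c := Real.rpow_pos_of_pos (by norm_num) _
  have hc1 : c < 1 := Real.rpow_lt_one_of_one_lt_of_neg (by norm_num) (neg_lt_zero.mpr (by positivity))
  have hBv'0 : 0 < Bv' := lt_of_le_of_lt hBv hBB
  set G : ℝ × ℝ → ℝ≥0∞ :=
    (fun z : ℝ × ℝ => ENNReal.ofReal (‖f z.1 - f z.2‖ ^ p / |z.1 - z.2| ^ (κ * p))) with hG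
  have hGm : Measurable G := grr_meas f hf p κ hp hκ0
  set J : ℝ → ℝ≥0∞ :=
    (fun t => ∫⁻ s in Ioo 0 l, ENNReal.ofReal (‖f t - f s‖ ^ p / |t - s| ^ (κ * p))) with hJ
  have hJm : Measurable J := by
    have : J = fun t => ∫⁻ s, G (t, s) ∂(volume.restrict (Ioo 0 l)) := rfl
    rw [this]
    exact Measurable.lintegral_prod_right hGm
  -- step existence
  have step_ex : ∀ x : ℝ, 0 < x → x < l → J x < ENNReal.ofReal (2*Bv'/(c*x)) →
      ∃ y, (0 < y ∧ y < c * x) ∧ J y < ENNReal.ofReal (2*Bv'/(c*y)) ∧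
        ‖f x - f y‖ ^ p ≤ 4*Bv'/(c*x)^2 * (x - y) ^ (κ*p) := by
    intro x hx0' hxl hJx
    have hd0 : 0 < c * x := mul_pos hc0 hx0'
    have hdx : c * x < x := by nlinarith
    have hdl : c * x < l := hdx.trans hxl
    have hBint : ∫⁻ s in Ioo 0 (c*x), J s ≤ ENNReal.ofReal Bv :=
      le_trans (lintegral_mono_set (Ioo_subset_Ioo le_rfl hdl.le)) hB
    have hbad1 : volume {s | s ∈ Ioo 0 (c*x) ∧ ENNReal.ofReal (2*Bv'/(c*x)) ≤ J s}
        < ENNReal.ofReal ((c*x)/2) := by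
      refine markov_strict _ hJm (by positivity) (by positivity) hBint ?_
      have he : 2*Bv'/(c*x) * ((c*x)/2) = Bv' := by field_simp
      rw [he]
      exact (ENNReal.ofReal_lt_ofReal_iff hBv'0).mpr hBB
    have hH2m : Measurable (fun s : ℝ => G (x, s)) :=
      hGm.comp (measurable_const.prodMk measurable_id)
    have hH2int : ∫⁻ s in Ioo 0 (c*x), G (x, s) ≤ J x :=
      lintegral_mono_set (Ioo_subset_Ioo le_rfl hdl.le)
    have hbad2 : volume {s | s ∈ Ioo 0 (c*x) ∧ ENNReal.ofReal (4*Bv'/(c*x)^2) ≤ G (x, s)}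
        < ENNReal.ofReal ((c*x)/2) := by
      refine markov_strict _ hH2m (by positivity) (by positivity) hH2int ?_
      have he : 4*Bv'/(c*x)^2 * ((c*x)/2) = 2*Bv'/(c*x) := by field_simp; ring
      rw [he]; exact hJx
    -- pick y
    have hex : ∃ y, y ∈ Ioo 0 (c*x) ∧ ¬ (ENNReal.ofReal (2*Bv'/(c*x)) ≤ J y)
        ∧ ¬ (ENNReal.ofReal (4*Bv'/(c*x)^2) ≤ G (x, y)) := by
      by_contra hcon
      push_neg at hcon
      have hsub : Ioo 0 (c*x) ⊆ {s | s ∈ Ioo 0 (c*x) ∧ ENNReal.ofReal (2*Bv'/(c*x)) ≤ J s}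
          ∪ {s | s ∈ Ioo 0 (c*x) ∧ ENNReal.ofReal (4*Bv'/(c*x)^2) ≤ G (x, s)} := by
        intro y hy
        by_cases h1 : ENNReal.ofReal (2*Bv'/(c*x)) ≤ J y
        · exact Or.inl ⟨hy, h1⟩
        · exact Or.inr ⟨hy, hcon y hy (not_le.mp h1)⟩
      have hle := (measure_mono (μ := volume) hsub).trans (measure_union_le _ _)
      have hlt := lt_of_le_of_lt hle (ENNReal.add_lt_add hbad1 hbad2)
      rw [← ENNReal.ofReal_add (by positivity) (by positivity)] at hlt
      rw [Real.volume_Ioo, sub_zero] at hlt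
      have : (c*x)/2 + (c*x)/2 = c*x := by ring
      rw [this] at hlt
      exact lt_irrefl _ hlt
    obtain ⟨y, hy, hy1, hy2⟩ := hex
    rw [not_le] at hy1 hy2
    refine ⟨y, ⟨hy.1, hy.2⟩, ?_, ?_⟩
    · refine lt_of_lt_of_le hy1 (ENNReal.ofReal_le_ofReal ?_)
      have hcy : 0 < c * y := mul_pos hc0 hy.1
      apply div_le_div_of_nonneg_left (by positivity) hcy
      nlinarith [hy.2]
    · have h2 : G (x, y) < ENNReal.ofReal (4*Bv'/(c*x)^2) := hy2
      rw [hG] at h2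
      simp only at h2
      rw [ENNReal.ofReal_lt_ofReal_iff (by positivity)] at h2
      have hyx : y < x := hy.2.trans hdx
      have habs : |x - y| = x - y := abs_of_pos (by linarith)
      rw [habs] at h2
      have hpow : (0:ℝ) < (x - y) ^ (κ*p) := Real.rpow_pos_of_pos (by linarith) _
      calc ‖f x - f y‖ ^ p = (‖f x - f y‖ ^ p/(x-y)^(κ*p)) * (x-y)^(κ*p) := by
            field_simp
        _ ≤ 4*Bv'/(c*x)^2 * (x-y)^(κ*p) := mul_le_mul_of_nonneg_right h2.le hpow.le

  -- the recursive sequence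
  have hstate : ∀ z : {x : ℝ // 0 < x ∧ x < l ∧ J x < ENNReal.ofReal (2*Bv'/(c*x))},
      ∃ w : {x : ℝ // 0 < x ∧ x < l ∧ J x < ENNReal.ofReal (2*Bv'/(c*x))},
        (w:ℝ) < c*(z:ℝ) ∧ ‖f (z:ℝ) - f (w:ℝ)‖^p ≤ 4*Bv'/(c*(z:ℝ))^2 * ((z:ℝ)-(w:ℝ))^(κ*p) := by
    rintro ⟨x, hx1, hx2, hx3⟩
    obtain ⟨y, ⟨hy1, hy2⟩, hy3, hy4⟩ := step_ex x hx1 hx2 hx3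
    have hcx : c * x < x := by nlinarith
    exact ⟨⟨y, hy1, (hy2.trans hcx).trans hx2, hy3⟩, hy2, hy4⟩
  choose nxt hn1 hn2 using hstate
  have hJ0' : J x0 < ENNReal.ofReal (2*Bv'/(c*x0)) := hJ0
  set z0 : {x : ℝ // 0 < x ∧ x < l ∧ J x < ENNReal.ofReal (2*Bv'/(c*x))} :=
    ⟨x0, hx01, hx02, hJ0'⟩ with hz0
  set u : ℕ → {x : ℝ // 0 < x ∧ x < l ∧ J x < ENNReal.ofReal (2*Bv'/(c*x))} :=
    fun n => nxt^[n] z0 with hudef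
  have hu : ∀ n, u (n+1) = nxt (u n) := fun n => Function.iterate_succ_apply' nxt n z0
  set v : ℕ → ℝ := fun n => (u n : ℝ) with hvdef
  have hv0 : v 0 = x0 := rfl
  have hvpos : ∀ n, 0 < v n := fun n => (u n).2.1
  have hvl : ∀ n, v n < l := fun n => (u n).2.2.1
  have hdec : ∀ n, v (n+1) < c * v n := by
    intro n
    have h := hn1 (u n)
    rw [← hu n] at h
    exact h
  have hterm : ∀ n, ‖f (v n) - f (v (n+1))‖^p ≤ 4*Bv'/(c* v n)^2 * (v n - v (n+1))^(κ*p) := by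
    intro n
    have h := hn2 (u n)
    rw [← hu n] at h
    exact h
  have hgeo : ∀ n, v n ≤ c^n * x0 := by
    intro n; induction n with
    | zero => simp [hv0]
    | succ n ih =>
      calc v (n+1) ≤ c * v n := (hdec n).le
      _ ≤ c * (c^n * x0) := mul_le_mul_of_nonneg_left ih hc0.le
      _ = c^(n+1) * x0 := by ring
  set δ : ℝ := κ - 2/p with hδdef
  have hδ0 : 0 < δ := sub_pos.mpr hκ
  set q : ℝ := c ^ δ with hqdef
  have hq0 : 0 < q := Real.rpow_pos_of_pos hc0 _
  have hq1 : q < 1 := Real.rpow_lt_one hc0.le hc1 hδ0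
  -- c^(2/p) ≥ 1/2
  have hcp : (1:ℝ)/2 ≤ c ^ (2/p) := by
    rw [hc, ← Real.rpow_mul (by norm_num : (0:ℝ) ≤ 2)]
    have h1 : -(1/κ) * (2/p) = -(2/(κ*p)) := by field_simp
    rw [h1]
    have h2 : (1:ℝ)/2 = (2:ℝ)^(-(1:ℝ)) := by
      rw [Real.rpow_neg_one]; norm_num
    rw [h2]
    apply Real.rpow_le_rpow_of_exponent_le (by norm_num)
    have hκp : 2 ≤ κ * p := by
      have h3 := (div_lt_iff₀ hp).mp hκ
      linarith
    have h4 : 2/(κ*p) ≤ 1 := by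
      rw [div_le_one (by positivity)]; linarith
    linarith
  -- per-term bound
  have hK : ∀ n, ‖f (v n) - f (v (n+1))‖ ≤ 2 * (4*Bv')^(1/p) * l^δ * q^n := by
    intro n
    have hx := hvpos n
    have hcx : 0 < c * v n := by positivity
    have hyx : v (n+1) < v n := (hdec n).trans (by nlinarith [hvpos n])
    have hM0 : (0:ℝ) ≤ 4*Bv' * ((v n)^(κ*p) / (c * v n)^2) := by positivity
    have hstep2 : ‖f (v n) - f (v (n+1))‖ ^ p ≤ 4*Bv' * ((v n)^(κ*p) / (c * v n)^2) := by
      refine (hterm n).trans ?_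
      have h5 : (v n - v (n+1))^(κ*p) ≤ (v n)^(κ*p) :=
        Real.rpow_le_rpow (by linarith [hvpos (n+1)]) (by linarith [hvpos (n+1)]) (by positivity)
      calc 4*Bv'/(c*v n)^2 * (v n - v (n+1))^(κ*p) ≤ 4*Bv'/(c*v n)^2 * (v n)^(κ*p) :=
            mul_le_mul_of_nonneg_left h5 (by positivity)
      _ = 4*Bv' * ((v n)^(κ*p) / (c*v n)^2) := by ring
    have h6 : ‖f (v n) - f (v (n+1))‖ ≤ (4*Bv' * ((v n)^(κ*p) / (c * v n)^2))^(1/p) := by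
      have h7 : ‖f (v n) - f (v (n+1))‖ = ((‖f (v n) - f (v (n+1))‖ ^ p)^(1/p)) := by
        rw [← Real.rpow_mul (norm_nonneg _), mul_one_div_cancel hp.ne', Real.rpow_one]
      rw [h7]
      exact Real.rpow_le_rpow (by positivity) hstep2 (by positivity)
    refine h6.trans ?_
    -- compute the rpow
    have e0 : ((c * v n)^2 : ℝ) = (c * v n)^((2:ℝ)) := by
      rw [Real.rpow_two]
    have e1 : (4*Bv' * ((v n)^(κ*p) / (c * v n)^2))^(1/p)
        = (4*Bv')^(1/p) * (((v n)^(κ*p))^(1/p) / ((c*v n)^((2:ℝ)))^(1/p)) := by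
      rw [Real.mul_rpow (by positivity) (by positivity),
          Real.div_rpow (by positivity) (by positivity), e0]
    rw [e1]
    have e2 : ((v n)^(κ*p))^(1/p) = (v n)^κ := by
      rw [← Real.rpow_mul hx.le]
      congr 1
      field_simp
    have e3 : ((c*v n)^((2:ℝ)))^(1/p) = c^(2/p) * (v n)^(2/p) := by
      rw [← Real.rpow_mul (by positivity)]
      have : (2:ℝ) * (1/p) = 2/p := by ring
      rw [this, Real.mul_rpow hc0.le hx.le]
    rw [e2, e3]
    -- (v n)^κ / (c^(2/p) * (v n)^(2/p)) = (v n)^δ / c^(2/p)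
    have e4 : (v n)^κ / (c^(2/p) * (v n)^(2/p)) = (v n)^δ / c^(2/p) := by
      rw [hδdef, Real.rpow_sub hx, div_div, mul_comm]
    rw [e4]
    have hc2p : (0:ℝ) < c^(2/p) := Real.rpow_pos_of_pos hc0 _
    have e5 : (v n)^δ / c^(2/p) ≤ (v n)^δ * 2 := by
      rw [div_le_iff₀ hc2p]
      have h8 : (0:ℝ) ≤ (v n)^δ := by positivity
      nlinarith [hcp]
    have e6 : (v n)^δ ≤ l^δ * q^n := by
      have h9 : v n ≤ c^n * l := by
        refine (hgeo n).trans ?_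
        have := pow_pos hc0 n
        nlinarith
      have h10 : (v n)^δ ≤ (c^n * l)^δ := Real.rpow_le_rpow hx.le h9 hδ0.le
      have h11 : ((c^n * l):ℝ)^δ = q^n * l^δ := by
        rw [Real.mul_rpow (by positivity) (by linarith)]
        congr 1
        rw [← Real.rpow_natCast c n, ← Real.rpow_mul hc0.le, mul_comm (n:ℝ) δ,
          Real.rpow_mul hc0.le, Real.rpow_natCast]
      rw [h11] at h10
      linarith
    calc (4*Bv')^(1/p) * ((v n)^δ / c^(2/p)) ≤ (4*Bv')^(1/p) * ((v n)^δ * 2) :=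
          mul_le_mul_of_nonneg_left e5 (by positivity)
    _ ≤ (4*Bv')^(1/p) * ((l^δ * q^n) * 2) := by
          have := mul_le_mul_of_nonneg_right e6 (by norm_num : (0:ℝ) ≤ 2)
          exact mul_le_mul_of_nonneg_left this (by positivity)
    _ = 2 * (4*Bv')^(1/p) * l^δ * q^n := by ring
  -- telescoping
  have hpart : ∀ N, ‖f (v 0) - f (v N)‖ ≤ ∑ n ∈ Finset.range N, 2*(4*Bv')^(1/p)*l^δ*q^n := by
    intro N
    induction N with
    | zero => simp
    | succ N ih =>
      have htri := dist_triangle (f (v 0)) (f (v N)) (f (v (N+1)))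
      rw [dist_eq_norm, dist_eq_norm, dist_eq_norm] at htri
      calc ‖f (v 0) - f (v (N+1))‖ ≤ ‖f (v 0) - f (v N)‖ + ‖f (v N) - f (v (N+1))‖ := htri
      _ ≤ (∑ n ∈ Finset.range N, 2*(4*Bv')^(1/p)*l^δ*q^n) + 2*(4*Bv')^(1/p)*l^δ*q^N :=
          add_le_add ih (hK N)
      _ = ∑ n ∈ Finset.range (N+1), 2*(4*Bv')^(1/p)*l^δ*q^n :=
          (Finset.sum_range_succ _ N).symm
  have hsum : ∀ N, ‖f x0 - f (v N)‖ ≤ 2*(4*Bv')^(1/p)*l^δ * (1-q)⁻¹ := by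
    intro N
    have hgs : ∑ n ∈ Finset.range N, 2*(4*Bv')^(1/p)*l^δ*q^n
        ≤ 2*(4*Bv')^(1/p)*l^δ * (1-q)⁻¹ := by
      have heq : ∑ n ∈ Finset.range N, 2*(4*Bv')^(1/p)*l^δ*q^n
          = 2*(4*Bv')^(1/p)*l^δ * ∑ n ∈ Finset.range N, q^n := by
        rw [Finset.mul_sum]
      rw [heq]
      have hts := Summable.sum_le_tsum (Finset.range N) (fun i _ => (pow_nonneg hq0.le i))
        (summable_geometric_of_lt_one hq0.le hq1)
      rw [tsum_geometric_of_lt_one hq0.le hq1] at hts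
      exact mul_le_mul_of_nonneg_left hts (by positivity)
    have h12 := hpart N
    rw [hv0] at h12
    exact h12.trans hgs
  have hvlim : Filter.Tendsto v Filter.atTop (nhds 0) := by
    have hup : Filter.Tendsto (fun n : ℕ => c^n * x0) Filter.atTop (nhds 0) := by
      have h13 := (tendsto_pow_atTop_nhds_zero_of_lt_one hc0.le hc1).mul_const x0
      simpa using h13
    exact squeeze_zero (fun n => (hvpos n).le) hgeo hup
  have hflim : Filter.Tendsto (fun N => ‖f x0 - f (v N)‖) Filter.atTop (nhds ‖f x0 - f 0‖) :=
    (tendsto_const_nhds.sub ((hf.tendsto 0).comp hvlim)).norm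
  have hfinal : ‖f x0 - f 0‖ ≤ 2*(4*Bv')^(1/p)*l^δ * (1-q)⁻¹ := le_of_tendsto' hflim hsum
  -- final constant comparison
  have hid : q ≤ 1 - δ/κ/2 := by
    have hx1 : δ/κ ≤ 1 := by
      rw [div_le_one hκ0, hδdef]
      linarith [hp2]
    have h14 := two_rpow_bound (x := δ/κ) (by positivity) hx1
    have hqe : q = (2:ℝ)^(-(δ/κ)) := by
      rw [hqdef, hc, ← Real.rpow_mul (by norm_num : (0:ℝ) ≤ 2)]
      congr 1
      field_simp
    rw [hqe]
    linarith [h14]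
  have h1q : δ/(2*κ) ≤ 1 - q := by
    have : δ/κ/2 = δ/(2*κ) := by ring
    linarith [hid, this]
  have hinv : (1-q)⁻¹ ≤ 2*κ/δ := by
    have h2 : 0 < δ/(2*κ) := by positivity
    have h15 := one_div_le_one_div_of_le h2 h1q
    rw [one_div_div] at h15
    rw [← one_div]
    exact h15
  calc ‖f x0 - f 0‖ ≤ 2*(4*Bv')^(1/p)*l^δ * (1-q)⁻¹ := hfinal
  _ ≤ 2*(4*Bv')^(1/p)*l^δ * (2*κ/δ) := by
      refine mul_le_mul_of_nonneg_left hinv ?_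
      have : (0:ℝ) < l^δ := Real.rpow_pos_of_pos hl _
      positivity
  _ = 4 * (4*Bv')^(1/p) * (κ/δ) * l^δ := by ring



lemma grr_det' (f : ℝ → E) (hf : Continuous f) (a b p κ Bv Bv' : ℝ)
    (hab : a < b) (hp : 0 < p) (hκ : 2/p < κ) (hBv : 0 ≤ Bv) (hBB : Bv < Bv')
    (hB : ∫⁻ t in Ioo a b, ∫⁻ s in Ioo a b,
        ENNReal.ofReal (‖f t - f s‖ ^ p / |t - s| ^ (κ * p)) ∂volume ∂volume
        ≤ ENNReal.ofReal Bv) :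
    ‖f b - f a‖ ≤ 8 * (4*Bv') ^ (1/p) * (κ/(κ - 2/p)) * (b-a) ^ (κ - 2/p) := by
  have hp2 : (0:ℝ) < 2/p := by positivity
  have hκ0 : 0 < κ := hp2.trans hκ
  have hBv'0 : 0 < Bv' := lt_of_le_of_lt hBv hBB
  set l : ℝ := b - a with hldef
  have hl : 0 < l := sub_pos.mpr hab
  set c : ℝ := (2:ℝ) ^ (-(1/κ)) with hc
  have hc0 : 0 < c := Real.rpow_pos_of_pos (by norm_num) _
  have hc1 : c < 1 := Real.rpow_lt_one_of_one_lt_of_neg (by norm_num)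
    (neg_lt_zero.mpr (by positivity))
  set J : ℝ → ℝ≥0∞ :=
    (fun t => ∫⁻ s in Ioo a b, ENNReal.ofReal (‖f t - f s‖ ^ p / |t - s| ^ (κ * p))) with hJ
  have hJm : Measurable J :=
    Measurable.lintegral_prod_right (grr_meas f hf p κ hp hκ0)
  -- initial point
  have hbad : volume {s | s ∈ Ioo a b ∧ ENNReal.ofReal (2*Bv'/l) ≤ J s} < ENNReal.ofReal l := by
    refine markov_strict _ hJm (by positivity) hl hB ?_
    have he : 2*Bv'/l * l = 2*Bv' := by field_simp
    rw [he]
    exact (ENNReal.ofReal_lt_ofReal_iff (by positivity)).mpr (by linarith)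
  have hex : ∃ t0, t0 ∈ Ioo a b ∧ J t0 < ENNReal.ofReal (2*Bv'/l) := by
    by_contra hcon
    push_neg at hcon
    have hsub : Ioo a b ⊆ {s | s ∈ Ioo a b ∧ ENNReal.ofReal (2*Bv'/l) ≤ J s} :=
      fun t ht => ⟨ht, hcon t ht⟩
    have := (measure_mono (μ := volume) hsub)
    rw [Real.volume_Ioo, ← hldef] at this
    exact absurd (this.trans_lt hbad) (lt_irrefl _)
  obtain ⟨t0, ht0, hJt0⟩ := hex
  set δ : ℝ := κ - 2/p with hδdef
  have hδ0 : 0 < δ := sub_pos.mpr hκ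
  have hdiv : 2*Bv'/l ≤ 2*Bv'/(c*(t0 - a)) := by
    have h1 : 0 < t0 - a := by linarith [ht0.1]
    have h2 : 0 < c * (t0 - a) := by positivity
    apply div_le_div_of_nonneg_left (by positivity) h2
    have h3 : t0 - a < l := by rw [hldef]; linarith [ht0.2]
    nlinarith
  have hdiv2 : 2*Bv'/l ≤ 2*Bv'/(c*(b - t0)) := by
    have h1 : 0 < b - t0 := by linarith [ht0.2]
    have h2 : 0 < c * (b - t0) := by positivity
    apply div_le_div_of_nonneg_left (by positivity) h2
    have h3 : b - t0 < l := by rw [hldef]; linarith [ht0.1]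
    nlinarith
  -- first half : from a up to t0, reparametrized by x ↦ f (x + a)
  have half1 : ‖f t0 - f a‖ ≤ 4 * (4*Bv')^(1/p) * (κ/δ) * l^δ := by
    have hinner : ∀ t : ℝ, (∫⁻ s in Ioo 0 l,
        ENNReal.ofReal (‖f (t + a) - f (s + a)‖ ^ p / |t - s| ^ (κ * p))) = J (t + a) := by
      intro t
      have h1 := lint_Ioo_shift
        (fun s' => ENNReal.ofReal (‖f (t+a) - f s'‖ ^ p / |(t+a) - s'| ^ (κ * p))) a 0 l
      have h2 : ∀ s : ℝ, (t+a) - (s+a) = t - s := fun s => by ring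
      simp only [h2] at h1
      rw [h1, zero_add]
      have h3 : l + a = b := by rw [hldef]; ring
      rw [h3, hJ]
    have houter : (∫⁻ t in Ioo 0 l, J (t + a)) ≤ ENNReal.ofReal Bv := by
      have h4 := lint_Ioo_shift J a 0 l
      rw [h4, zero_add]
      have h3 : l + a = b := by rw [hldef]; ring
      rw [h3]
      exact hB
    have hx1 : (0:ℝ) < t0 - a := by linarith [ht0.1]
    have hx2 : t0 - a < l := by rw [hldef]; linarith [ht0.2]
    have happ := grr_half (fun x => f (x + a)) (hf.comp (continuous_id.add continuous_const))
      l p κ Bv Bv' hl hp hκ hBv hBB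
      (by
        have h6 : (∫⁻ t in Ioo 0 l, ∫⁻ s in Ioo 0 l,
            ENNReal.ofReal (‖f (t + a) - f (s + a)‖ ^ p / |t - s| ^ (κ * p)) ∂volume ∂volume)
            = ∫⁻ t in Ioo 0 l, J (t + a) := lintegral_congr fun t => hinner t
        exact h6.trans_le houter)
      (t0 - a) hx1 hx2
      (by
        have h7 := hinner (t0 - a)
        have h5 : t0 - a + a = t0 := by ring
        beta_reduce
        rw [h7, h5]
        exact hJt0.trans_le (ENNReal.ofReal_le_ofReal hdiv))
    simp only [zero_add] at happ
    have h5 : t0 - a + a = t0 := by ring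
    rw [h5] at happ
    exact happ
  -- second half : from t0 up to b, reparametrized by x ↦ f (b - x)
  have half2 : ‖f t0 - f b‖ ≤ 4 * (4*Bv')^(1/p) * (κ/δ) * l^δ := by
    have hinner : ∀ t : ℝ, (∫⁻ s in Ioo 0 l,
        ENNReal.ofReal (‖f (b - t) - f (b - s)‖ ^ p / |t - s| ^ (κ * p))) = J (b - t) := by
      intro t
      have h1 := lint_Ioo_reflect
        (fun s' => ENNReal.ofReal (‖f (b-t) - f s'‖ ^ p / |(b-t) - s'| ^ (κ * p))) b 0 l
      have h2 : ∀ s : ℝ, ENNReal.ofReal (‖f (b-t) - f (b-s)‖ ^ p / |(b-t) - (b-s)| ^ (κ * p))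
          = ENNReal.ofReal (‖f (b-t) - f (b-s)‖ ^ p / |t - s| ^ (κ * p)) := by
        intro s
        have : |(b-t) - (b-s)| = |t - s| := by
          rw [show (b-t) - (b-s) = s - t by ring, abs_sub_comm]
        rw [this]
      simp only [h2] at h1
      rw [h1, sub_zero]
      have h3 : b - l = a := by rw [hldef]; ring
      rw [h3, hJ]
    have houter : (∫⁻ t in Ioo 0 l, J (b - t)) ≤ ENNReal.ofReal Bv := by
      have h4 := lint_Ioo_reflect J b 0 l
      rw [h4, sub_zero]
      have h3 : b - l = a := by rw [hldef]; ring
      rw [h3]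
      exact hB
    have hx1 : (0:ℝ) < b - t0 := by linarith [ht0.2]
    have hx2 : b - t0 < l := by rw [hldef]; linarith [ht0.1]
    have happ := grr_half (fun x => f (b - x))
      (hf.comp (continuous_const.sub continuous_id))
      l p κ Bv Bv' hl hp hκ hBv hBB
      (by
        have h6 : (∫⁻ t in Ioo 0 l, ∫⁻ s in Ioo 0 l,
            ENNReal.ofReal (‖f (b - t) - f (b - s)‖ ^ p / |t - s| ^ (κ * p)) ∂volume ∂volume)
            = ∫⁻ t in Ioo 0 l, J (b - t) := lintegral_congr fun t => hinner t
        exact h6.trans_le houter)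
      (b - t0) hx1 hx2
      (by
        have h7 := hinner (b - t0)
        have h5 : b - (b - t0) = t0 := by ring
        beta_reduce
        rw [h7, h5]
        exact hJt0.trans_le (ENNReal.ofReal_le_ofReal hdiv2))
    simp only [sub_zero] at happ
    have h5 : b - (b - t0) = t0 := by ring
    rw [h5] at happ
    exact happ
  have htri := dist_triangle (f b) (f t0) (f a)
  rw [dist_eq_norm, dist_eq_norm, dist_eq_norm] at htri
  have hfb : ‖f b - f t0‖ = ‖f t0 - f b‖ := norm_sub_rev _ _
  calc ‖f b - f a‖ ≤ ‖f b - f t0‖ + ‖f t0 - f a‖ := htri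
  _ ≤ 4 * (4*Bv')^(1/p) * (κ/δ) * l^δ + 4 * (4*Bv')^(1/p) * (κ/δ) * l^δ := by
      rw [hfb]; exact add_le_add half2 half1
  _ = 8 * (4*Bv')^(1/p) * (κ/δ) * l^δ := by ring

lemma grr_det (f : ℝ → E) (hf : Continuous f) (a b p κ Bv : ℝ)
    (hab : a < b) (hp : 0 < p) (hκ : 2/p < κ) (hBv : 0 ≤ Bv)
    (hB : ∫⁻ t in Ioo a b, ∫⁻ s in Ioo a b,
        ENNReal.ofReal (‖f t - f s‖ ^ p / |t - s| ^ (κ * p)) ∂volume ∂volume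
        ≤ ENNReal.ofReal Bv) :
    ‖f b - f a‖ ≤ 8 * (4*Bv) ^ (1/p) * (κ/(κ - 2/p)) * (b-a) ^ (κ - 2/p) := by
  have hall : ∀ n : ℕ, ‖f b - f a‖
      ≤ 8 * (4*(Bv + 1/(n+1))) ^ (1/p) * (κ/(κ - 2/p)) * (b-a) ^ (κ - 2/p) := by
    intro n
    refine grr_det' f hf a b p κ Bv (Bv + 1/(n+1)) hab hp hκ hBv ?_ hB
    have : (0:ℝ) < 1/(n+1) := by positivity
    linarith
  have hlim : Filter.Tendsto
      (fun n : ℕ => 8 * (4*(Bv + 1/(n+1))) ^ (1/p) * (κ/(κ - 2/p)) * (b-a) ^ (κ - 2/p))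
      Filter.atTop (nhds (8 * (4*Bv) ^ (1/p) * (κ/(κ - 2/p)) * (b-a) ^ (κ - 2/p))) := by
    have h1 : Filter.Tendsto (fun n : ℕ => Bv + 1/(n+1)) Filter.atTop (nhds Bv) := by
      have h2 := tendsto_one_div_add_atTop_nhds_zero_nat (𝕜 := ℝ)
      have h3 := h2.const_add Bv
      simpa using h3
    have h4 : Filter.Tendsto (fun n : ℕ => (4*(Bv + 1/(n+1))) ^ (1/p))
        Filter.atTop (nhds ((4*Bv) ^ (1/p))) := by
      have h5 : ContinuousAt (fun x : ℝ => x ^ (1/p)) (4*Bv) :=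
        Real.continuousAt_rpow_const _ _ (Or.inr (by positivity))
      exact h5.tendsto.comp (h1.const_mul 4)
    have h6 := ((h4.const_mul 8).mul_const (κ/(κ - 2/p))).mul_const ((b-a) ^ (κ - 2/p))
    exact h6
  exact ge_of_tendsto hlim (Filter.Eventually.of_forall hall)


end GRRDet

end GRRProofAux

open GRRProofAux

/-- Moment bound for the Hölder seminorm of a process via the
Garsia–Rodemich–Rumsey inequality. -/
theorem grr_moment_bound
    {B : Type*} [NormedAddCommGroup B] [NormedSpace ℝ B] [CompleteSpace B]
    [MeasurableSpace B] [BorelSpace B] [SecondCountableTopology B]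
    {Ω : Type*} [MeasurableSpace Ω] (P : Measure Ω) [IsProbabilityMeasure P]
    (T : ℝ) (hT : 0 < T)
    (X : Ω → ℝ → B)
    (hcont : ∀ ω, ContinuousOn (X ω) (Icc 0 T))
    (hmeas : ∀ t : ℝ, Measurable fun ω => X ω t)
    (lam γ γ' p A : ℝ)
    (hlam : lam ∈ Ioo (0:ℝ) 1) (hγ : γ ∈ Ioo (0:ℝ) (lam / 2))
    (hγ' : γ' = (γ + lam / 2) / 2)
    (hp : max (1 / γ') (2 / (lam / 2 - γ)) < p)
    (hA : 0 < A)
    (hmom : ∀ s t : ℝ, 0 ≤ s → s < t → t ≤ T →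
      ∫⁻ ω, ENNReal.ofReal (‖X ω t - X ω s‖ ^ p) ∂P ≤
        ENNReal.ofReal (A ^ p * (t - s) ^ (lam * p / 2))) :
    ∫⁻ ω, (⨆ (s : ℝ) (t : ℝ) (_ : 0 ≤ s) (_ : s < t) (_ : t ≤ T),
        ENNReal.ofReal (‖X ω t - X ω s‖ ^ p / (t - s) ^ (γ * p))) ∂P ≤
      ENNReal.ofReal (T ^ ((lam / 2 - γ) * p) *
        (8 * 4 ^ (1 / p) * ((γ' + 1 / p) / (γ' - 1 / p))) ^ p * A ^ p) := by
  obtain ⟨hlam0, hlam1⟩ := hlam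
  obtain ⟨hγ0, hγu⟩ := hγ
  have hγ'0 : 0 < γ' := by rw [hγ']; linarith
  have hp1 : 1/γ' < p := (le_max_left _ _).trans_lt hp
  have hp2' : 2/(lam/2 - γ) < p := (le_max_right _ _).trans_lt hp
  have hp0 : 0 < p := lt_trans (by positivity) hp1
  have hinvp : 1/p < γ' := by
    rw [div_lt_iff₀ hγ'0] at hp1
    rw [div_lt_iff₀ hp0]
    nlinarith
  set κ : ℝ := γ' + 1/p with hκdef
  set δ : ℝ := γ' - 1/p with hδdef
  have hδ0 : 0 < δ := by rw [hδdef]; linarith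
  have hκ0 : 0 < κ := by rw [hκdef]; positivity
  have hκgt : 2/p < κ := by
    rw [hκdef]
    have : 2/p = 1/p + 1/p := by ring
    rw [this]; linarith
  have hδγ : γ < δ := by
    have h1 : 0 < lam/2 - γ := by linarith
    rw [div_lt_iff₀ h1] at hp2'
    have h2 : 1/p < (lam/2 - γ)/2 := by
      rw [div_lt_div_iff₀ hp0 (by norm_num : (0:ℝ) < 2)]
      nlinarith
    have h3 : γ' - γ = (lam/2 - γ)/2 := by rw [hγ']; ring
    rw [hδdef]
    linarith
  have halpha : 1 < (lam/2 - γ')*p := by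
    have h1 : 0 < lam/2 - γ := by linarith
    rw [div_lt_iff₀ h1] at hp2'
    have h3 : lam/2 - γ' = (lam/2 - γ)/2 := by rw [hγ']; ring
    rw [h3]
    nlinarith
  -- clamp
  set τ : ℝ → ℝ := fun t => max 0 (min t T) with hτdef
  have hτcont : Continuous τ := continuous_const.max (continuous_id.min continuous_const)
  have hτmem : ∀ t, τ t ∈ Icc 0 T := by
    intro t
    constructor
    · exact le_max_left _ _
    · exact max_le hT.le (min_le_right _ _)
  have hτid : ∀ t, t ∈ Icc 0 T → τ t = t := by
    intro t ht
    rw [hτdef]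
    simp only
    rw [min_eq_left ht.2, max_eq_right ht.1]
  set Y : Ω → ℝ → B := fun ω t => X ω (τ t) with hYdef
  have hYcont : ∀ ω, Continuous (Y ω) := fun ω =>
    (hcont ω).comp_continuous hτcont hτmem
  have hYmeas : ∀ t, Measurable (fun ω => Y ω t) := fun t => hmeas (τ t)
  have hYeq : ∀ ω t, t ∈ Icc 0 T → Y ω t = X ω t := by
    intro ω t ht
    rw [hYdef]
    simp only
    rw [hτid t ht]
  -- joint measurability
  have hjoint : StronglyMeasurable (Function.uncurry (fun t ω => Y ω t)) :=
    stronglyMeasurable_uncurry_of_continuous_of_stronglyMeasurable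
      (fun ω => hYcont ω) (fun t => (hYmeas t).stronglyMeasurable)
  have hrp : Continuous (fun y : ℝ => y ^ p) :=
    continuous_id.rpow_const (fun x => Or.inr hp0.le)
  have hrk : Continuous (fun z : ℝ × ℝ => |z.1 - z.2| ^ (κ*p)) :=
    ((continuous_fst.sub continuous_snd).abs).rpow_const (fun x => Or.inr (by positivity))
  set gg : Ω × (ℝ × ℝ) → ℝ≥0∞ :=
    fun q => ENNReal.ofReal (‖Y q.1 q.2.1 - Y q.1 q.2.2‖ ^ p / |q.2.1 - q.2.2| ^ (κ*p))
    with hggdef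
  have hggm : Measurable gg := by
    apply Measurable.ennreal_ofReal
    apply Measurable.div
    · apply hrp.measurable.comp
      apply Measurable.norm
      apply Measurable.sub
      · exact hjoint.measurable.comp
          ((measurable_snd.fst).prodMk measurable_fst)
      · exact hjoint.measurable.comp
          ((measurable_snd.snd).prodMk measurable_fst)
    · exact hrk.measurable.comp measurable_snd
  set GG : Ω → ℝ≥0∞ := fun ω => ∫⁻ t in Ioo 0 T, ∫⁻ s in Ioo 0 T,
    ENNReal.ofReal (‖Y ω t - Y ω s‖ ^ p / |t - s| ^ (κ*p)) with hGGdef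
  set KC : ℝ := T^((δ - γ)*p) * (8 * 4^(1/p) * (κ/δ))^p with hKCdef
  have hKCpos : 0 < KC := by
    rw [hKCdef]
    have h1 : (0:ℝ) < T^((δ - γ)*p) := Real.rpow_pos_of_pos hT _
    have h2 : (0:ℝ) < 8 * 4^(1/p) * (κ/δ) := by positivity
    have h3 : (0:ℝ) < (8 * 4^(1/p) * (κ/δ))^p := Real.rpow_pos_of_pos h2 _
    positivity
  -- pathwise bound
  have hpath : ∀ ω, (⨆ (s : ℝ) (t : ℝ) (_ : 0 ≤ s) (_ : s < t) (_ : t ≤ T),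
        ENNReal.ofReal (‖X ω t - X ω s‖ ^ p / (t - s) ^ (γ * p)))
      ≤ ENNReal.ofReal KC * GG ω := by
    intro ω
    refine iSup_le fun s => iSup_le fun t => iSup_le fun hs => iSup_le fun hst =>
      iSup_le fun htT => ?_
    by_cases hfin : GG ω = ⊤
    · rw [hfin, ENNReal.mul_top (ENNReal.ofReal_pos.mpr hKCpos).ne']
      exact le_top
    set Bv : ℝ := (GG ω).toReal with hBvdef
    have hBv0 : 0 ≤ Bv := ENNReal.toReal_nonneg
    have hBB : GG ω = ENNReal.ofReal Bv := (ENNReal.ofReal_toReal hfin).symm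
    have hsub : Ioo s t ⊆ Ioo 0 T := Ioo_subset_Ioo hs htT
    have hB : ∫⁻ u in Ioo s t, ∫⁻ v in Ioo s t,
        ENNReal.ofReal (‖Y ω u - Y ω v‖ ^ p / |u - v| ^ (κ*p)) ∂volume ∂volume
        ≤ ENNReal.ofReal Bv := by
      rw [← hBB, hGGdef]
      calc ∫⁻ u in Ioo s t, ∫⁻ v in Ioo s t,
            ENNReal.ofReal (‖Y ω u - Y ω v‖ ^ p / |u - v| ^ (κ*p)) ∂volume ∂volume
          ≤ ∫⁻ u in Ioo s t, ∫⁻ v in Ioo 0 T,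
            ENNReal.ofReal (‖Y ω u - Y ω v‖ ^ p / |u - v| ^ (κ*p)) ∂volume ∂volume :=
            lintegral_mono fun u => lintegral_mono_set hsub
      _ ≤ _ := lintegral_mono_set hsub
    have hdet := grr_det (Y ω) (hYcont ω) s t p κ Bv hst hp0 hκgt hBv0 hB
    have h0t : 0 ≤ t := hs.trans hst.le
    have hsT : s ≤ T := hst.le.trans htT
    rw [hYeq ω t ⟨h0t, htT⟩, hYeq ω s ⟨hs, hsT⟩] at hdet
    have hts : 0 < t - s := sub_pos.mpr hst
    have hκδ : κ - 2/p = δ := by rw [hκdef, hδdef]; ring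
    rw [hκδ] at hdet
    have h1 : ‖X ω t - X ω s‖^p ≤ (8 * (4*Bv)^(1/p) * (κ/δ) * (t-s)^δ)^p :=
      Real.rpow_le_rpow (norm_nonneg _) hdet hp0.le
    have h2 : (8 * (4*Bv)^(1/p) * (κ/δ) * ((t-s):ℝ)^δ)^p
        = 8^p * (4*Bv) * (κ/δ)^p * (t-s)^(δ*p) := by
      rw [Real.mul_rpow (by positivity) (by positivity),
          Real.mul_rpow (by positivity) (by positivity),
          Real.mul_rpow (by positivity) (by positivity),
          ← Real.rpow_mul (by positivity : (0:ℝ) ≤ 4*Bv),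
          one_div_mul_cancel hp0.ne', Real.rpow_one,
          ← Real.rpow_mul hts.le]
    rw [h2] at h1
    have h3 : ‖X ω t - X ω s‖^p / (t-s)^(γ*p)
        ≤ 8^p * (4*Bv) * (κ/δ)^p * (t-s)^((δ-γ)*p) := by
      have hpow : (0:ℝ) < (t-s)^(γ*p) := Real.rpow_pos_of_pos hts _
      rw [div_le_iff₀ hpow]
      calc ‖X ω t - X ω s‖^p ≤ 8^p * (4*Bv) * (κ/δ)^p * (t-s)^(δ*p) := h1
      _ = 8^p * (4*Bv) * (κ/δ)^p * (t-s)^((δ-γ)*p) * (t-s)^(γ*p) := by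
          rw [mul_assoc (8^p * (4*Bv) * (κ/δ)^p), ← Real.rpow_add hts]
          congr 2
          ring
    have h4 : ((t-s):ℝ)^((δ-γ)*p) ≤ T^((δ-γ)*p) :=
      Real.rpow_le_rpow hts.le (by linarith) (mul_nonneg (by linarith) hp0.le)
    have h5 : ‖X ω t - X ω s‖^p / (t-s)^(γ*p) ≤ KC * Bv := by
      have hCC : ((8:ℝ) * 4^(1/p) * (κ/δ))^p = 8^p * 4 * (κ/δ)^p := by
        rw [Real.mul_rpow (by positivity) (by positivity),
            Real.mul_rpow (by positivity) (by positivity),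
            ← Real.rpow_mul (by norm_num : (0:ℝ) ≤ 4),
            one_div_mul_cancel hp0.ne', Real.rpow_one]
      rw [hKCdef, hCC]
      calc ‖X ω t - X ω s‖^p / (t-s)^(γ*p)
          ≤ 8^p * (4*Bv) * (κ/δ)^p * (t-s)^((δ-γ)*p) := h3
      _ ≤ 8^p * (4*Bv) * (κ/δ)^p * T^((δ-γ)*p) := by
          refine mul_le_mul_of_nonneg_left h4 ?_
          positivity
      _ = T^((δ-γ)*p) * (8^p * 4 * (κ/δ)^p) * Bv := by ring
    rw [hBB, ← ENNReal.ofReal_mul hKCpos.le]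
    exact ENNReal.ofReal_le_ofReal h5
  -- integrate the pathwise bound
  have hstep1 : (∫⁻ ω, (⨆ (s : ℝ) (t : ℝ) (_ : 0 ≤ s) (_ : s < t) (_ : t ≤ T),
        ENNReal.ofReal (‖X ω t - X ω s‖ ^ p / (t - s) ^ (γ * p))) ∂P)
      ≤ ENNReal.ofReal KC * ∫⁻ ω, GG ω ∂P := by
    calc (∫⁻ ω, (⨆ (s : ℝ) (t : ℝ) (_ : 0 ≤ s) (_ : s < t) (_ : t ≤ T),
          ENNReal.ofReal (‖X ω t - X ω s‖ ^ p / (t - s) ^ (γ * p))) ∂P)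
        ≤ ∫⁻ ω, ENNReal.ofReal KC * GG ω ∂P := lintegral_mono hpath
    _ = ENNReal.ofReal KC * ∫⁻ ω, GG ω ∂P :=
        lintegral_const_mul' _ _ ENNReal.ofReal_ne_top
  -- bound ∫⁻ GG via Tonelli and the moment assumption
  set ν : Measure ℝ := volume.restrict (Ioo 0 T) with hνdef
  set e : ℝ := lam*p/2 - κ*p with hedef
  have hE0 : 0 < e := by
    have h1 : e = (lam/2 - γ')*p - 1 := by
      rw [hedef, hκdef]
      field_simp
      ring
    rw [h1]
    linarith
  -- key single-pair bound
  have key : ∀ s t : ℝ, 0 < s → s < t → t < T →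
      (∫⁻ ω, ENNReal.ofReal (‖X ω t - X ω s‖^p / (t - s)^(κ*p)) ∂P)
      ≤ ENNReal.ofReal (A^p * T^e) := by
    intro s t hs hst htT
    have hts : 0 < t - s := sub_pos.mpr hst
    have h1 : ∀ ω, ENNReal.ofReal (‖X ω t - X ω s‖^p / (t-s)^(κ*p))
        = ENNReal.ofReal (‖X ω t - X ω s‖^p) * ENNReal.ofReal ((((t-s):ℝ)^(κ*p))⁻¹) := by
      intro ω
      rw [div_eq_mul_inv, ENNReal.ofReal_mul (by positivity)]
    simp_rw [h1]
    rw [lintegral_mul_const' _ _ ENNReal.ofReal_ne_top]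
    have h2 := hmom s t hs.le hst htT.le
    calc (∫⁻ ω, ENNReal.ofReal (‖X ω t - X ω s‖^p) ∂P) * ENNReal.ofReal ((((t-s):ℝ)^(κ*p))⁻¹)
        ≤ ENNReal.ofReal (A^p * (t-s)^(lam*p/2)) * ENNReal.ofReal ((((t-s):ℝ)^(κ*p))⁻¹) :=
          mul_le_mul_left h2 _
    _ = ENNReal.ofReal (A^p * (t-s)^(lam*p/2) * (((t-s):ℝ)^(κ*p))⁻¹) :=
          (ENNReal.ofReal_mul (by positivity)).symm
    _ ≤ ENNReal.ofReal (A^p * T^e) := by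
        apply ENNReal.ofReal_le_ofReal
        have h3 : ((t-s):ℝ)^(lam*p/2) * (((t-s):ℝ)^(κ*p))⁻¹ = (t-s)^e := by
          rw [← Real.rpow_neg hts.le, ← Real.rpow_add hts, hedef]
          ring_nf
        calc A^p * (t-s)^(lam*p/2) * (((t-s):ℝ)^(κ*p))⁻¹ = A^p * ((t-s):ℝ)^e := by
              rw [mul_assoc, h3]
        _ ≤ A^p * T^e := by
            refine mul_le_mul_of_nonneg_left ?_ (by positivity)
            exact Real.rpow_le_rpow hts.le (by linarith) hE0.le
  -- Tonelli
  have hprodform : ∀ ω, GG ω = ∫⁻ z, gg (ω, z) ∂(ν.prod ν) := by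
    intro ω
    rw [hGGdef]
    have haem : AEMeasurable (fun z : ℝ × ℝ => gg (ω, z)) (ν.prod ν) :=
      (hggm.comp (measurable_const.prodMk measurable_id)).aemeasurable
    rw [lintegral_prod _ haem]
  have hswap : (∫⁻ ω, GG ω ∂P) = ∫⁻ z, ∫⁻ ω, gg (ω, z) ∂P ∂(ν.prod ν) := by
    calc (∫⁻ ω, GG ω ∂P) = ∫⁻ ω, ∫⁻ z, gg (ω, z) ∂(ν.prod ν) ∂P :=
          lintegral_congr hprodform
    _ = _ := lintegral_lintegral_swap hggm.aemeasurable
  -- bound the inner integral for z in the square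
  have hinner : ∀ z : ℝ × ℝ, z ∈ (Ioo (0:ℝ) T) ×ˢ (Ioo (0:ℝ) T) →
      (∫⁻ ω, gg (ω, z) ∂P) ≤ ENNReal.ofReal (A^p * T^e) := by
    rintro ⟨t, s⟩ ⟨ht, hs⟩
    simp only [hggdef]
    rcases lt_trichotomy t s with hlt | heq | hgt
    · -- t < s
      have hcongr : ∀ ω, ENNReal.ofReal (‖Y ω t - Y ω s‖ ^ p / |t - s| ^ (κ*p))
          = ENNReal.ofReal (‖X ω s - X ω t‖ ^ p / (s - t) ^ (κ*p)) := by
        intro ω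
        rw [hYeq ω t ⟨ht.1.le, ht.2.le⟩, hYeq ω s ⟨hs.1.le, hs.2.le⟩,
          norm_sub_rev, abs_sub_comm, abs_of_pos (by linarith)]
      simp only [hcongr]
      exact key t s ht.1 hlt hs.2
    · -- t = s
      subst heq
      have hz : ∀ ω, ENNReal.ofReal (‖Y ω t - Y ω t‖ ^ p / |t - t| ^ (κ*p)) = 0 := by
        intro ω
        simp [Real.zero_rpow hp0.ne']
      simp only [hz]
      simp
    · -- s < t
      have hcongr : ∀ ω, ENNReal.ofReal (‖Y ω t - Y ω s‖ ^ p / |t - s| ^ (κ*p))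
          = ENNReal.ofReal (‖X ω t - X ω s‖ ^ p / (t - s) ^ (κ*p)) := by
        intro ω
        rw [hYeq ω t ⟨ht.1.le, ht.2.le⟩, hYeq ω s ⟨hs.1.le, hs.2.le⟩,
          abs_of_pos (by linarith)]
      simp only [hcongr]
      exact key s t hs.1 hgt ht.2
  -- integrate over the square
  have hGGbound : (∫⁻ ω, GG ω ∂P)
      ≤ ENNReal.ofReal (A^p * T^e) * (ENNReal.ofReal T * ENNReal.ofReal T) := by
    rw [hswap]
    have hprodμ : ν.prod ν = (volume.prod volume).restrict ((Ioo (0:ℝ) T) ×ˢ (Ioo (0:ℝ) T)) := by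
      rw [hνdef, Measure.prod_restrict]
    rw [hprodμ]
    calc (∫⁻ z in (Ioo (0:ℝ) T) ×ˢ (Ioo (0:ℝ) T), ∫⁻ ω, gg (ω, z) ∂P ∂(volume.prod volume))
        ≤ ∫⁻ _ in (Ioo (0:ℝ) T) ×ˢ (Ioo (0:ℝ) T),
            ENNReal.ofReal (A^p * T^e) ∂(volume.prod volume) :=
          setLIntegral_mono measurable_const hinner
    _ = ENNReal.ofReal (A^p * T^e) * (volume.prod volume) ((Ioo (0:ℝ) T) ×ˢ (Ioo (0:ℝ) T)) :=
          setLIntegral_const _ _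
    _ = ENNReal.ofReal (A^p * T^e) * (ENNReal.ofReal T * ENNReal.ofReal T) := by
          rw [Measure.prod_prod, Real.volume_Ioo, sub_zero]
  -- combine
  have htotal : (∫⁻ ω, (⨆ (s : ℝ) (t : ℝ) (_ : 0 ≤ s) (_ : s < t) (_ : t ≤ T),
        ENNReal.ofReal (‖X ω t - X ω s‖ ^ p / (t - s) ^ (γ * p))) ∂P)
      ≤ ENNReal.ofReal (KC * (A^p * T^e * (T * T))) := by
    refine hstep1.trans ?_
    calc ENNReal.ofReal KC * ∫⁻ ω, GG ω ∂P
        ≤ ENNReal.ofReal KC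
          * (ENNReal.ofReal (A^p * T^e) * (ENNReal.ofReal T * ENNReal.ofReal T)) :=
          mul_le_mul_right hGGbound _
    _ = ENNReal.ofReal (KC * (A^p * T^e * (T * T))) := by
        rw [← ENNReal.ofReal_mul hT.le, ← ENNReal.ofReal_mul (by positivity),
          ← ENNReal.ofReal_mul hKCpos.le]
  refine htotal.trans (le_of_eq ?_)
  congr 1
  have hTpow : T^((δ - γ)*p) * T^e * (T*T) = T^((lam/2 - γ)*p) := by
    have h1 : T^((δ - γ)*p) * T^e * (T*T) = T^((δ - γ)*p + e + 1 + 1) := by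
      rw [Real.rpow_add hT, Real.rpow_add hT, Real.rpow_add hT, Real.rpow_one]
      ring
    have h2 : (δ - γ)*p + e + 1 + 1 = (lam/2 - γ)*p := by
      rw [hδdef, hedef, hκdef]
      field_simp
      ring
    rw [h1, h2]
  rw [hKCdef]
  calc (T^((δ - γ)*p) * (8 * 4^(1/p) * (κ/δ))^p) * (A^p * T^e * (T * T))
      = (T^((δ - γ)*p) * T^e * (T*T)) * (8 * 4^(1/p) * (κ/δ))^p * A^p := by ring
  _ = T^((lam/2 - γ)*p) * (8 * 4^(1/p) * (κ/δ))^p * A^p := by rw [hTpow]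
end

section
/- Let (Ω, 𝔽, P) be a probability space, Y : Ω → [0,∞) a random variable, n ≥ 1 an integer, M > 0 and p₀ ≥ 2 a real number. Assume that E[Y^p] ≤ M^p (p − 1)^{np/2} for every real p ≥ p₀. Then for every v with 0 < v < n / (2e · M^{2/n}), one has E[exp(v · Y^{2/n})] < ∞. -/
open MeasureTheory ENNReal

lemma pow_self_le_factorial_mul_exp (k : ℕ) :
    (k : ℝ) ^ k ≤ (k.factorial : ℝ) * Real.exp 1 ^ k := by
  have h := Real.sum_le_exp_of_nonneg (x := (k:ℝ)) (by positivity) (k+1)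
  have hterm : (k:ℝ)^k / (k.factorial : ℝ) ≤
      ∑ i ∈ Finset.range (k+1), (k:ℝ)^i / (i.factorial : ℝ) :=
    Finset.single_le_sum (f := fun i => (k:ℝ)^i / (i.factorial : ℝ))
      (fun i _ => by positivity) (Finset.self_mem_range_succ k)
  have h2 : (k:ℝ)^k / (k.factorial : ℝ) ≤ Real.exp k := hterm.trans h
  have hfac : (0:ℝ) < k.factorial := by positivity
  rw [div_le_iff₀ hfac] at h2
  have h3 : Real.exp (k:ℝ) = Real.exp 1 ^ k := by rw [← Real.exp_nat_mul, mul_one]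
  rw [h3] at h2
  linarith [h2]

/-- Finiteness of stretched-exponential moments from Wiener-chaos-type
moment growth. -/
theorem exp_moment_finite
    {Ω : Type*} [MeasurableSpace Ω] (P : Measure Ω) [IsProbabilityMeasure P]
    (Y : Ω → ℝ) (hmeas : Measurable Y) (hYnonneg : ∀ ω, 0 ≤ Y ω)
    (n : ℕ) (hn : 1 ≤ n) (M : ℝ) (hM : 0 < M) (p₀ : ℝ) (hp₀ : 2 ≤ p₀)
    (hmom : ∀ p : ℝ, p₀ ≤ p →
      ∫⁻ ω, ENNReal.ofReal (Y ω ^ p) ∂P ≤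
        ENNReal.ofReal (M ^ p * (p - 1) ^ ((n : ℝ) * p / 2)))
    (v : ℝ) (hv0 : 0 < v)
    (hv : v < (n : ℝ) / (2 * Real.exp 1 * M ^ (2 / (n : ℝ)))) :
    ∫⁻ ω, ENNReal.ofReal (Real.exp (v * Y ω ^ (2 / (n : ℝ)))) ∂P < ⊤ := by
  have hnpos : (0:ℝ) < (n:ℝ) := by exact_mod_cast Nat.pos_of_ne_zero (by omega)
  have hMpow : (0:ℝ) < M ^ (2/(n:ℝ)) := Real.rpow_pos_of_pos hM _
  have hepos : (0:ℝ) < Real.exp 1 := Real.exp_pos 1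
  set r : ℝ := 2 * v * M ^ (2/(n:ℝ)) / n * Real.exp 1 with hr
  have hrnn : 0 ≤ r := by positivity
  have hr1 : r < 1 := by
    have hd : (0:ℝ) < 2 * Real.exp 1 * M ^ (2/(n:ℝ)) := by positivity
    have h1 : v * (2 * Real.exp 1 * M ^ (2/(n:ℝ))) < n := (lt_div_iff₀ hd).mp hv
    rw [hr, div_mul_eq_mul_div, div_lt_one hnpos]
    nlinarith [h1]
  -- constants
  set Creal : ℝ := 1 + M ^ p₀ * (p₀ - 1) ^ ((n:ℝ) * p₀ / 2) with hCreal
  have hXnn : 0 ≤ M ^ p₀ * (p₀ - 1) ^ ((n:ℝ) * p₀ / 2) := by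
    have h1 : (0:ℝ) < p₀ - 1 := by linarith
    positivity
  have hCnn : 0 ≤ Creal := by positivity
  -- the integrand of each term
  set I : ℕ → ℝ≥0∞ := fun k => ∫⁻ ω, ENNReal.ofReal (Y ω ^ (2 * (k:ℝ) / (n:ℝ))) ∂P with hI
  have hvk : ∀ k : ℕ, 0 ≤ v ^ k / (k.factorial : ℝ) := fun k => by positivity
  -- Step A : series expansion of the integral
  have hmeasq : ∀ c : ℝ, Measurable fun ω => ENNReal.ofReal (Y ω ^ c) := by
    intro c
    apply Measurable.ennreal_ofReal
    measurability
  have hA : ∫⁻ ω, ENNReal.ofReal (Real.exp (v * Y ω ^ (2 / (n : ℝ)))) ∂P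
      = ∑' k : ℕ, ENNReal.ofReal (v ^ k / (k.factorial : ℝ)) * I k := by
    have hpt : ∀ ω, ENNReal.ofReal (Real.exp (v * Y ω ^ (2/(n:ℝ)))) =
        ∑' k : ℕ, ENNReal.ofReal (v ^ k / (k.factorial : ℝ)) *
          ENNReal.ofReal (Y ω ^ (2 * (k:ℝ) / (n:ℝ))) := by
      intro ω
      have hx : 0 ≤ Y ω ^ (2/(n:ℝ)) := Real.rpow_nonneg (hYnonneg ω) _
      have hexp : Real.exp (v * Y ω ^ (2/(n:ℝ))) =
          ∑' k : ℕ, (v * Y ω ^ (2/(n:ℝ)))^k / (k.factorial : ℝ) := by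
        rw [Real.exp_eq_exp_ℝ, NormedSpace.exp_eq_tsum_div]
      rw [hexp, ENNReal.ofReal_tsum_of_nonneg (fun k => by positivity)
        (Real.summable_pow_div_factorial _)]
      congr 1; ext k
      rw [← ENNReal.ofReal_mul (hvk k)]
      congr 1
      rw [mul_pow, ← Real.rpow_natCast (Y ω ^ (2/(n:ℝ))) k,
        ← Real.rpow_mul (hYnonneg ω)]
      have he : (2/(n:ℝ)) * k = 2 * (k:ℝ) / (n:ℝ) := by ring
      rw [he]; ring
    simp_rw [hpt]
    rw [lintegral_tsum (fun k => (((hmeasq _).const_mul _).aemeasurable))]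
    congr 1; ext k
    exact lintegral_const_mul' _ _ ENNReal.ofReal_ne_top
  rw [hA]
  -- Step B : bounds on I k
  have hIsmall : ∀ k : ℕ, 2 * (k:ℝ) / (n:ℝ) ≤ p₀ → I k ≤ ENNReal.ofReal Creal := by
    intro k hk
    have hq0 : 0 ≤ 2 * (k:ℝ) / (n:ℝ) := by positivity
    have hptw : ∀ ω, ENNReal.ofReal (Y ω ^ (2 * (k:ℝ) / (n:ℝ))) ≤
        1 + ENNReal.ofReal (Y ω ^ p₀) := by
      intro ω
      rcases le_or_gt (Y ω) 1 with h | h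
      · have : Y ω ^ (2 * (k:ℝ) / (n:ℝ)) ≤ 1 :=
          Real.rpow_le_one (hYnonneg ω) h hq0
        calc ENNReal.ofReal (Y ω ^ (2 * (k:ℝ) / (n:ℝ))) ≤ 1 := by
              simpa using ENNReal.ofReal_le_ofReal this
          _ ≤ _ := le_self_add
      · have : Y ω ^ (2 * (k:ℝ) / (n:ℝ)) ≤ Y ω ^ p₀ :=
          Real.rpow_le_rpow_of_exponent_le h.le hk
        calc ENNReal.ofReal (Y ω ^ (2 * (k:ℝ) / (n:ℝ)))
            ≤ ENNReal.ofReal (Y ω ^ p₀) := ENNReal.ofReal_le_ofReal this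
          _ ≤ _ := le_add_self
    calc I k ≤ ∫⁻ ω, (1 + ENNReal.ofReal (Y ω ^ p₀)) ∂P :=
          lintegral_mono hptw
      _ = 1 + ∫⁻ ω, ENNReal.ofReal (Y ω ^ p₀) ∂P := by
          rw [lintegral_add_left measurable_const]
          simp
      _ ≤ 1 + ENNReal.ofReal (M ^ p₀ * (p₀ - 1) ^ ((n:ℝ) * p₀ / 2)) := by
          gcongr
          exact hmom p₀ le_rfl
      _ = ENNReal.ofReal Creal := by
          rw [hCreal, ENNReal.ofReal_add zero_le_one hXnn, ENNReal.ofReal_one]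
  have hIbig : ∀ k : ℕ, p₀ ≤ 2 * (k:ℝ) / (n:ℝ) →
      ENNReal.ofReal (v ^ k / (k.factorial : ℝ)) * I k ≤ ENNReal.ofReal (r ^ k) := by
    intro k hk
    set q : ℝ := 2 * (k:ℝ) / (n:ℝ) with hqdef
    have hq2 : 2 ≤ q := le_trans hp₀ hk
    have hIk : I k ≤ ENNReal.ofReal (M ^ q * (q - 1) ^ ((n:ℝ) * q / 2)) := hmom q hk
    have hexpk : (n:ℝ) * q / 2 = (k:ℝ) := by
      rw [hqdef]; field_simp
    -- real bound
    have hreal : v ^ k / (k.factorial : ℝ) * (M ^ q * (q - 1) ^ ((n:ℝ) * q / 2))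
        ≤ r ^ k := by
      rw [hexpk, Real.rpow_natCast]
      have h1 : (q - 1) ^ k ≤ q ^ k := by
        apply pow_le_pow_left₀ (by linarith) (by linarith)
      have hMq : M ^ q = (M ^ (2/(n:ℝ))) ^ k := by
        rw [← Real.rpow_natCast (M ^ (2/(n:ℝ))) k, ← Real.rpow_mul hM.le]
        congr 1
        rw [hqdef]; ring
      have hqk : q ^ k = (2 / (n:ℝ)) ^ k * (k:ℝ) ^ k := by
        rw [← mul_pow, hqdef]; congr 1; ring
      have hkfac : (0:ℝ) < k.factorial := by positivity
      have h2 : v ^ k / (k.factorial : ℝ) * (M ^ q * (q - 1) ^ k)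
          ≤ v ^ k / (k.factorial : ℝ) * ((M ^ (2/(n:ℝ))) ^ k * ((2 / (n:ℝ)) ^ k * (k:ℝ) ^ k)) := by
        rw [hMq, ← hqk]
        apply mul_le_mul_of_nonneg_left _ (hvk k)
        exact mul_le_mul_of_nonneg_left h1 (by positivity)
      refine h2.trans ?_
      have h3 : (k:ℝ) ^ k ≤ (k.factorial : ℝ) * Real.exp 1 ^ k :=
        pow_self_le_factorial_mul_exp k
      have h4 : v ^ k / (k.factorial : ℝ) *
          ((M ^ (2/(n:ℝ))) ^ k * ((2 / (n:ℝ)) ^ k * (k:ℝ) ^ k))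
          ≤ v ^ k / (k.factorial : ℝ) *
          ((M ^ (2/(n:ℝ))) ^ k * ((2 / (n:ℝ)) ^ k * ((k.factorial : ℝ) * Real.exp 1 ^ k))) := by
        apply mul_le_mul_of_nonneg_left _ (hvk k)
        apply mul_le_mul_of_nonneg_left _ (by positivity)
        exact mul_le_mul_of_nonneg_left h3 (by positivity)
      refine h4.trans (le_of_eq ?_)
      have hek : Real.exp 1 ^ k = Real.exp (k : ℝ) := by
        rw [← Real.exp_nat_mul, mul_one]
      rw [hr]
      field_simp
      simp only [mul_pow, hek]
      rw [← hek]
      ring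
    calc ENNReal.ofReal (v ^ k / (k.factorial : ℝ)) * I k
        ≤ ENNReal.ofReal (v ^ k / (k.factorial : ℝ)) *
          ENNReal.ofReal (M ^ q * (q - 1) ^ ((n:ℝ) * q / 2)) := by gcongr
      _ = ENNReal.ofReal (v ^ k / (k.factorial : ℝ) *
          (M ^ q * (q - 1) ^ ((n:ℝ) * q / 2))) := (ENNReal.ofReal_mul (hvk k)).symm
      _ ≤ ENNReal.ofReal (r ^ k) := ENNReal.ofReal_le_ofReal hreal
  -- Step C : summable majorant
  have hmaj : ∀ k : ℕ, ENNReal.ofReal (v ^ k / (k.factorial : ℝ)) * I k ≤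
      ENNReal.ofReal (v ^ k / (k.factorial : ℝ) * Creal) + ENNReal.ofReal (r ^ k) := by
    intro k
    rcases le_total (2 * (k:ℝ) / (n:ℝ)) p₀ with h | h
    · calc ENNReal.ofReal (v ^ k / (k.factorial : ℝ)) * I k
          ≤ ENNReal.ofReal (v ^ k / (k.factorial : ℝ)) * ENNReal.ofReal Creal := by
            gcongr; exact hIsmall k h
        _ = ENNReal.ofReal (v ^ k / (k.factorial : ℝ) * Creal) :=
            (ENNReal.ofReal_mul (hvk k)).symm
        _ ≤ _ := le_self_add
    · exact (hIbig k h).trans le_add_self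
  calc ∑' k : ℕ, ENNReal.ofReal (v ^ k / (k.factorial : ℝ)) * I k
      ≤ ∑' k : ℕ, (ENNReal.ofReal (v ^ k / (k.factorial : ℝ) * Creal)
          + ENNReal.ofReal (r ^ k)) := ENNReal.tsum_le_tsum hmaj
    _ = (∑' k : ℕ, ENNReal.ofReal (v ^ k / (k.factorial : ℝ) * Creal))
          + ∑' k : ℕ, ENNReal.ofReal (r ^ k) := ENNReal.tsum_add
    _ < ⊤ := by
        apply ENNReal.add_lt_top.mpr
        constructor
        · rw [← ENNReal.ofReal_tsum_of_nonneg (fun k => mul_nonneg (hvk k) hCnn)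
            ((Real.summable_pow_div_factorial v).mul_right Creal)]
          exact ENNReal.ofReal_lt_top
        · rw [← ENNReal.ofReal_tsum_of_nonneg (fun k => pow_nonneg hrnn k)
            (summable_geometric_of_lt_one hrnn hr1)]
          exact ENNReal.ofReal_lt_top
end

section
/- Let T > 0 and a₊, a₋ > 0, and let a : [0,T] → ℝ be continuous with −a₋ ≤ a(u) ≤ −a₊ for all u ∈ [0,T]. For ω ∈ ℝ³ and 0 ≤ s ≤ t ≤ T set P̂_{s,t}(ω) := exp(∫_s^t a(u) du) · exp(−4π²|ω|²(t − s)). Then there exists a constant C > 0, depending only on a₊ and a₋ (in particular independent of T, ω, s, t and λ), such that for every λ ∈ (0,1) and all 0 ≤ s ≤ t ≤ T: ∫₀^s ( P̂_{u,t}(ω) − P̂_{u,s}(ω) )² du + ∫_s^t P̂_{u,t}(ω)² du ≤ C · (t − s)^λ · (1 + |ω|²)^{−1 + λ}. -/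
open MeasureTheory Set intervalIntegral

lemma aux_min_one_le_rpow {y μ : ℝ} (hy : 0 ≤ y) (hμ0 : 0 ≤ μ) (hμ1 : μ ≤ 1) :
    min 1 y ≤ y ^ μ := by
  rcases le_total 1 y with h | h
  · rw [min_eq_left h]
    exact Real.one_le_rpow h hμ0
  · rw [min_eq_right h]
    rcases eq_or_lt_of_le hy with h0 | h0
    · rw [← h0]
      exact Real.rpow_nonneg le_rfl μ
    · calc y = y ^ (1:ℝ) := (Real.rpow_one y).symm
        _ ≤ y ^ μ := Real.rpow_le_rpow_of_exponent_ge h0 h hμ1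

lemma aux_sq_le_rpow {z y lam : ℝ} (hz0 : 0 ≤ z) (hz1 : z ≤ 1) (hzy : z ≤ y)
    (hy : 0 ≤ y) (hl0 : 0 < lam) (hl1 : lam ≤ 1) : z ^ 2 ≤ y ^ lam := by
  have h1 : z ≤ min 1 y := le_min hz1 hzy
  have h2 : min 1 y ≤ y ^ (lam/2) := aux_min_one_le_rpow hy (by linarith) (by linarith)
  calc z ^ 2 ≤ (y ^ (lam/2)) ^ 2 := pow_le_pow_left₀ hz0 (h1.trans h2) 2
    _ = y ^ lam := by
        rw [← Real.rpow_natCast (y ^ (lam/2)) 2, ← Real.rpow_mul hy]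
        norm_num

lemma aux_integral_exp (k c A B : ℝ) (hk : 0 < k) :
    ∫ u in A..B, Real.exp (-(2*k)*(c-u)) =
      (Real.exp (-(2*k)*(c-B)) - Real.exp (-(2*k)*(c-A)))/(2*k) := by
  have h : ∀ u ∈ uIcc A B, HasDerivAt (fun v => Real.exp (-(2*k)*(c-v)) / (2*k))
      (Real.exp (-(2*k)*(c-u))) u := by
    intro u _
    have h1 : HasDerivAt (fun v => -(2*k)*(c-v)) (2*k) u := by
      have := ((hasDerivAt_id u).const_sub c).const_mul (-(2*k))
      exact this.congr_deriv (by ring)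
    have h2 := (h1.exp).div_const (2*k)
    exact h2.congr_deriv (by rw [mul_div_assoc, div_self (by positivity), mul_one])
  have hcont : IntervalIntegrable (fun u => Real.exp (-(2*k)*(c-u))) volume A B :=
    ((Real.continuous_exp.comp (continuous_const.mul
      (continuous_const.sub continuous_id))).intervalIntegrable _ _)
  rw [intervalIntegral.integral_eq_sub_of_hasDerivAt h hcont]
  ring

lemma aux_exp_diff (I1 I2 c1 c2 : ℝ) :
    Real.exp (I1 + I2) * Real.exp (c1 + c2) - Real.exp I1 * Real.exp c1 =
      Real.exp (I1 + c1) * (Real.exp (I2 + c2) - 1) := by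
  simp only [Real.exp_add]
  ring

/-- Non-autonomous analogue of estimate (44) of Mourrat–Weber–Xu: bound on the
second moment of increments of the Fourier coefficients of the stochastic symbol. -/
theorem fourier_mode_increment_bound
    (aplus aminus : ℝ) (haplus : 0 < aplus) (haminus : 0 < aminus) :
    ∃ C : ℝ, 0 < C ∧
      ∀ (T : ℝ), 0 < T →
      ∀ a : ℝ → ℝ, ContinuousOn a (Icc 0 T) →
        (∀ u ∈ Icc (0:ℝ) T, -aminus ≤ a u ∧ a u ≤ -aplus) →
        ∀ (ω : EuclideanSpace ℝ (Fin 3)) (lam : ℝ), lam ∈ Ioo (0:ℝ) 1 →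
          ∀ s t : ℝ, 0 ≤ s → s ≤ t → t ≤ T →
            (∫ u in (0:ℝ)..s,
                (Real.exp (∫ x in u..t, a x) *
                    Real.exp (-4 * Real.pi ^ 2 * ‖ω‖ ^ 2 * (t - u)) -
                  Real.exp (∫ x in u..s, a x) *
                    Real.exp (-4 * Real.pi ^ 2 * ‖ω‖ ^ 2 * (s - u))) ^ 2) +
              (∫ u in s..t,
                (Real.exp (∫ x in u..t, a x) *
                    Real.exp (-4 * Real.pi ^ 2 * ‖ω‖ ^ 2 * (t - u))) ^ 2) ≤
            C * (t - s) ^ lam * (1 + ‖ω‖ ^ 2) ^ (-1 + lam) := by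
  have hpi : (3:ℝ) < Real.pi := Real.pi_gt_three
  have hpisq : (9:ℝ) < Real.pi^2 := by nlinarith
  set M : ℝ := 2*(aplus+aminus) + 8*Real.pi^2 with hM
  set c : ℝ := min aplus (4*Real.pi^2) with hc
  have hcpos : 0 < c := lt_min haplus (by positivity)
  have hM1 : 1 ≤ M := by rw [hM]; linarith
  refine ⟨M / c, div_pos (by linarith) hcpos, ?_⟩
  intro T hT a ha hb ω lam hlam s t hs hst htT
  obtain ⟨hl0, hl1⟩ := hlam
  set r : ℝ := ‖ω‖^2 with hr
  have hr0 : 0 ≤ r := by rw [hr]; positivity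
  set κ : ℝ := 4*Real.pi^2*r with hκ
  have hκ0 : 0 ≤ κ := by rw [hκ]; positivity
  set k : ℝ := aplus + κ with hk
  have hkpos : 0 < k := by rw [hk]; positivity
  set m : ℝ := aminus + κ with hm
  have hmpos : 0 < m := by rw [hm]; positivity
  have hts : 0 ≤ t - s := by linarith
  have hsT : s ≤ T := le_trans hst htT
  -- interval integrability of a
  have haInt : ∀ u v : ℝ, u ∈ Icc (0:ℝ) T → v ∈ Icc (0:ℝ) T →
      IntervalIntegrable a volume u v := by
    intro u v hu hv
    exact (ha.mono (uIcc_subset_Icc hu hv)).intervalIntegrable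
  -- bounds on the integral of a
  have hIub : ∀ u v : ℝ, 0 ≤ u → u ≤ v → v ≤ T → (∫ x in u..v, a x) ≤ -aplus*(v-u) := by
    intro u v hu huv hvT
    have h1 : (∫ x in u..v, a x) ≤ ∫ _x in u..v, (-aplus : ℝ) := by
      apply intervalIntegral.integral_mono_on huv
        (haInt u v ⟨hu, le_trans huv hvT⟩ ⟨le_trans hu huv, hvT⟩)
        intervalIntegrable_const
      intro x hx
      exact (hb x ⟨le_trans hu hx.1, le_trans hx.2 hvT⟩).2
    rw [intervalIntegral.integral_const, smul_eq_mul] at h1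
    linarith
  have hIlb : ∀ u v : ℝ, 0 ≤ u → u ≤ v → v ≤ T → -aminus*(v-u) ≤ ∫ x in u..v, a x := by
    intro u v hu huv hvT
    have h1 : (∫ _x in u..v, (-aminus : ℝ)) ≤ ∫ x in u..v, a x := by
      apply intervalIntegral.integral_mono_on huv intervalIntegrable_const
        (haInt u v ⟨hu, le_trans huv hvT⟩ ⟨le_trans hu huv, hvT⟩)
      intro x hx
      exact (hb x ⟨le_trans hu hx.1, le_trans hx.2 hvT⟩).1
    rw [intervalIntegral.integral_const, smul_eq_mul] at h1
    linarith
  -- continuity of the primitives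
  have haIntOn : ∀ v : ℝ, 0 ≤ v → v ≤ T → IntegrableOn a (uIcc 0 v) volume := by
    intro v hv hvT
    rw [uIcc_of_le hv]
    exact (ha.mono (Icc_subset_Icc le_rfl hvT)).integrableOn_Icc
  have hcont_t : ContinuousOn (fun u => ∫ x in u..t, a x) (Icc 0 t) := by
    have := intervalIntegral.continuousOn_primitive_interval_left
      (haIntOn t (le_trans hs hst) htT)
    rwa [uIcc_of_le (le_trans hs hst)] at this
  have hcont_s : ContinuousOn (fun u => ∫ x in u..s, a x) (Icc 0 s) := by
    have := intervalIntegral.continuousOn_primitive_interval_left (haIntOn s hs hsT)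
    rwa [uIcc_of_le hs] at this
  have hexp_t : Continuous fun u : ℝ => Real.exp (-4 * Real.pi ^ 2 * ‖ω‖ ^ 2 * (t - u)) :=
    Real.continuous_exp.comp (continuous_const.mul (continuous_const.sub continuous_id))
  have hexp_s : Continuous fun u : ℝ => Real.exp (-4 * Real.pi ^ 2 * ‖ω‖ ^ 2 * (s - u)) :=
    Real.continuous_exp.comp (continuous_const.mul (continuous_const.sub continuous_id))
  -- pointwise bound on the first integrand
  have hpt1 : ∀ u ∈ Icc (0:ℝ) s,
      (Real.exp (∫ x in u..t, a x) * Real.exp (-4 * Real.pi ^ 2 * ‖ω‖ ^ 2 * (t - u)) -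
        Real.exp (∫ x in u..s, a x) * Real.exp (-4 * Real.pi ^ 2 * ‖ω‖ ^ 2 * (s - u))) ^ 2 ≤
      Real.exp (-(2*k)*(s-u)) * (m*(t-s)) ^ lam := by
    intro u hu
    obtain ⟨hu0, hus⟩ := hu
    have hsu : 0 ≤ s - u := by linarith
    have hsplit : (∫ x in u..t, a x) = (∫ x in u..s, a x) + ∫ x in s..t, a x :=
      (intervalIntegral.integral_add_adjacent_intervals
        (haInt u s ⟨hu0, le_trans hus hsT⟩ ⟨hs, hsT⟩)
        (haInt s t ⟨hs, hsT⟩ ⟨le_trans hs hst, htT⟩)).symm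
    have hc1 : -4 * Real.pi ^ 2 * ‖ω‖ ^ 2 * (t - u) =
        -4 * Real.pi ^ 2 * ‖ω‖ ^ 2 * (s - u) + -4 * Real.pi ^ 2 * ‖ω‖ ^ 2 * (t - s) := by
      ring
    have hXYZ : Real.exp (∫ x in u..t, a x) *
        Real.exp (-4 * Real.pi ^ 2 * ‖ω‖ ^ 2 * (t - u)) -
        Real.exp (∫ x in u..s, a x) * Real.exp (-4 * Real.pi ^ 2 * ‖ω‖ ^ 2 * (s - u)) =
        Real.exp ((∫ x in u..s, a x) + -4 * Real.pi ^ 2 * ‖ω‖ ^ 2 * (s - u)) *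
          (Real.exp ((∫ x in s..t, a x) + -4 * Real.pi ^ 2 * ‖ω‖ ^ 2 * (t - s)) - 1) := by
      rw [hsplit, hc1]
      exact aux_exp_diff _ _ _ _
    rw [hXYZ, mul_pow]
    have hκs : -4 * Real.pi ^ 2 * ‖ω‖ ^ 2 * (s - u) = -(κ*(s-u)) := by
      rw [hκ, hr]; ring
    have hκt : -4 * Real.pi ^ 2 * ‖ω‖ ^ 2 * (t - s) = -(κ*(t-s)) := by
      rw [hκ, hr]; ring
    have hint1 := hIub u s hu0 hus hsT
    have hprodk : k*(s-u) = aplus*(s-u) + κ*(s-u) := by rw [hk]; ring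
    have hYle : (∫ x in u..s, a x) + -4 * Real.pi ^ 2 * ‖ω‖ ^ 2 * (s - u) ≤ -(k*(s-u)) := by
      rw [hκs]
      linarith
    have hexpY2 : Real.exp ((∫ x in u..s, a x) + -4 * Real.pi ^ 2 * ‖ω‖ ^ 2 * (s - u)) ^ 2 ≤
        Real.exp (-(2*k)*(s-u)) := by
      rw [sq, ← Real.exp_add]
      apply Real.exp_le_exp.mpr
      have : -(2*k)*(s-u) = -(k*(s-u)) + -(k*(s-u)) := by ring
      rw [this]
      exact add_le_add hYle hYle
    have hint2 := hIub s t hs hst htT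
    have hint3 := hIlb s t hs hst htT
    have hZub : (∫ x in s..t, a x) + -4 * Real.pi ^ 2 * ‖ω‖ ^ 2 * (t - s) ≤ 0 := by
      rw [hκt]
      have h1 : 0 ≤ aplus*(t-s) := mul_nonneg haplus.le hts
      have h2 : 0 ≤ κ*(t-s) := mul_nonneg hκ0 hts
      linarith
    have hZlb : -(m*(t-s)) ≤ (∫ x in s..t, a x) + -4 * Real.pi ^ 2 * ‖ω‖ ^ 2 * (t - s) := by
      rw [hκt]
      have hprodm : m*(t-s) = aminus*(t-s) + κ*(t-s) := by rw [hm]; ring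
      linarith
    have hsq : (Real.exp ((∫ x in s..t, a x) + -4 * Real.pi ^ 2 * ‖ω‖ ^ 2 * (t - s)) - 1) ^ 2 ≤
        (m*(t-s)) ^ lam := by
      have h1 : (Real.exp ((∫ x in s..t, a x) + -4 * Real.pi ^ 2 * ‖ω‖ ^ 2 * (t - s)) - 1) ^ 2 =
          (1 - Real.exp ((∫ x in s..t, a x) + -4 * Real.pi ^ 2 * ‖ω‖ ^ 2 * (t - s))) ^ 2 := by
        ring
      rw [h1]
      apply aux_sq_le_rpow _ _ _ (mul_nonneg (le_of_lt hmpos) hts) hl0 (le_of_lt hl1)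
      · have := Real.exp_le_one_iff.mpr hZub
        linarith
      · have := Real.exp_pos ((∫ x in s..t, a x) + -4 * Real.pi ^ 2 * ‖ω‖ ^ 2 * (t - s))
        linarith
      · have h2 := Real.exp_le_exp.mpr hZlb
        have h3 := Real.add_one_le_exp (-(m*(t-s)))
        linarith
    exact mul_le_mul hexpY2 hsq (sq_nonneg _) (Real.exp_nonneg _)
  -- pointwise bound on the second integrand
  have hpt2 : ∀ u ∈ Icc s t,
      (Real.exp (∫ x in u..t, a x) * Real.exp (-4 * Real.pi ^ 2 * ‖ω‖ ^ 2 * (t - u))) ^ 2 ≤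
      Real.exp (-(2*k)*(t-u)) := by
    intro u hu
    obtain ⟨hsu, hut⟩ := hu
    have hu0 : 0 ≤ u := le_trans hs hsu
    have hκu : -4 * Real.pi ^ 2 * ‖ω‖ ^ 2 * (t - u) = -(κ*(t-u)) := by
      rw [hκ, hr]; ring
    have hint := hIub u t hu0 hut htT
    have hκnn : 0 ≤ κ*(t-u) := mul_nonneg hκ0 (by linarith)
    have hprod : (2*k)*(t-u) = 2*(aplus*(t-u)) + 2*(κ*(t-u)) := by rw [hk]; ring
    rw [hκu, ← Real.exp_add, sq, ← Real.exp_add]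
    apply Real.exp_le_exp.mpr
    linarith
  -- integrability of the integrands
  have hInt1 : IntervalIntegrable (fun u =>
      (Real.exp (∫ x in u..t, a x) * Real.exp (-4 * Real.pi ^ 2 * ‖ω‖ ^ 2 * (t - u)) -
        Real.exp (∫ x in u..s, a x) * Real.exp (-4 * Real.pi ^ 2 * ‖ω‖ ^ 2 * (s - u))) ^ 2)
      volume 0 s := by
    apply ContinuousOn.intervalIntegrable
    rw [uIcc_of_le hs]
    apply ContinuousOn.pow
    apply ContinuousOn.sub
    · exact ((Real.continuous_exp.comp_continuousOn
        (hcont_t.mono (Icc_subset_Icc le_rfl hst))).mul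
        hexp_t.continuousOn)
    · exact ((Real.continuous_exp.comp_continuousOn hcont_s).mul
        hexp_s.continuousOn)
  have hInt2 : IntervalIntegrable (fun u =>
      (Real.exp (∫ x in u..t, a x) * Real.exp (-4 * Real.pi ^ 2 * ‖ω‖ ^ 2 * (t - u))) ^ 2)
      volume s t := by
    apply ContinuousOn.intervalIntegrable
    rw [uIcc_of_le hst]
    apply ContinuousOn.pow
    exact ((Real.continuous_exp.comp_continuousOn
        (hcont_t.mono (Icc_subset_Icc hs le_rfl))).mul
      hexp_t.continuousOn)
  -- bound the first integral
  have hI1 : (∫ u in (0:ℝ)..s,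
      (Real.exp (∫ x in u..t, a x) * Real.exp (-4 * Real.pi ^ 2 * ‖ω‖ ^ 2 * (t - u)) -
        Real.exp (∫ x in u..s, a x) * Real.exp (-4 * Real.pi ^ 2 * ‖ω‖ ^ 2 * (s - u))) ^ 2) ≤
      (m*(t-s)) ^ lam / (2*k) := by
    have step1 : (∫ u in (0:ℝ)..s,
        (Real.exp (∫ x in u..t, a x) * Real.exp (-4 * Real.pi ^ 2 * ‖ω‖ ^ 2 * (t - u)) -
          Real.exp (∫ x in u..s, a x) * Real.exp (-4 * Real.pi ^ 2 * ‖ω‖ ^ 2 * (s - u))) ^ 2) ≤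
        ∫ u in (0:ℝ)..s, Real.exp (-(2*k)*(s-u)) * (m*(t-s)) ^ lam := by
      apply intervalIntegral.integral_mono_on hs hInt1 _ hpt1
      exact ((Real.continuous_exp.comp (continuous_const.mul
        (continuous_const.sub continuous_id))).mul continuous_const).intervalIntegrable _ _
    have step2 : (∫ u in (0:ℝ)..s, Real.exp (-(2*k)*(s-u)) * (m*(t-s)) ^ lam) =
        (∫ u in (0:ℝ)..s, Real.exp (-(2*k)*(s-u))) * (m*(t-s)) ^ lam :=
      intervalIntegral.integral_mul_const _ _
    have hbd : (∫ u in (0:ℝ)..s, Real.exp (-(2*k)*(s-u))) ≤ 1/(2*k) := by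
      rw [aux_integral_exp k s 0 s hkpos]
      have h1 : Real.exp (-(2*k)*(s-s)) = 1 := by norm_num
      have h2 : 0 < Real.exp (-(2*k)*(s-0)) := Real.exp_pos _
      rw [h1]
      exact div_le_div_of_nonneg_right (by linarith) (by positivity)
    have hfin : (∫ u in (0:ℝ)..s, Real.exp (-(2*k)*(s-u)) * (m*(t-s)) ^ lam) ≤
        (m*(t-s)) ^ lam / (2*k) := by
      rw [step2]
      have h3 := mul_le_mul_of_nonneg_right hbd (Real.rpow_nonneg
        (mul_nonneg (le_of_lt hmpos) hts) lam)
      calc (∫ u in (0:ℝ)..s, Real.exp (-(2*k)*(s-u))) * (m*(t-s)) ^ lam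
          ≤ 1/(2*k) * (m*(t-s)) ^ lam := h3
        _ = (m*(t-s)) ^ lam / (2*k) := by ring
    exact step1.trans hfin
  -- bound the second integral
  have hI2 : (∫ u in s..t,
      (Real.exp (∫ x in u..t, a x) * Real.exp (-4 * Real.pi ^ 2 * ‖ω‖ ^ 2 * (t - u))) ^ 2) ≤
      ((2*k)*(t-s)) ^ lam / (2*k) := by
    have step1 : (∫ u in s..t,
        (Real.exp (∫ x in u..t, a x) * Real.exp (-4 * Real.pi ^ 2 * ‖ω‖ ^ 2 * (t - u))) ^ 2) ≤
        ∫ u in s..t, Real.exp (-(2*k)*(t-u)) := by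
      apply intervalIntegral.integral_mono_on hst hInt2 _ hpt2
      exact (Real.continuous_exp.comp (continuous_const.mul
        (continuous_const.sub continuous_id))).intervalIntegrable _ _
    have hmin : Real.exp (-(2*k)*(t-t)) - Real.exp (-(2*k)*(t-s)) ≤ min 1 ((2*k)*(t-s)) := by
      have h1 : Real.exp (-(2*k)*(t-t)) = 1 := by norm_num
      rw [h1]
      apply le_min
      · have := Real.exp_pos (-(2*k)*(t-s))
        linarith
      · have h3 := Real.add_one_le_exp (-((2*k)*(t-s)))
        have h4 : -((2*k)*(t-s)) = -(2*k)*(t-s) := by ring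
        rw [h4] at h3
        linarith
    have hrp : min 1 ((2*k)*(t-s)) ≤ ((2*k)*(t-s)) ^ lam :=
      aux_min_one_le_rpow (by positivity) (le_of_lt hl0) (le_of_lt hl1)
    have hfin : (∫ u in s..t, Real.exp (-(2*k)*(t-u))) ≤ ((2*k)*(t-s)) ^ lam / (2*k) := by
      rw [aux_integral_exp k t s t hkpos]
      exact div_le_div_of_nonneg_right (hmin.trans hrp) (by positivity)
    exact step1.trans hfin
  -- final algebra
  have h1r : (0:ℝ) < 1 + r := by linarith
  have halg : (m*(t-s)) ^ lam / (2*k) + ((2*k)*(t-s)) ^ lam / (2*k) ≤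
      M / c * (t - s) ^ lam * (1 + r) ^ (-1 + lam) := by
    have hf1 : aminus ≤ M := by rw [hM]; linarith
    have hf2 : 4*Real.pi^2 ≤ M := by rw [hM]; linarith
    have hf3 : 2*aplus ≤ M := by rw [hM]; linarith
    have hf4 : 8*Real.pi^2 ≤ M := by rw [hM]; linarith
    have hmM : m ≤ M*(1+r) := by
      have h1 := mul_le_mul_of_nonneg_right hf2 hr0
      have h2 : M*(1+r) = M + M*r := by ring
      rw [hm, hκ]
      linarith
    have hkM : 2*k ≤ M*(1+r) := by
      have h1 := mul_le_mul_of_nonneg_right hf4 hr0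
      have h2 : M*(1+r) = M + M*r := by ring
      rw [hk, hκ]
      linarith
    have hck : 2*(c*(1+r)) ≤ 2*k := by
      have h1 : c ≤ aplus := min_le_left _ _
      have h2 : c ≤ 4*Real.pi^2 := min_le_right _ _
      have h3 := mul_le_mul_of_nonneg_right h2 hr0
      have h4 : 2*(c*(1+r)) = 2*c + 2*(c*r) := by ring
      rw [hk, hκ]
      linarith
    have e1 : (m*(t-s)) ^ lam ≤ (M*(1+r)) ^ lam * (t-s) ^ lam := by
      rw [← Real.mul_rpow (by positivity) hts]
      exact Real.rpow_le_rpow (mul_nonneg (le_of_lt hmpos) hts)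
        (mul_le_mul_of_nonneg_right hmM hts) (le_of_lt hl0)
    have e2 : ((2*k)*(t-s)) ^ lam ≤ (M*(1+r)) ^ lam * (t-s) ^ lam := by
      rw [← Real.mul_rpow (by positivity) hts]
      exact Real.rpow_le_rpow (by positivity)
        (mul_le_mul_of_nonneg_right hkM hts) (le_of_lt hl0)
    have hnum : (m*(t-s)) ^ lam + ((2*k)*(t-s)) ^ lam ≤
        2*((M*(1+r)) ^ lam * (t-s) ^ lam) := by
      linarith
    have hden : (0:ℝ) < 2*(c*(1+r)) := by positivity
    calc (m*(t-s)) ^ lam / (2*k) + ((2*k)*(t-s)) ^ lam / (2*k)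
        = ((m*(t-s)) ^ lam + ((2*k)*(t-s)) ^ lam) / (2*k) := by ring
      _ ≤ (2*((M*(1+r)) ^ lam * (t-s) ^ lam)) / (2*k) :=
          div_le_div_of_nonneg_right hnum (by positivity)
      _ ≤ (2*((M*(1+r)) ^ lam * (t-s) ^ lam)) / (2*(c*(1+r))) :=
          div_le_div_of_nonneg_left (by positivity) hden hck
      _ = (M*(1+r)) ^ lam * (t-s) ^ lam / (c*(1+r)) := by
          rw [div_eq_div_iff (by positivity) (by positivity)]
          ring
      _ = M ^ lam * (1+r) ^ lam * (t-s) ^ lam / (c*(1+r)) := by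
          rw [Real.mul_rpow (by linarith) (le_of_lt h1r)]
      _ ≤ M * (1+r) ^ lam * (t-s) ^ lam / (c*(1+r)) := by
          have hMlam : M ^ lam ≤ M := by
            have := Real.rpow_le_rpow_of_exponent_le hM1 (le_of_lt hl1)
            rwa [Real.rpow_one] at this
          gcongr
      _ = M / c * (t - s) ^ lam * (1 + r) ^ (-1 + lam) := by
          rw [Real.rpow_add h1r, Real.rpow_neg_one]
          have hcne : c ≠ 0 := ne_of_gt hcpos
          have hrne : (1+r) ≠ 0 := ne_of_gt h1r
          field_simp
  have hsum := add_le_add hI1 hI2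
  exact hsum.trans halg
end

section
/- Let (X, ‖·‖) be a normed vector space, T > 0, and 0 < γ < γ'. Let f : [0,T] → X be such that [f]_{γ',[0,T]} < ∞. Then the function g : [0,T] → [0,∞) defined by g(t) := [f|_{[0,t]}]_{γ,[0,t]} (with g(0) := 0) is nondecreasing and continuous on [0,T]. -/
open Set
open scoped ENNReal

/-- The `γ`-Hölder seminorm of `f` on a set `I ⊆ ℝ`, with values in `[0,∞]`. -/
noncomputable def holderSemi {X : Type*} [NormedAddCommGroup X]
    (f : ℝ → X) (γ : ℝ) (I : Set ℝ) : ℝ≥0∞ :=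
  ⨆ (s : I) (t : I) (_ : (s : ℝ) < (t : ℝ)),
    ENNReal.ofReal (‖f (t : ℝ) - f (s : ℝ)‖ / ((t : ℝ) - (s : ℝ)) ^ γ)

private lemma le_hs {X : Type*} [NormedAddCommGroup X] {f : ℝ → X} {γ : ℝ} {I : Set ℝ}
    {s t : ℝ} (hs : s ∈ I) (ht : t ∈ I) (hst : s < t) :
    ENNReal.ofReal (‖f t - f s‖ / (t - s) ^ γ) ≤ holderSemi f γ I :=
  le_iSup_of_le ⟨s, hs⟩ (le_iSup_of_le ⟨t, ht⟩ (le_iSup_of_le hst le_rfl))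

private lemma hs_le {X : Type*} [NormedAddCommGroup X] {f : ℝ → X} {γ : ℝ} {I : Set ℝ}
    {c : ℝ≥0∞} (h : ∀ s ∈ I, ∀ t ∈ I, s < t →
      ENNReal.ofReal (‖f t - f s‖ / (t - s) ^ γ) ≤ c) :
    holderSemi f γ I ≤ c :=
  iSup_le fun s => iSup_le fun t => iSup_le fun hst => h s s.2 t t.2 hst

/-- If `f` is `γ'`-Hölder on `[0,T]` for some `γ' > γ`, then the running
`γ`-Hölder seminorm `t ↦ [f]_{γ,[0,t]}` is finite, nondecreasing and
continuous on `[0,T]`. -/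
theorem holderSemi_running_continuous {X : Type*} [NormedAddCommGroup X]
    (T γ γ' : ℝ) (hT : 0 < T) (hγ : 0 < γ) (hγγ' : γ < γ')
    (f : ℝ → X) (hf : holderSemi f γ' (Icc 0 T) < ⊤) :
    MonotoneOn (fun t => holderSemi f γ (Icc 0 t)) (Icc 0 T) ∧
    ContinuousOn (fun t => holderSemi f γ (Icc 0 t)) (Icc 0 T) ∧
    ∀ t ∈ Icc (0:ℝ) T, holderSemi f γ (Icc 0 t) < ⊤ := by
  set δ := γ' - γ with hδdef
  have hδ : 0 < δ := sub_pos.mpr hγγ'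
  set M : ℝ := (holderSemi f γ' (Icc 0 T)).toReal with hMdef
  have hM0 : 0 ≤ M := ENNReal.toReal_nonneg
  -- Step 1: pointwise Hölder bound
  have step1 : ∀ s ∈ Icc (0:ℝ) T, ∀ u ∈ Icc (0:ℝ) T, s < u →
      ‖f u - f s‖ ≤ M * (u - s) ^ γ' := by
    intro s hs u hu hsu
    have hpos : (0:ℝ) < (u - s) ^ γ' := Real.rpow_pos_of_pos (by linarith) _
    have h1 : ENNReal.ofReal (‖f u - f s‖ / (u - s) ^ γ') ≤ holderSemi f γ' (Icc 0 T) :=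
      le_hs hs hu hsu
    have h2 : ‖f u - f s‖ / (u - s) ^ γ' ≤ M := by
      have h3 := ENNReal.toReal_mono hf.ne h1
      rwa [ENNReal.toReal_ofReal (by positivity)] at h3
    calc ‖f u - f s‖ = ‖f u - f s‖ / (u - s) ^ γ' * (u - s) ^ γ' := by
          field_simp
      _ ≤ M * (u - s) ^ γ' := mul_le_mul_of_nonneg_right h2 hpos.le
  -- term bound with exponent γ
  have term_bound : ∀ s u : ℝ, 0 ≤ s → s < u → u ≤ T →
      ‖f u - f s‖ / (u - s) ^ γ ≤ M * (u - s) ^ δ := by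
    intro s u hs hsu huT
    have hpos : (0:ℝ) < u - s := by linarith
    have h1 := step1 s ⟨hs, by linarith⟩ u ⟨by linarith, huT⟩ hsu
    rw [div_le_iff₀ (Real.rpow_pos_of_pos hpos γ)]
    calc ‖f u - f s‖ ≤ M * (u - s) ^ γ' := h1
      _ = M * (u - s) ^ δ * (u - s) ^ γ := by
          rw [mul_assoc, ← Real.rpow_add hpos]
          rw [hδdef, sub_add_cancel]
  -- Step 2: finiteness
  have fin : ∀ t ∈ Icc (0:ℝ) T, holderSemi f γ (Icc 0 t) ≤ ENNReal.ofReal (M * T ^ δ) := by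
    intro t ht
    apply hs_le
    intro s hs u hu hsu
    apply ENNReal.ofReal_le_ofReal
    calc ‖f u - f s‖ / (u - s) ^ γ ≤ M * (u - s) ^ δ :=
          term_bound s u hs.1 hsu (hu.2.trans ht.2)
      _ ≤ M * T ^ δ := by
          gcongr
          · linarith [hs.1, hu.2.trans ht.2]
  have fin' : ∀ t ∈ Icc (0:ℝ) T, holderSemi f γ (Icc 0 t) ≠ ⊤ :=
    fun t ht => ((fin t ht).trans_lt ENNReal.ofReal_lt_top).ne
  -- monotone
  have mono : MonotoneOn (fun t => holderSemi f γ (Icc 0 t)) (Icc 0 T) := by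
    intro a ha b hb hab
    exact hs_le fun s hs u hu hsu =>
      le_hs (Icc_subset_Icc_right hab hs) (Icc_subset_Icc_right hab hu) hsu
  -- key almost-subadditivity
  have key : ∀ a ∈ Icc (0:ℝ) T, ∀ b ∈ Icc (0:ℝ) T, a ≤ b →
      holderSemi f γ (Icc 0 b) ≤ holderSemi f γ (Icc 0 a)
        + ENNReal.ofReal (M * (b - a) ^ δ) := by
    intro a ha b hb hab
    apply hs_le
    intro s hs u hu hsu
    by_cases hua : u ≤ a
    · have m1 : s ∈ Icc (0:ℝ) a := ⟨hs.1, by linarith⟩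
      have m2 : u ∈ Icc (0:ℝ) a := ⟨hu.1, hua⟩
      exact le_trans (le_hs m1 m2 hsu) le_self_add
    · push_neg at hua
      by_cases hsa : a ≤ s
      · refine le_trans (ENNReal.ofReal_le_ofReal ?_) le_add_self
        calc ‖f u - f s‖ / (u - s) ^ γ ≤ M * (u - s) ^ δ :=
              term_bound s u hs.1 hsu (hu.2.trans hb.2)
          _ ≤ M * (b - a) ^ δ := by
              gcongr
              · linarith [hu.2]
      · push_neg at hsa
        have hupos : (0:ℝ) < u - a := by linarith
        have hspos : (0:ℝ) < a - s := by linarith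
        have huspos : (0:ℝ) < u - s := by linarith
        have hA : ‖f a - f s‖ / (a - s) ^ γ ≤ (holderSemi f γ (Icc 0 a)).toReal := by
          have h1 : ENNReal.ofReal (‖f a - f s‖ / (a - s) ^ γ) ≤ holderSemi f γ (Icc 0 a) :=
            le_hs ⟨hs.1, hsa.le⟩ ⟨ha.1, le_refl a⟩ hsa
          have h3 := ENNReal.toReal_mono (fin' a ha) h1
          rwa [ENNReal.toReal_ofReal (by positivity)] at h3
        have hreal : ‖f u - f s‖ / (u - s) ^ γ
            ≤ (holderSemi f γ (Icc 0 a)).toReal + M * (b - a) ^ δ := by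
          have htri : ‖f u - f s‖ ≤ ‖f u - f a‖ + ‖f a - f s‖ := norm_sub_le_norm_sub_add_norm_sub _ _ _
          calc ‖f u - f s‖ / (u - s) ^ γ
              ≤ (‖f u - f a‖ + ‖f a - f s‖) / (u - s) ^ γ := by gcongr
            _ = ‖f u - f a‖ / (u - s) ^ γ + ‖f a - f s‖ / (u - s) ^ γ := add_div _ _ _
            _ ≤ ‖f u - f a‖ / (u - a) ^ γ + ‖f a - f s‖ / (a - s) ^ γ := by
                have h1 : (0:ℝ) < (u - a) ^ γ := Real.rpow_pos_of_pos hupos _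
                have h2 : (0:ℝ) < (a - s) ^ γ := Real.rpow_pos_of_pos hspos _
                have h3 : (u - a) ^ γ ≤ (u - s) ^ γ :=
                  Real.rpow_le_rpow hupos.le (by linarith) hγ.le
                have h4 : (a - s) ^ γ ≤ (u - s) ^ γ :=
                  Real.rpow_le_rpow hspos.le (by linarith) hγ.le
                exact add_le_add (div_le_div_of_nonneg_left (norm_nonneg _) h1 h3)
                  (div_le_div_of_nonneg_left (norm_nonneg _) h2 h4)
            _ ≤ M * (u - a) ^ δ + (holderSemi f γ (Icc 0 a)).toReal := by
                gcongr
                exact term_bound a u ha.1 hua (hu.2.trans hb.2)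
            _ ≤ (holderSemi f γ (Icc 0 a)).toReal + M * (b - a) ^ δ := by
                have e1 : (u - a) ^ δ ≤ (b - a) ^ δ :=
                  Real.rpow_le_rpow hupos.le (by linarith [hu.2]) hδ.le
                have e2 := mul_le_mul_of_nonneg_left e1 hM0
                linarith
        calc ENNReal.ofReal (‖f u - f s‖ / (u - s) ^ γ)
            ≤ ENNReal.ofReal ((holderSemi f γ (Icc 0 a)).toReal + M * (b - a) ^ δ) :=
              ENNReal.ofReal_le_ofReal hreal
          _ ≤ ENNReal.ofReal (holderSemi f γ (Icc 0 a)).toReal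
              + ENNReal.ofReal (M * (b - a) ^ δ) := ENNReal.ofReal_add_le
          _ = holderSemi f γ (Icc 0 a) + ENNReal.ofReal (M * (b - a) ^ δ) := by
              rw [ENNReal.ofReal_toReal (fin' a ha)]
  -- real-valued version
  set h : ℝ → ℝ := fun t => (holderSemi f γ (Icc 0 t)).toReal with hhdef
  have hmonoR : ∀ a ∈ Icc (0:ℝ) T, ∀ b ∈ Icc (0:ℝ) T, a ≤ b → h a ≤ h b :=
    fun a ha b hb hab => ENNReal.toReal_mono (fin' b hb) (mono ha hb hab)
  have hholder : ∀ a ∈ Icc (0:ℝ) T, ∀ b ∈ Icc (0:ℝ) T, a ≤ b →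
      h b - h a ≤ M * (b - a) ^ δ := by
    intro a ha b hb hab
    have h1 := ENNReal.toReal_mono (by
        exact ENNReal.add_ne_top.mpr ⟨fin' a ha, ENNReal.ofReal_ne_top⟩)
      (key a ha b hb hab)
    rw [ENNReal.toReal_add (fin' a ha) ENNReal.ofReal_ne_top,
      ENNReal.toReal_ofReal (mul_nonneg hM0 (Real.rpow_nonneg (by linarith) _))] at h1
    linarith
  -- continuity via HolderOnWith
  have hcont : ContinuousOn h (Icc 0 T) := by
    set r : NNReal := ⟨δ, hδ.le⟩ with hrdef
    have hr : (r : ℝ) = δ := rfl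
    have : HolderOnWith M.toNNReal r h (Icc (0:ℝ) T) := by
      intro x hx y hy
      wlog hxy : x ≤ y generalizing x y
      · rw [edist_comm, edist_comm x y]
        exact this y hy x hx (le_of_not_ge hxy)
      have habs : |h y - h x| ≤ M * |y - x| ^ δ := by
        rw [abs_of_nonneg (by linarith [hmonoR x hx y hy hxy]),
          abs_of_nonneg (by linarith [hxy])]
        exact hholder x hx y hy hxy
      calc edist (h x) (h y) = ENNReal.ofReal (|h y - h x|) := by
            rw [edist_dist, Real.dist_eq, abs_sub_comm]
        _ ≤ ENNReal.ofReal (M * |y - x| ^ δ) := ENNReal.ofReal_le_ofReal habs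
        _ = ENNReal.ofReal M * ENNReal.ofReal (|y - x| ^ δ) := ENNReal.ofReal_mul hM0
        _ = (M.toNNReal : ℝ≥0∞) * edist x y ^ (r : ℝ) := by
            rw [edist_dist, Real.dist_eq, abs_sub_comm, hr,
              ← ENNReal.ofReal_rpow_of_nonneg (abs_nonneg _) hδ.le,
              ENNReal.ofReal_eq_coe_nnreal hM0, Real.toNNReal_of_nonneg hM0]
    exact this.continuousOn (by exact_mod_cast hδ)
  refine ⟨mono, ?_, fun t ht => lt_of_le_of_ne le_top (fin' t ht)⟩
  have : ContinuousOn (fun t => ENNReal.ofReal (h t)) (Icc 0 T) :=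
    ENNReal.continuous_ofReal.comp_continuousOn hcont
  exact this.congr fun t ht => (ENNReal.ofReal_toReal (fin' t ht)).symm
end
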